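/- arXiv:2211.02383 — 5 statements merged into one kernel-verified Lean document; each statement's English description precedes it below -/
import Mathlib

section
/- (Theorem 3, continuous SBC implies sample SBC.) Let φ be a posterior family and f a test quantity. For every M ∈ ℕ: (1) for any fixed y ∈ Y, if q_{φ,f}(x|y) = x for all x ∈ [0,1], then Q_{φ,f}(i|y) = (i+1)/(M+1) for all i ∈ {0,…,M−1}; (2) if φ passes continuous SBC with respect to f, then φ passes M-sample SBC with respect to f. -/
open MeasureTheory Filter Topology

noncomputable section

namespace SBC

variable {Θ Y : Type*} [MeasurableSpace Θ] [MeasurableSpace Y]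

/-- Marginal density of the data: `π_marg(y) = ∫ obs(y|θ) prior(θ) dλΘ(θ)`. -/
def marg (lΘ : Measure Θ) (prior : Θ → ℝ) (obs : Y → Θ → ℝ) (y : Y) : ℝ :=
  ∫ θ, obs y θ * prior θ ∂lΘ

/-- Posterior density: `π_post(θ|y) = obs(y|θ) prior(θ) / π_marg(y)`. -/
def post (lΘ : Measure Θ) (prior : Θ → ℝ) (obs : Y → Θ → ℝ) (θ : Θ) (y : Y) : ℝ :=
  obs y θ * prior θ / marg lΘ prior obs y

/-- CDF of the test quantity `f` under the density `φ(·|y)`: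
`C_{φ,f}(s|y) = ∫ 1[f(θ,y) ≤ s] φ(θ|y) dλΘ(θ)`. -/
def Cdf (lΘ : Measure Θ) (φ f : Θ → Y → ℝ) (s : ℝ) (y : Y) : ℝ :=
  ∫ θ, (if f θ y ≤ s then φ θ y else 0) ∂lΘ

/-- Tie probability of the test quantity `f` under the density `φ(·|y)`:
`D_{φ,f}(s|y) = ∫ 1[f(θ,y) = s] φ(θ|y) dλΘ(θ)`. -/
def Dtie (lΘ : Measure Θ) (φ f : Θ → Y → ℝ) (s : ℝ) (y : Y) : ℝ :=
  ∫ θ, (if f θ y = s then φ θ y else 0) ∂lΘ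

/-- The family of densities `φ` has no ties w.r.t. `f`. -/
def NoTies (lΘ : Measure Θ) (φ f : Θ → Y → ℝ) : Prop :=
  ∀ (θt : Θ) (y : Y), Dtie lΘ φ f (f θt y) y = 0

/-- The continuous rank CDF `r_{φ,f}(x | θ̃, y)`. -/
def contRank (lΘ : Measure Θ) (φ f : Θ → Y → ℝ) (x : ℝ) (θt : Θ) (y : Y) : ℝ :=
  if Dtie lΘ φ f (f θt y) y = 0 then
    (if Cdf lΘ φ f (f θt y) y ≤ x then 1 else 0)
  else
    min 1 (max 0 ((x - Cdf lΘ φ f (f θt y) y + Dtie lΘ φ f (f θt y) y) /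
      Dtie lΘ φ f (f θt y) y))

/-- The continuous `q_{φ,f}(x|y)`: average of the continuous rank CDF over the true posterior. -/
def qfun (lΘ : Measure Θ) (prior : Θ → ℝ) (obs : Y → Θ → ℝ) (φ f : Θ → Y → ℝ)
    (x : ℝ) (y : Y) : ℝ :=
  ∫ θt, contRank lΘ φ f x θt y * post lΘ prior obs θt y ∂lΘ

/-- `φ` passes continuous SBC w.r.t. `f`. -/
def PassesContSBC (lΘ : Measure Θ) (lY : Measure Y) (prior : Θ → ℝ)
    (obs : Y → Θ → ℝ) (φ f : Θ → Y → ℝ) : Prop :=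
  ∀ x ∈ Set.Icc (0 : ℝ) 1,
    ∫ y, qfun lΘ prior obs φ f x y * marg lΘ prior obs y ∂lY = x

/-- Number of posterior draws whose test-quantity value is strictly below that of `θt`. -/
def Nless (f : Θ → Y → ℝ) {M : ℕ} (θs : Fin M → Θ) (θt : Θ) (y : Y) : ℕ :=
  (Finset.univ.filter fun m => f (θs m) y < f θt y).card

/-- Number of posterior draws whose test-quantity value ties with that of `θt`. -/
def Neq (f : Θ → Y → ℝ) {M : ℕ} (θs : Fin M → Θ) (θt : Θ) (y : Y) : ℕ :=
  (Finset.univ.filter fun m => f (θs m) y = f θt y).card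

/-- The measure on `Θ` with density `φ(·|y)` w.r.t. `lΘ`. -/
def postFamMeas (lΘ : Measure Θ) (φ : Θ → Y → ℝ) (y : Y) : Measure Θ :=
  lΘ.withDensity fun θ => ENNReal.ofReal (φ θ y)

/-- The `M`-sample rank CDF `R_{φ,f}(i | θ̃, y) = Pr(N_total ≤ i)` for i.i.d. draws from `φ_y`. -/
def sampleRank (lΘ : Measure Θ) (φ f : Θ → Y → ℝ) (M i : ℕ) (θt : Θ) (y : Y) : ℝ :=
  ∫ θs : Fin M → Θ,
    min 1 (max 0 (((i : ℝ) + 1 - (Nless f θs θt y : ℝ)) / ((Neq f θs θt y : ℝ) + 1)))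
    ∂(Measure.pi fun _ : Fin M => postFamMeas lΘ φ y)

/-- The `M`-sample `Q_{φ,f}(i|y)`: average of the sample rank CDF over the true posterior. -/
def Qfun (lΘ : Measure Θ) (prior : Θ → ℝ) (obs : Y → Θ → ℝ)
    (φ f : Θ → Y → ℝ) (M i : ℕ) (y : Y) : ℝ :=
  ∫ θt, sampleRank lΘ φ f M i θt y * post lΘ prior obs θt y ∂lΘ

/-- `φ` passes `M`-sample SBC w.r.t. `f`. -/
def PassesSampleSBC (lΘ : Measure Θ) (lY : Measure Y) (prior : Θ → ℝ)
    (obs : Y → Θ → ℝ) (φ f : Θ → Y → ℝ) (M : ℕ) : Prop :=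
  ∀ i < M, ∫ y, Qfun lΘ prior obs φ f M i y * marg lΘ prior obs y ∂lY
    = ((i : ℝ) + 1) / ((M : ℝ) + 1)

namespace SBCAux

open Finset


/-- Binomial CDF polynomial `F(t) = ∑_{k≤i} C(M,k) t^k (1-t)^(M-k)`. -/
def Fb (M i : ℕ) (t : ℝ) : ℝ := ∑ k ∈ range (i+1), (M.choose k : ℝ) * t^k * (1-t)^(M-k)

/-- `w(t) = (i+1) C(M,i+1) t^i (1-t)^(M-1-i)`, the negative derivative of `Fb`. -/
def wb (M i : ℕ) (t : ℝ) : ℝ := ((i:ℝ)+1) * (M.choose (i+1) : ℝ) * t^i * (1-t)^(M-1-i)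

lemma Fb_cont (M i : ℕ) : Continuous (Fb M i) := by
  unfold Fb; fun_prop

lemma wb_cont (M i : ℕ) : Continuous (wb M i) := by
  unfold wb; fun_prop

lemma Fb_one (M i : ℕ) (h : i < M) : Fb M i 1 = 0 := by
  unfold Fb
  refine Finset.sum_eq_zero fun k hk => ?_
  have hk' : k < i + 1 := Finset.mem_range.mp hk
  have : M - k ≠ 0 := by omega
  simp [this]

lemma Fb_hasDeriv (M i : ℕ) (h : i < M) (t : ℝ) :
    HasDerivAt (Fb M i) (-(wb M i t)) t := by
  set u : ℕ → ℝ := fun k => (k : ℝ) * (M.choose k : ℝ) * t^(k-1) * (1-t)^(M-k) with hu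
  have key : ∀ k ∈ range (i+1), HasDerivAt
      (fun s => (M.choose k : ℝ) * s^k * (1-s)^(M-k)) (u k - u (k+1)) t := by
    intro k hk
    have hk0 : k < i + 1 := Finset.mem_range.mp hk
    have hkM : k < M := by omega
    have h1 : HasDerivAt (fun s : ℝ => s ^ k) ((k:ℝ) * t^(k-1)) t := hasDerivAt_pow k t
    have h2 : HasDerivAt (fun s : ℝ => (1-s) ^ (M-k)) (-(((M-k:ℕ)):ℝ) * (1-t)^(M-k-1)) t := by
      have hinner : HasDerivAt (fun s : ℝ => 1 - s) (-1) t := by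
        simpa using (hasDerivAt_id t).const_sub (1:ℝ)
      have := (hasDerivAt_pow (M-k) (1-t)).comp t hinner
      refine this.congr_deriv ?_; ring
    have hd := ((h1.const_mul ((M.choose k : ℝ))).mul h2)
    have hc : ((M - k : ℕ) : ℝ) * (M.choose k : ℝ) = ((k:ℝ)+1) * (M.choose (k+1) : ℝ) := by
      have h2 : (M.choose (k+1) * (k+1) : ℕ) = (M.choose k * (M - k) : ℕ) :=
        Nat.choose_succ_right_eq M k
      have := congrArg (Nat.cast (R := ℝ)) h2
      push_cast at this
      linarith
    have hMk : M - (k+1) = M - k - 1 := by omega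
    have huk1 : u (k+1) = (M.choose k : ℝ) * ((M-k : ℕ) : ℝ) * t^k * (1-t)^(M-k-1) := by
      have e1 : u (k+1) = ((k:ℝ)+1) * (M.choose (k+1) : ℝ) * t^k * (1-t)^(M-k-1) := by
        simp only [hu, hMk, Nat.add_sub_cancel]; push_cast; ring
      rw [e1, ← hc]; ring
    refine hd.congr_deriv ?_
    rw [huk1]; simp only [hu]; ring
  have hsum := HasDerivAt.fun_sum key
  refine hsum.congr_deriv ?_
  rw [Finset.sum_range_sub' u (i+1)]
  have hMi : M - (i+1) = M - 1 - i := by omega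
  simp only [hu, wb, hMi, Nat.cast_zero, zero_mul, Nat.add_sub_cancel]
  push_cast; ring

/-- Beta integral for natural exponents. -/
lemma beta_int (q p : ℕ) : ∫ x in (0:ℝ)..1, x^p * (1-x)^q
    = (p.factorial * q.factorial : ℝ) / ((p+q+1).factorial : ℝ) := by
  induction q generalizing p with
  | zero =>
      simp only [pow_zero, mul_one, Nat.factorial_zero]
      rw [integral_pow]
      have hp : ((p:ℝ)+1) ≠ 0 := by positivity
      simp [Nat.factorial_succ]
      field_simp
  | succ q ih =>
      -- integration by parts: u = (1-x)^(q+1), v = x^(p+1)/(p+1)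
      have hparts := intervalIntegral.integral_mul_deriv_eq_deriv_mul
        (u := fun x : ℝ => (1-x)^(q+1)) (u' := fun x : ℝ => -((q:ℝ)+1) * (1-x)^q)
        (v := fun x : ℝ => x^(p+1) / ((p:ℝ)+1)) (v' := fun x : ℝ => x^p)
        (a := 0) (b := 1)
        (fun x _ => by
          have hinner : HasDerivAt (fun s : ℝ => 1 - s) (-1) x := by
            simpa using (hasDerivAt_id x).const_sub (1:ℝ)
          have := (hasDerivAt_pow (q+1) (1-x)).comp x hinner
          refine this.congr_deriv ?_
          push_cast [Nat.add_sub_cancel]; ring)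
        (fun x _ => by
          have := (hasDerivAt_pow (p+1) x).div_const ((p:ℝ)+1)
          convert this using 1
          push_cast [Nat.add_sub_cancel]
          field_simp)
        (by apply Continuous.intervalIntegrable; fun_prop)
        (by apply Continuous.intervalIntegrable; fun_prop)
      -- hparts : ∫ (1-x)^(q+1) * x^p = ... - ∫ (-(q+1))(1-x)^q * (x^(p+1)/(p+1))
      have hres : ∫ x in (0:ℝ)..1, x^p * (1-x)^(q+1)
          = (((q:ℝ)+1) / ((p:ℝ)+1)) * ∫ x in (0:ℝ)..1, x^(p+1) * (1-x)^q := by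
        have e1 : ∫ x in (0:ℝ)..1, x^p * (1-x)^(q+1)
            = ∫ x in (0:ℝ)..1, (1-x)^(q+1) * x^p := by
          congr 1; ext x; ring
        rw [e1, hparts]
        have e2 : ∀ x:ℝ, -((q:ℝ)+1) * (1-x)^q * (x^(p+1) / ((p:ℝ)+1))
            = (-(((q:ℝ)+1)/((p:ℝ)+1))) * (x^(p+1) * (1-x)^q) := fun x => by ring
        simp only [e2]
        rw [intervalIntegral.integral_const_mul]
        norm_num
      rw [hres, ih (p+1)]
      have h1 : (p+1) + q + 1 = p + (q+1) + 1 := by omega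
      rw [h1]
      have hp : ((p:ℝ)+1) ≠ 0 := by positivity
      have hN : ((p + (q+1) + 1).factorial : ℝ) ≠ 0 := by positivity
      push_cast [Nat.factorial_succ]
      field_simp


lemma int_wb (M i : ℕ) (h : i < M) :
    ∫ x in (0:ℝ)..1, wb M i x * x = ((i:ℝ)+1)/((M:ℝ)+1) := by
  have e : ∀ x:ℝ, wb M i x * x
      = (((i:ℝ)+1) * (M.choose (i+1):ℝ)) * (x^(i+1) * (1-x)^(M-1-i)) := fun x => by
    unfold wb; ring
  simp only [e]
  rw [intervalIntegral.integral_const_mul, beta_int]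
  have h2 : (i+1) + (M-1-i) + 1 = M+1 := by omega
  rw [h2]
  have h3 : (M.choose (i+1) * (i+1).factorial * (M - (i+1)).factorial : ℕ) = M.factorial :=
    Nat.choose_mul_factorial_mul_factorial (by omega)
  have h4 : M - (i+1) = M - 1 - i := by omega
  rw [h4] at h3
  have h5 := congrArg (Nat.cast (R := ℝ)) h3
  push_cast at h5
  have hM1 : (((M+1).factorial : ℕ) : ℝ) = ((M:ℝ)+1) * (M.factorial : ℝ) := by
    rw [Nat.factorial_succ]; push_cast; ring
  rw [hM1]
  have hMf : (M.factorial : ℝ) ≠ 0 := by positivity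
  have hM : ((M:ℝ)+1) ≠ 0 := by positivity
  field_simp
  linear_combination h5

lemma pascal_sum (t u : ℝ) (A : ℕ → ℝ) (e : ℕ) :
    ∑ j ∈ range (e+2), ((e+1).choose j : ℝ) * t^j * u^(e+1-j) * A j
    = t * ∑ j ∈ range (e+1), (e.choose j : ℝ) * t^j * u^(e-j) * A (j+1)
      + u * ∑ j ∈ range (e+1), (e.choose j : ℝ) * t^j * u^(e-j) * A j := by
  set g : ℕ → ℝ := fun j => if j = 0 then 0
    else (e.choose (j-1) : ℝ) * t^j * u^(e+1-j) * A j with hg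
  have hL : ∀ j ∈ range (e+2), ((e+1).choose j : ℝ) * t^j * u^(e+1-j) * A j
      = (e.choose j : ℝ) * t^j * u^(e+1-j) * A j + g j := by
    intro j _
    match j with
    | 0 => simp [hg]
    | j+1 =>
      simp only [hg, Nat.choose_succ_succ, Nat.add_sub_cancel, if_neg (Nat.succ_ne_zero j)]
      push_cast; ring
  rw [Finset.sum_congr rfl hL, Finset.sum_add_distrib]
  have hA : ∑ j ∈ range (e+2), (e.choose j : ℝ) * t^j * u^(e+1-j) * A j
      = u * ∑ j ∈ range (e+1), (e.choose j : ℝ) * t^j * u^(e-j) * A j := by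
    rw [Finset.sum_range_succ, Nat.choose_succ_self]
    simp only [Nat.cast_zero, zero_mul, add_zero]
    rw [Finset.mul_sum]
    refine Finset.sum_congr rfl fun j hj => ?_
    have hj' : j ≤ e := by have := Finset.mem_range.mp hj; omega
    rw [show e + 1 - j = (e - j) + 1 from by omega]
    ring
  have hB : ∑ j ∈ range (e+2), g j
      = t * ∑ j ∈ range (e+1), (e.choose j : ℝ) * t^j * u^(e-j) * A (j+1) := by
    rw [Finset.sum_range_succ']
    simp only [hg, if_neg (Nat.succ_ne_zero _), if_pos rfl, add_zero, Nat.add_sub_cancel]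
    rw [Finset.mul_sum]
    refine Finset.sum_congr rfl fun j hj => ?_
    rw [show e + 1 - (j+1) = e - j from by omega]
    ring
  rw [hA, hB]; ring

/-- `Gb v A ℓ e = ∑_j C(e,j) v^j (1-v)^(e-j) A (ℓ+j)`. -/
def Gb (v : ℝ) (A : ℕ → ℝ) (ℓ e : ℕ) : ℝ :=
  ∑ j ∈ range (e+1), (e.choose j : ℝ) * v^j * (1-v)^(e-j) * A (ℓ+j)

lemma Gb_zero (v : ℝ) (A : ℕ → ℝ) (ℓ : ℕ) : Gb v A ℓ 0 = A ℓ := by simp [Gb]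

lemma Gb_shift (v : ℝ) (A : ℕ → ℝ) (ℓ e : ℕ) :
    Gb v A (ℓ+1) e = Gb v (fun n => A (n+1)) ℓ e := by
  unfold Gb
  refine Finset.sum_congr rfl fun j _ => ?_
  rw [show ℓ+1+j = ℓ+j+1 from by omega]

lemma Gb_succ (v : ℝ) (A : ℕ → ℝ) (ℓ e : ℕ) :
    Gb v A ℓ (e+1) = v * Gb v A (ℓ+1) e + (1-v) * Gb v A ℓ e := by
  have hps := pascal_sum v (1-v) (fun n => A (ℓ + n)) e
  have e1 : Gb v A (ℓ+1) e
      = ∑ j ∈ range (e+1), (e.choose j:ℝ) * v^j * (1-v)^(e-j) * A (ℓ+(j+1)) :=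
    Finset.sum_congr rfl fun j _ => by rw [show ℓ+1+j = ℓ+(j+1) from by omega]
  rw [← e1] at hps
  exact hps

/-- number of coordinates with value `k` -/
def cnt {M : ℕ} (k : Fin 3) (σ : Fin M → Fin 3) : ℕ :=
  (Finset.univ.filter fun m => σ m = k).card

lemma cnt_cons {M : ℕ} (k k0 : Fin 3) (σ : Fin M → Fin 3) :
    cnt k (Fin.cons k0 σ) = (if k0 = k then 1 else 0) + cnt k σ := by
  unfold cnt
  rw [Finset.card_filter, Finset.card_filter, Fin.sum_univ_succ]
  simp [Fin.cons_zero, Fin.cons_succ]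

lemma key_sum (p : Fin 3 → ℝ) (v : ℝ) : ∀ (M : ℕ) (A : ℕ → ℝ),
    ∑ σ : Fin M → Fin 3, (∏ m, p (σ m)) * Gb v A (cnt 0 σ) (cnt 1 σ)
    = ∑ n ∈ range (M+1),
        (M.choose n : ℝ) * (p 0 + p 1 * v)^n * (p 1 * (1-v) + p 2)^(M-n) * A n := by
  intro M
  induction M with
  | zero =>
      intro A
      simp [Gb, cnt, Finset.univ_unique]
  | succ M ih =>
      intro A
      rw [← Equiv.sum_comp (Fin.consEquiv (fun _ : Fin (M+1) => Fin 3)), Fintype.sum_prod_type]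
      have hce : ∀ (pr : Fin 3 × (Fin M → Fin 3)),
          (Fin.consEquiv (fun _ : Fin (M+1) => Fin 3)) pr = Fin.cons pr.1 pr.2 := fun _ => rfl
      simp only [hce]
      have hprod : ∀ (k0 : Fin 3) (σ : Fin M → Fin 3),
          ∏ m : Fin (M+1), p (Fin.cons (α := fun _ => Fin 3) k0 σ m) = p k0 * ∏ m : Fin M, p (σ m) := by
        intro k0 σ
        rw [Fin.prod_univ_succ]
        simp
      have inner : ∀ k0 : Fin 3,
          ∑ σ : Fin M → Fin 3, (∏ m : Fin (M+1), p (Fin.cons (α := fun _ => Fin 3) k0 σ m))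
              * Gb v A (cnt 0 (Fin.cons k0 σ)) (cnt 1 (Fin.cons k0 σ))
          = p k0 * ∑ σ : Fin M → Fin 3, (∏ m : Fin M, p (σ m))
              * Gb v A ((if k0 = 0 then 1 else 0) + cnt 0 σ)
                       ((if k0 = 1 then 1 else 0) + cnt 1 σ) := by
        intro k0
        rw [Finset.mul_sum]
        refine Finset.sum_congr rfl fun σ _ => ?_
        rw [hprod, cnt_cons, cnt_cons]
        ring
      rw [Fin.sum_univ_three, inner 0, inner 1, inner 2]
      norm_num
      have e00 : ∀ σ : Fin M → Fin 3, Gb v A (1 + cnt 0 σ) (cnt 1 σ)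
          = Gb v (fun n => A (n+1)) (cnt 0 σ) (cnt 1 σ) := fun σ => by
        rw [show 1 + cnt 0 σ = cnt 0 σ + 1 from by omega, Gb_shift]
      have e11 : ∀ σ : Fin M → Fin 3, Gb v A (cnt 0 σ) (1 + cnt 1 σ)
          = v * Gb v (fun n => A (n+1)) (cnt 0 σ) (cnt 1 σ)
            + (1-v) * Gb v A (cnt 0 σ) (cnt 1 σ) := fun σ => by
        rw [show 1 + cnt 1 σ = cnt 1 σ + 1 from by omega, Gb_succ, Gb_shift]
      simp only [e00, e11]
      simp only [show (if (2:Fin 3) = 0 then 1 else 0) = 0 from by decide,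
        show (if (2:Fin 3) = 1 then 1 else 0) = 0 from by decide, zero_add]
      rw [ih A, ih (fun n => A (n+1))]
      have hsplit : ∑ σ : Fin M → Fin 3, (∏ m : Fin M, p (σ m))
            * (v * Gb v (fun n => A (n+1)) (cnt 0 σ) (cnt 1 σ)
               + (1-v) * Gb v A (cnt 0 σ) (cnt 1 σ))
          = v * ∑ σ : Fin M → Fin 3, (∏ m : Fin M, p (σ m))
                * Gb v (fun n => A (n+1)) (cnt 0 σ) (cnt 1 σ)
            + (1-v) * ∑ σ : Fin M → Fin 3, (∏ m : Fin M, p (σ m))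
                * Gb v A (cnt 0 σ) (cnt 1 σ) := by
        rw [Finset.mul_sum, Finset.mul_sum, ← Finset.sum_add_distrib]
        exact Finset.sum_congr rfl fun σ _ => by ring
      rw [hsplit, ih A, ih (fun n => A (n+1))]
      rw [pascal_sum (p 0 + p 1 * v) (p 1 * (1-v) + p 2) A M]
      ring

/-- The clamp function appearing in the sample rank. -/
def hfun (i ℓ e : ℕ) : ℝ := min 1 (max 0 (((i:ℝ)+1-(ℓ:ℝ))/((e:ℝ)+1)))

/-- indicator of `n ≤ i` -/
def Aind (i : ℕ) : ℕ → ℝ := fun n => if n ≤ i then 1 else 0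

lemma hfun_cases (i ℓ e : ℕ) :
    hfun i ℓ e = ((min (e+1) (i+1-ℓ) : ℕ):ℝ) / ((e:ℝ)+1) := by
  unfold hfun
  have he : (0:ℝ) < (e:ℝ)+1 := by positivity
  rcases le_or_gt ℓ i with hle | hlt
  · have hc : ((i+1-ℓ : ℕ):ℝ) = (i:ℝ)+1-(ℓ:ℝ) := by
      rw [Nat.cast_sub (by omega : ℓ ≤ i+1)]; push_cast; ring
    rcases le_or_gt (i+1-ℓ) (e+1) with h1 | h1
    · rw [min_eq_right h1, hc]
      have hnum : (0:ℝ) ≤ (i:ℝ)+1-(ℓ:ℝ) := by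
        have : (ℓ:ℝ) ≤ (i:ℝ) := by exact_mod_cast hle
        linarith
      have hle1 : ((i:ℝ)+1-(ℓ:ℝ))/((e:ℝ)+1) ≤ 1 := by
        rw [div_le_one he]
        have h2 : ((i+1-ℓ:ℕ):ℝ) ≤ ((e+1:ℕ):ℝ) := by exact_mod_cast h1
        rw [hc] at h2; push_cast at h2; linarith
      rw [max_eq_right (by positivity), min_eq_right hle1]
    · rw [min_eq_left (le_of_lt h1)]
      have h2 : ((e+1:ℕ):ℝ) ≤ ((i+1-ℓ:ℕ):ℝ) := by exact_mod_cast (le_of_lt h1)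
      rw [hc] at h2; push_cast at h2
      have hx : (1:ℝ) ≤ ((i:ℝ)+1-(ℓ:ℝ))/((e:ℝ)+1) := by
        rw [le_div_iff₀ he]; linarith
      rw [max_eq_right (by linarith), min_eq_left hx]
      push_cast; field_simp
  · rw [show i+1-ℓ = 0 from by omega, min_eq_right (Nat.zero_le _)]
    have hnum : ((i:ℝ)+1-(ℓ:ℝ)) ≤ 0 := by
      have : ((i:ℕ):ℝ)+1 ≤ ((ℓ:ℕ):ℝ) := by exact_mod_cast hlt
      linarith
    rw [max_eq_left (div_nonpos_of_nonpos_of_nonneg hnum (le_of_lt he)),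
      min_eq_right (by norm_num)]
    simp

lemma Gb_cont_v (A : ℕ → ℝ) (ℓ e : ℕ) : Continuous (fun v => Gb v A ℓ e) := by
  unfold Gb
  apply continuous_finset_sum
  intro j _
  fun_prop

lemma hfun_int (i ℓ e : ℕ) : hfun i ℓ e = ∫ v in (0:ℝ)..1, Gb v (Aind i) ℓ e := by
  have hterm : ∀ j ∈ range (e+1),
      (∫ v in (0:ℝ)..1, (e.choose j : ℝ) * v^j * (1-v)^(e-j) * Aind i (ℓ+j))
      = (1/((e:ℝ)+1)) * Aind i (ℓ+j) := by
    intro j hj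
    have hj' : j ≤ e := by have := Finset.mem_range.mp hj; omega
    have e1 : ∀ v:ℝ, (e.choose j : ℝ) * v^j * (1-v)^(e-j) * Aind i (ℓ+j)
        = ((e.choose j : ℝ) * Aind i (ℓ+j)) * (v^j * (1-v)^(e-j)) := fun v => by ring
    simp only [e1]
    rw [intervalIntegral.integral_const_mul, beta_int]
    have h2 : j + (e-j) + 1 = e+1 := by omega
    rw [h2]
    have h3 : (e.choose j * j.factorial * (e-j).factorial : ℕ) = e.factorial :=
      Nat.choose_mul_factorial_mul_factorial hj'
    have h5 := congrArg (Nat.cast (R := ℝ)) h3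
    push_cast at h5
    have hE : (((e+1).factorial : ℕ) : ℝ) = ((e:ℝ)+1) * (e.factorial : ℝ) := by
      rw [Nat.factorial_succ]; push_cast; ring
    rw [hE]
    have h6 : (e.factorial : ℝ) ≠ 0 := by positivity
    have h7 : ((e:ℝ)+1) ≠ 0 := by positivity
    field_simp
    linear_combination Aind i (ℓ+j) * h5
  have hGb : ∫ v in (0:ℝ)..1, Gb v (Aind i) ℓ e
      = ∑ j ∈ range (e+1), (∫ v in (0:ℝ)..1, (e.choose j : ℝ) * v^j * (1-v)^(e-j) * Aind i (ℓ+j)) := by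
    unfold Gb
    rw [intervalIntegral.integral_finset_sum]
    intro j _
    apply Continuous.intervalIntegrable
    fun_prop
  rw [hGb, Finset.sum_congr rfl hterm, ← Finset.mul_sum]
  have hcount : ∑ j ∈ range (e+1), Aind i (ℓ+j) = ((min (e+1) (i+1-ℓ) : ℕ):ℝ) := by
    unfold Aind
    rw [Finset.sum_boole]
    congr 1
    have : Finset.filter (fun j => ℓ+j ≤ i) (range (e+1)) = range (min (e+1) (i+1-ℓ)) := by
      ext j
      simp only [Finset.mem_filter, Finset.mem_range, lt_min_iff]
      omega
    rw [this, Finset.card_range]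
  rw [hcount, hfun_cases]
  ring

lemma sum_hfun_eq (M i : ℕ) (p : Fin 3 → ℝ) :
    ∑ σ : Fin M → Fin 3, (∏ m, p (σ m)) * hfun i (cnt 0 σ) (cnt 1 σ)
    = ∫ v in (0:ℝ)..1, ∑ n ∈ range (M+1),
        (M.choose n:ℝ) * (p 0 + p 1*v)^n * (p 1*(1-v)+p 2)^(M-n) * Aind i n := by
  have e1 : ∀ σ : Fin M → Fin 3, (∏ m, p (σ m)) * hfun i (cnt 0 σ) (cnt 1 σ)
      = ∫ v in (0:ℝ)..1, (∏ m, p (σ m)) * Gb v (Aind i) (cnt 0 σ) (cnt 1 σ) := by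
    intro σ
    rw [hfun_int, intervalIntegral.integral_const_mul]
  rw [Finset.sum_congr rfl (fun σ _ => e1 σ), ← intervalIntegral.integral_finset_sum]
  · exact intervalIntegral.integral_congr fun v _ => key_sum p v M (Aind i)
  · intro σ _
    apply Continuous.intervalIntegrable
    exact continuous_const.mul (Gb_cont_v _ _ _)

lemma sum_Aind (M i : ℕ) (h : i < M) (t : ℝ) :
    ∑ n ∈ range (M+1), (M.choose n:ℝ)*t^n*(1-t)^(M-n)*(Aind i n) = Fb M i t := by
  unfold Fb Aind
  simp only [mul_ite, mul_one, mul_zero]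
  rw [Finset.sum_ite, Finset.sum_const_zero, add_zero]
  congr 1
  ext n
  simp only [Finset.mem_filter, Finset.mem_range]
  omega

/-- the weight function as used on `[0,1]` with explicit `a,b`. -/
def rrfun (a b x : ℝ) : ℝ :=
  if b = 0 then (if a + b ≤ x then (1:ℝ) else 0) else min 1 (max 0 ((x - (a+b) + b)/b))

lemma int_Fb_comp (M i : ℕ) (h : i < M) (a b : ℝ) (ha : 0 ≤ a) (hb : 0 ≤ b)
    (hab : a + b ≤ 1) :
    ∫ v in (0:ℝ)..1, Fb M i (a + b*v) = ∫ x in (0:ℝ)..1, wb M i x * rrfun a b x := by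
  have hFTC : ∀ s t : ℝ, ∫ x in s..t, wb M i x = Fb M i s - Fb M i t := by
    intro s t
    have := intervalIntegral.integral_eq_sub_of_hasDerivAt
      (f := fun x => -(Fb M i x)) (f' := wb M i)
      (fun x _ => (Fb_hasDeriv M i h x).neg.congr_deriv (neg_neg _))
      ((wb_cont M i).intervalIntegrable s t)
    rw [this]; ring
  rcases eq_or_lt_of_le hb with hb0 | hbpos
  · -- b = 0
    subst hb0
    have ha1 : a ≤ 1 := by linarith
    have hL : (∫ v in (0:ℝ)..1, Fb M i (a + 0*v)) = Fb M i a := by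
      simp
    rw [hL]
    have hind : ∀ x:ℝ, wb M i x * rrfun a 0 x = Set.indicator (Set.Ici a) (wb M i) x := by
      intro x
      unfold rrfun
      rw [if_pos rfl, add_zero, Set.indicator_apply]
      by_cases hax : a ≤ x
      · rw [if_pos hax, if_pos (Set.mem_Ici.mpr hax), mul_one]
      · rw [if_neg hax, if_neg (by simpa using hax), mul_zero]
    rw [intervalIntegral.integral_of_le zero_le_one,
      MeasureTheory.integral_congr_ae (Filter.Eventually.of_forall hind),
      MeasureTheory.integral_indicator measurableSet_Ici,
      Measure.restrict_restrict measurableSet_Ici]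
    rcases eq_or_lt_of_le ha with ha0 | ha0
    · rw [← ha0]
      have hset : Set.Ici (0:ℝ) ∩ Set.Ioc 0 1 = Set.Ioc (0:ℝ) 1 := by
        ext x
        simp only [Set.mem_inter_iff, Set.mem_Ici, Set.mem_Ioc]
        exact ⟨fun hh => hh.2, fun hh => ⟨le_of_lt hh.1, hh⟩⟩
      rw [hset, ← intervalIntegral.integral_of_le zero_le_one, hFTC, Fb_one M i h, sub_zero]
    · have hset : Set.Ici a ∩ Set.Ioc 0 1 = Set.Icc a 1 := by
        ext x
        simp only [Set.mem_inter_iff, Set.mem_Ici, Set.mem_Ioc, Set.mem_Icc]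
        exact ⟨fun hh => ⟨hh.1, hh.2.2⟩, fun hh => ⟨hh.1, lt_of_lt_of_le ha0 hh.1, hh.2⟩⟩
      rw [hset, MeasureTheory.integral_Icc_eq_integral_Ioc,
        ← intervalIntegral.integral_of_le ha1, hFTC, Fb_one M i h, sub_zero]
  · -- b > 0
    have hbne : b ≠ 0 := ne_of_gt hbpos
    have hc1 : a + b ≤ 1 := hab
    have hac : a ≤ a + b := by linarith
    -- LHS
    have hL : ∫ v in (0:ℝ)..1, Fb M i (a + b*v) = b⁻¹ * ∫ x in a..(a+b), Fb M i x := by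
      have e1 : ∀ v:ℝ, Fb M i (a + b*v) = Fb M i (b*v + a) := fun v => by rw [add_comm]
      simp only [e1]
      rw [intervalIntegral.integral_comp_mul_add (Fb M i) hbne a]
      norm_num [smul_eq_mul, add_comm]
    -- RHS split
    have hrr : ∀ x, rrfun a b x = min 1 (max 0 ((x - (a+b) + b)/b)) := fun x => by
      unfold rrfun; rw [if_neg hbne]
    have hcont : Continuous (fun x => wb M i x * rrfun a b x) := by
      simp only [hrr]
      apply (wb_cont M i).mul
      apply Continuous.min continuous_const
      apply Continuous.max continuous_const
      fun_prop
    have hii : ∀ s t : ℝ, IntervalIntegrable (fun x => wb M i x * rrfun a b x) volume s t :=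
      fun s t => hcont.intervalIntegrable s t
    have hsplit : ∫ x in (0:ℝ)..1, wb M i x * rrfun a b x
        = (∫ x in (0:ℝ)..a, wb M i x * rrfun a b x)
          + (∫ x in a..(a+b), wb M i x * rrfun a b x)
          + (∫ x in (a+b)..1, wb M i x * rrfun a b x) := by
      rw [intervalIntegral.integral_add_adjacent_intervals (hii 0 a) (hii a (a+b)),
        intervalIntegral.integral_add_adjacent_intervals (hii 0 (a+b)) (hii (a+b) 1)]
    have hseg1 : ∫ x in (0:ℝ)..a, wb M i x * rrfun a b x = 0 := by
      rw [intervalIntegral.integral_congr (g := fun _ => (0:ℝ))]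
      · exact intervalIntegral.integral_zero
      · intro x hx
        rw [Set.uIcc_of_le ha] at hx
        have hxa : x ≤ a := hx.2
        show wb M i x * rrfun a b x = 0
        rw [hrr]
        have : (x - (a+b) + b)/b ≤ 0 :=
          div_nonpos_of_nonpos_of_nonneg (by linarith) hb
        rw [max_eq_left this, min_eq_right (by norm_num)]
        simp
    have hseg3 : ∫ x in (a+b)..1, wb M i x * rrfun a b x = Fb M i (a+b) := by
      rw [intervalIntegral.integral_congr (g := fun x => wb M i x)]
      · rw [hFTC, Fb_one M i h, sub_zero]
      · intro x hx
        rw [Set.uIcc_of_le hc1] at hx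
        have hxc : a + b ≤ x := hx.1
        show wb M i x * rrfun a b x = wb M i x
        rw [hrr]
        have h1' : (1:ℝ) ≤ (x - (a+b) + b)/b := by
          rw [le_div_iff₀ hbpos]; linarith
        rw [max_eq_right (by linarith), min_eq_left h1']
        simp
    have hseg2 : ∫ x in a..(a+b), wb M i x * rrfun a b x
        = -(Fb M i (a+b)) + b⁻¹ * ∫ x in a..(a+b), Fb M i x := by
      rw [intervalIntegral.integral_congr (g := fun x => (x - (a+b) + b)/b * wb M i x)]
      · have hparts := intervalIntegral.integral_mul_deriv_eq_deriv_mul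
          (u := fun x => (x - (a+b) + b)/b) (u' := fun _ => 1/b)
          (v := fun x => -(Fb M i x)) (v' := wb M i) (a := a) (b := a+b)
          (fun x _ => by
            have : HasDerivAt (fun x : ℝ => (x - (a+b) + b)/b) (1/b) x := by
              have h1 : HasDerivAt (fun x : ℝ => x - (a+b) + b) 1 x := by
                simpa using ((hasDerivAt_id x).sub_const (a+b)).add_const b
              simpa using h1.div_const b
            exact this)
          (fun x _ => (Fb_hasDeriv M i h x).neg.congr_deriv (neg_neg _))
          ((continuous_const).intervalIntegrable a (a+b))
          ((wb_cont M i).intervalIntegrable a (a+b))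
        beta_reduce at hparts
        rw [hparts]
        have e0 : (a+b - (a+b) + b)/b = 1 := by field_simp; ring
        have e0' : (a - (a+b) + b)/b = 0 := by rw [show a - (a+b) + b = 0 by ring, zero_div]
        rw [e0, e0']
        have : ∫ x in a..(a+b), (1/b) * -(Fb M i x) = -(b⁻¹ * ∫ x in a..(a+b), Fb M i x) := by
          have : ∀ x:ℝ, (1/b) * -(Fb M i x) = (-(1/b)) * Fb M i x := fun x => by ring
          simp only [this]
          rw [intervalIntegral.integral_const_mul]
          field_simp
        rw [this]
        ring
      · intro x hx
        rw [Set.uIcc_of_le hac] at hx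
        show wb M i x * rrfun a b x = (x - (a+b) + b)/b * wb M i x
        rw [hrr]
        have h0 : (0:ℝ) ≤ (x - (a+b) + b)/b := by
          apply div_nonneg _ hb; linarith [hx.1]
        have h1' : (x - (a+b) + b)/b ≤ 1 := by
          rw [div_le_one hbpos]; linarith [hx.2]
        rw [max_eq_right h0, min_eq_right h1']
        ring
    rw [hL, hsplit, hseg1, hseg2, hseg3]
    ring

lemma master (M i : ℕ) (h : i < M) (a b : ℝ) (ha : 0 ≤ a) (hb : 0 ≤ b) (hab : a + b ≤ 1)
    (p : Fin 3 → ℝ) (hp0 : p 0 = a) (hp1 : p 1 = b) (hp2 : p 2 = 1 - (a+b)) :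
    ∑ σ : Fin M → Fin 3, (∏ m, p (σ m)) * hfun i (cnt 0 σ) (cnt 1 σ)
    = ∫ x in (0:ℝ)..1, wb M i x * rrfun a b x := by
  rw [sum_hfun_eq, ← int_Fb_comp M i h a b ha hb hab]
  apply intervalIntegral.integral_congr
  intro v _
  rw [hp0, hp1, hp2]
  beta_reduce
  rw [show b * (1-v) + (1-(a+b)) = 1 - (a + b*v) from by ring]
  exact sum_Aind M i h (a + b*v)

lemma wb_bound (M i : ℕ) {x : ℝ} (h0 : 0 ≤ x) (h1 : x ≤ 1) :
    |wb M i x| ≤ ((i:ℝ)+1) * (M.choose (i+1):ℝ) := by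
  have hx1 : (0:ℝ) ≤ 1 - x := by linarith
  unfold wb
  rw [abs_of_nonneg (by positivity)]
  nlinarith [pow_le_one₀ h0 h1 (n := i), pow_le_one₀ hx1 (by linarith : 1-x ≤ 1) (n := M-1-i),
    pow_nonneg h0 i, pow_nonneg hx1 (M-1-i),
    (by positivity : (0:ℝ) ≤ ((i:ℝ)+1) * (M.choose (i+1):ℝ)),
    mul_le_mul (pow_le_one₀ h0 h1 (n := i)) (pow_le_one₀ hx1 (by linarith : 1-x ≤ 1) (n := M-1-i)) (pow_nonneg hx1 (M-1-i)) (by norm_num : (0:ℝ) ≤ 1)]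

end SBCAux


set_option linter.unusedSectionVars false

section MeasAux

variable {lΘ : Measure Θ} {lY : Measure Y}

lemma integrable_of_integral_eq_one {α : Type*} [MeasurableSpace α] {g : α → ℝ} {μ : Measure α} (h : ∫ θ, g θ ∂μ = 1) :
    Integrable g μ := by
  by_contra hc
  rw [integral_undef hc] at h
  norm_num at h

lemma integrable_ite_of {g : Θ → ℝ} {μ : Measure Θ} (hint : Integrable g μ)
    (hg : Measurable g) {P : Θ → Prop} [DecidablePred P] (hP : MeasurableSet {θ | P θ}) :
    Integrable (fun θ => if P θ then g θ else 0) μ := by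
  refine hint.mono (Measurable.aestronglyMeasurable ?_) (Filter.Eventually.of_forall fun θ => ?_)
  · exact Measurable.ite hP hg measurable_const
  · by_cases hp : P θ
    · simp [hp]
    · simp [hp, norm_nonneg]

lemma postFamMeas_prob (φ : Θ → Y → ℝ)
    (hφ_nonneg : ∀ (θ : Θ) (y : Y), 0 ≤ φ θ y)
    (hφ_int : ∀ y, ∫ θ, φ θ y ∂lΘ = 1) (y : Y) :
    IsProbabilityMeasure (postFamMeas lΘ φ y) := by
  constructor
  rw [postFamMeas, withDensity_apply _ MeasurableSet.univ, Measure.restrict_univ,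
    ← ofReal_integral_eq_lintegral_ofReal (integrable_of_integral_eq_one (hφ_int y))
      (Filter.Eventually.of_forall fun θ => hφ_nonneg θ y), hφ_int y]
  simp

lemma postFamMeas_apply_toReal (φ : Θ → Y → ℝ)
    (hφ_nonneg : ∀ (θ : Θ) (y : Y), 0 ≤ φ θ y)
    (hφ_int : ∀ y, ∫ θ, φ θ y ∂lΘ = 1) (y : Y) {S : Set Θ} (hS : MeasurableSet S) :
    ((postFamMeas lΘ φ y) S).toReal = ∫ θ, S.indicator (fun θ' => φ θ' y) θ ∂lΘ := by
  have hint : Integrable (fun θ => φ θ y) lΘ := integrable_of_integral_eq_one (hφ_int y)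
  rw [postFamMeas, withDensity_apply _ hS,
    ← ofReal_integral_eq_lintegral_ofReal hint.integrableOn
      (Filter.Eventually.of_forall fun θ => hφ_nonneg θ y),
    ENNReal.toReal_ofReal (setIntegral_nonneg hS fun θ _ => hφ_nonneg θ y),
    ← integral_indicator hS]


lemma sampleRank_eq (lΘ : Measure Θ) [SigmaFinite lΘ] (φ f : Θ → Y → ℝ)
    (hφ_meas : Measurable (Function.uncurry φ))
    (hφ_nonneg : ∀ (θ : Θ) (y : Y), 0 ≤ φ θ y)
    (hφ_int : ∀ y, ∫ θ, φ θ y ∂lΘ = 1)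
    (hf_meas : Measurable (Function.uncurry f))
    (M i : ℕ) (h : i < M) (θt : Θ) (y : Y) :
    sampleRank lΘ φ f M i θt y
    = ∫ x in (0:ℝ)..1, SBCAux.wb M i x * contRank lΘ φ f x θt y := by
  classical
  set s := f θt y with hs
  have hφθ : Measurable (fun θ => φ θ y) :=
    hφ_meas.comp (measurable_id.prodMk measurable_const)
  have hfθ : Measurable (fun θ => f θ y) :=
    hf_meas.comp (measurable_id.prodMk measurable_const)
  have hint : Integrable (fun θ => φ θ y) lΘ := integrable_of_integral_eq_one (hφ_int y)
  set pm := postFamMeas lΘ φ y with hpm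
  haveI hprob : IsProbabilityMeasure pm := postFamMeas_prob φ hφ_nonneg hφ_int y
  set cls : Θ → Fin 3 := fun θ => if f θ y < s then 0 else if f θ y = s then 1 else 2 with hcls
  have hclsm : Measurable cls := by
    apply Measurable.ite (measurableSet_lt hfθ measurable_const) measurable_const
    exact Measurable.ite (hfθ (measurableSet_singleton s)) measurable_const measurable_const
  have c0 : ∀ θ, cls θ = 0 ↔ f θ y < s := by
    intro θ; simp only [hcls]
    split_ifs with h1 h2 <;> simp [h1]
  have c1 : ∀ θ, cls θ = 1 ↔ f θ y = s := by
    intro θ; simp only [hcls]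
    split_ifs with h1 h2 <;> simp_all
    exact ne_of_lt h1
  have c2 : ∀ θ, cls θ = 2 ↔ s < f θ y := by
    intro θ; simp only [hcls]
    split_ifs with h1 h2 <;> simp_all
    · linarith
    · exact lt_of_le_of_ne h1 (fun hh => h2 hh.symm)
  set μ3 := pm.map cls with hμ3
  haveI : IsProbabilityMeasure μ3 := Measure.isProbabilityMeasure_map hclsm.aemeasurable
  -- counts
  have hNless : ∀ θs : Fin M → Θ, Nless f θs θt y = SBCAux.cnt 0 (cls ∘ θs) := by
    intro θs
    unfold Nless SBCAux.cnt
    congr 1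
    apply Finset.filter_congr
    intro m _
    rw [Function.comp_apply, c0]
  have hNeq : ∀ θs : Fin M → Θ, Neq f θs θt y = SBCAux.cnt 1 (cls ∘ θs) := by
    intro θs
    unfold Neq SBCAux.cnt
    congr 1
    apply Finset.filter_congr
    intro m _
    rw [Function.comp_apply, c1]
  set H : (Fin M → Fin 3) → ℝ := fun σ => SBCAux.hfun i (SBCAux.cnt 0 σ) (SBCAux.cnt 1 σ)
    with hH
  have hmp : MeasurePreserving (fun θs : Fin M → Θ => cls ∘ θs)
      (Measure.pi fun _ : Fin M => pm) (Measure.pi fun _ : Fin M => μ3) :=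
    measurePreserving_pi _ _ (fun _ => ⟨hclsm, rfl⟩)
  have step1 : sampleRank lΘ φ f M i θt y = ∫ σ, H σ ∂(Measure.pi fun _ : Fin M => μ3) := by
    rw [← hmp.map_eq, integral_map hmp.measurable.aemeasurable
      (measurable_of_countable H).aestronglyMeasurable]
    unfold sampleRank
    refine integral_congr_ae (Filter.Eventually.of_forall fun θs => ?_)
    simp only [hH, SBCAux.hfun, hNless θs, hNeq θs]
  have hsingle : ∀ σ : Fin M → Fin 3,
      ((Measure.pi fun _ : Fin M => μ3) {σ}).toReal = ∏ m, (μ3 {σ m}).toReal := by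
    intro σ
    have hset : {σ} = Set.pi Set.univ (fun m => {σ m}) := by
      ext τ
      simp [Set.mem_pi, funext_iff]
    rw [hset, Measure.pi_pi, ENNReal.toReal_prod]
  have step2 : ∫ σ, H σ ∂(Measure.pi fun _ : Fin M => μ3)
      = ∑ σ : Fin M → Fin 3, (∏ m, (μ3 {σ m}).toReal) * H σ := by
    rw [integral_fintype (Integrable.of_finite)]
    exact Finset.sum_congr rfl fun σ _ => by rw [Measure.real, hsingle σ, smul_eq_mul]
  -- the masses
  set c := Cdf lΘ φ f s y with hc
  set d := Dtie lΘ φ f s y with hd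
  set aL := ∫ θ, (if f θ y < s then φ θ y else 0) ∂lΘ with haL
  have intLT : Integrable (fun θ => if f θ y < s then φ θ y else 0) lΘ :=
    integrable_ite_of hint hφθ (measurableSet_lt hfθ measurable_const)
  have intEQ : Integrable (fun θ => if f θ y = s then φ θ y else 0) lΘ :=
    integrable_ite_of hint hφθ (hfθ (measurableSet_singleton s))
  have intLE : Integrable (fun θ => if f θ y ≤ s then φ θ y else 0) lΘ :=
    integrable_ite_of hint hφθ (measurableSet_le hfθ measurable_const)
  have hcd : c = aL + d := by
    rw [hc, haL, hd, Cdf, Dtie, ← integral_add intLT intEQ]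
    refine integral_congr_ae (Filter.Eventually.of_forall fun θ => ?_)
    rcases lt_trichotomy (f θ y) s with h1 | h1 | h1
    · simp [h1, le_of_lt h1, ne_of_lt h1]
    · simp [h1]
    · simp [h1, not_le.mpr h1, not_lt.mpr (le_of_lt h1), ne_of_gt h1]
  have haL_nonneg : 0 ≤ aL := by
    rw [haL]
    refine integral_nonneg fun θ => ?_
    by_cases h1 : f θ y < s <;> simp [h1, hφ_nonneg θ y]
  have hd_nonneg : 0 ≤ d := by
    rw [hd, Dtie]
    refine integral_nonneg fun θ => ?_
    by_cases h1 : f θ y = s <;> simp [h1, hφ_nonneg θ y]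
  have hc_le_one : c ≤ 1 := by
    rw [hc, Cdf, ← hφ_int y]
    refine integral_mono intLE hint fun θ => ?_
    by_cases h1 : f θ y ≤ s <;> simp [h1, hφ_nonneg θ y]
  -- mass computations
  have hmass : ∀ (k : Fin 3) (P : Θ → Prop) (_ : ∀ θ, cls θ = k ↔ P θ)
      (hPm : MeasurableSet {θ | P θ}),
      (μ3 {k}).toReal = ∫ θ, (if P θ then φ θ y else 0) ∂lΘ := by
    intro k P hPiff hPm
    have hpre : cls ⁻¹' {k} = {θ | P θ} := by
      ext θ
      simp [hPiff θ]
    rw [hμ3, Measure.map_apply hclsm (measurableSet_singleton k), hpre,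
      postFamMeas_apply_toReal φ hφ_nonneg hφ_int y hPm]
    refine integral_congr_ae (Filter.Eventually.of_forall fun θ => ?_)
    simp [Set.indicator_apply]
  have hm0 : (μ3 {0}).toReal = aL :=
    hmass 0 _ c0 (measurableSet_lt hfθ measurable_const)
  have hm1 : (μ3 {1}).toReal = d :=
    hmass 1 _ c1 (hfθ (measurableSet_singleton s))
  have hm2 : (μ3 {2}).toReal = 1 - (aL + d) := by
    rw [hmass 2 _ c2 (measurableSet_lt measurable_const hfθ), ← hcd, hc]
    have e1 : ∀ θ, (if s < f θ y then φ θ y else 0)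
        = φ θ y - (if f θ y ≤ s then φ θ y else 0) := by
      intro θ
      by_cases h1 : f θ y ≤ s
      · simp [h1, not_lt.mpr h1]
      · simp [h1, not_le.mp h1]
    simp only [e1]
    rw [integral_sub hint intLE, hφ_int y, Cdf]
  -- apply the master lemma
  have hmaster := SBCAux.master M i h aL d haL_nonneg hd_nonneg (by rw [← hcd]; exact hc_le_one)
    (fun k => (μ3 {k}).toReal) hm0 hm1 hm2
  rw [step1, step2, hmaster]
  refine intervalIntegral.integral_congr fun x _ => ?_
  congr 1
  rw [SBCAux.rrfun, contRank, ← hs, ← hc, ← hd, hcd]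


lemma contRank_mem (lΘ : Measure Θ) (φ f : Θ → Y → ℝ) (x : ℝ) (θt : Θ) (y : Y) :
    contRank lΘ φ f x θt y ∈ Set.Icc (0:ℝ) 1 := by
  unfold contRank
  split_ifs with h1 h2
  · exact ⟨zero_le_one, le_refl 1⟩
  · exact ⟨le_refl 0, zero_le_one⟩
  · constructor
    · exact le_min zero_le_one (le_max_left 0 _)
    · exact min_le_left 1 _

lemma measurable_Cdf_comp (lΘ : Measure Θ) [SigmaFinite lΘ] (φ f : Θ → Y → ℝ)
    (hφ_meas : Measurable (Function.uncurry φ))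
    (hf_meas : Measurable (Function.uncurry f)) :
    Measurable (fun p : Θ × Y => Cdf lΘ φ f (f p.1 p.2) p.2) := by
  have hsm : StronglyMeasurable
      (fun q : (Θ × Y) × Θ => if f q.2 q.1.2 ≤ f q.1.1 q.1.2 then φ q.2 q.1.2 else 0) := by
    refine Measurable.stronglyMeasurable ?_
    have h1 : Measurable (fun q : (Θ × Y) × Θ => f q.2 q.1.2) :=
      hf_meas.comp (measurable_snd.prodMk (measurable_snd.comp measurable_fst))
    have h2 : Measurable (fun q : (Θ × Y) × Θ => f q.1.1 q.1.2) :=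
      hf_meas.comp measurable_fst
    have h3 : Measurable (fun q : (Θ × Y) × Θ => φ q.2 q.1.2) :=
      hφ_meas.comp (measurable_snd.prodMk (measurable_snd.comp measurable_fst))
    exact Measurable.ite (measurableSet_le h1 h2) h3 measurable_const
  exact (StronglyMeasurable.integral_prod_right' (ν := lΘ) hsm).measurable

lemma measurable_Dtie_comp (lΘ : Measure Θ) [SigmaFinite lΘ] (φ f : Θ → Y → ℝ)
    (hφ_meas : Measurable (Function.uncurry φ))
    (hf_meas : Measurable (Function.uncurry f)) :
    Measurable (fun p : Θ × Y => Dtie lΘ φ f (f p.1 p.2) p.2) := by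
  have hsm : StronglyMeasurable
      (fun q : (Θ × Y) × Θ => if f q.2 q.1.2 = f q.1.1 q.1.2 then φ q.2 q.1.2 else 0) := by
    refine Measurable.stronglyMeasurable ?_
    have h1 : Measurable (fun q : (Θ × Y) × Θ => f q.2 q.1.2) :=
      hf_meas.comp (measurable_snd.prodMk (measurable_snd.comp measurable_fst))
    have h2 : Measurable (fun q : (Θ × Y) × Θ => f q.1.1 q.1.2) :=
      hf_meas.comp measurable_fst
    have h3 : Measurable (fun q : (Θ × Y) × Θ => φ q.2 q.1.2) :=
      hφ_meas.comp (measurable_snd.prodMk (measurable_snd.comp measurable_fst))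
    exact Measurable.ite (measurableSet_eq_fun h1 h2) h3 measurable_const
  exact (StronglyMeasurable.integral_prod_right' (ν := lΘ) hsm).measurable

lemma measurable_contRank_prod (lΘ : Measure Θ) [SigmaFinite lΘ] (φ f : Θ → Y → ℝ)
    (hφ_meas : Measurable (Function.uncurry φ))
    (hf_meas : Measurable (Function.uncurry f)) :
    Measurable (fun q : (Θ × Y) × ℝ => contRank lΘ φ f q.2 q.1.1 q.1.2) := by
  have hC : Measurable (fun q : (Θ × Y) × ℝ => Cdf lΘ φ f (f q.1.1 q.1.2) q.1.2) :=
    (measurable_Cdf_comp lΘ φ f hφ_meas hf_meas).comp measurable_fst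
  have hD : Measurable (fun q : (Θ × Y) × ℝ => Dtie lΘ φ f (f q.1.1 q.1.2) q.1.2) :=
    (measurable_Dtie_comp lΘ φ f hφ_meas hf_meas).comp measurable_fst
  unfold contRank
  refine Measurable.ite (hD (measurableSet_singleton 0)) ?_ ?_
  · exact Measurable.ite (measurableSet_le hC measurable_snd) measurable_const measurable_const
  · exact (Measurable.min measurable_const
      (Measurable.max measurable_const (((measurable_snd.sub hC).add hD).div hD)))

lemma post_nonneg (lΘ : Measure Θ) (prior : Θ → ℝ) (obs : Y → Θ → ℝ)
    (hprior_nonneg : ∀ θ, 0 ≤ prior θ) (hobs_nonneg : ∀ y θ, 0 ≤ obs y θ)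
    (hmarg_pos : ∀ y, 0 < marg lΘ prior obs y) (θ : Θ) (y : Y) :
    0 ≤ post lΘ prior obs θ y :=
  div_nonneg (mul_nonneg (hobs_nonneg y θ) (hprior_nonneg θ)) (le_of_lt (hmarg_pos y))

lemma obsprior_integrable (lΘ : Measure Θ) (prior : Θ → ℝ) (obs : Y → Θ → ℝ)
    (hmarg_pos : ∀ y, 0 < marg lΘ prior obs y) (y : Y) :
    Integrable (fun θ => obs y θ * prior θ) lΘ := by
  by_contra hc
  have := integral_undef hc
  have h2 := hmarg_pos y
  rw [marg] at h2
  rw [this] at h2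
  norm_num at h2

lemma post_integrable (lΘ : Measure Θ) (prior : Θ → ℝ) (obs : Y → Θ → ℝ)
    (hmarg_pos : ∀ y, 0 < marg lΘ prior obs y) (y : Y) :
    Integrable (fun θ => post lΘ prior obs θ y) lΘ := by
  unfold post
  exact (obsprior_integrable lΘ prior obs hmarg_pos y).div_const _

lemma integral_post (lΘ : Measure Θ) (prior : Θ → ℝ) (obs : Y → Θ → ℝ)
    (hmarg_pos : ∀ y, 0 < marg lΘ prior obs y) (y : Y) :
    ∫ θ, post lΘ prior obs θ y ∂lΘ = 1 := by
  unfold post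
  rw [integral_div]
  rw [← marg]
  exact div_self (ne_of_gt (hmarg_pos y))

lemma post_measurable (lΘ : Measure Θ) (prior : Θ → ℝ) (obs : Y → Θ → ℝ)
    (hprior_meas : Measurable prior) (hobs_meas : Measurable (Function.uncurry obs)) (y : Y) :
    Measurable (fun θ => post lΘ prior obs θ y) := by
  unfold post
  exact (((hobs_meas.comp (measurable_const.prodMk measurable_id)).mul hprior_meas).div_const _)

lemma qfun_mem (lΘ : Measure Θ) (prior : Θ → ℝ) (obs : Y → Θ → ℝ) (φ f : Θ → Y → ℝ)
    (hprior_nonneg : ∀ θ, 0 ≤ prior θ) (hobs_nonneg : ∀ y θ, 0 ≤ obs y θ)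
    (hmarg_pos : ∀ y, 0 < marg lΘ prior obs y) (x : ℝ) (y : Y) :
    qfun lΘ prior obs φ f x y ∈ Set.Icc (0:ℝ) 1 := by
  have hpi := post_integrable lΘ prior obs hmarg_pos y
  have hpn : ∀ θ, 0 ≤ post lΘ prior obs θ y :=
    fun θ => post_nonneg lΘ prior obs hprior_nonneg hobs_nonneg hmarg_pos θ y
  constructor
  · refine integral_nonneg fun θt => ?_
    exact mul_nonneg (contRank_mem lΘ φ f x θt y).1 (hpn θt)
  · rw [← integral_post lΘ prior obs hmarg_pos y]
    by_cases hci : Integrable (fun θt => contRank lΘ φ f x θt y * post lΘ prior obs θt y) lΘ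
    · refine integral_mono hci hpi fun θt => ?_
      have h1 := (contRank_mem lΘ φ f x θt y).2
      nlinarith [hpn θt, (contRank_mem lΘ φ f x θt y).1]
    · rw [qfun, integral_undef hci]
      rw [integral_post lΘ prior obs hmarg_pos y]
      norm_num



lemma Qfun_eq (lΘ : Measure Θ) [SigmaFinite lΘ] (prior : Θ → ℝ) (obs : Y → Θ → ℝ)
    (φ f : Θ → Y → ℝ)
    (hprior_meas : Measurable prior)
    (hobs_meas : Measurable (Function.uncurry obs))
    (hmarg_pos : ∀ y, 0 < marg lΘ prior obs y)
    (hφ_meas : Measurable (Function.uncurry φ))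
    (hφ_nonneg : ∀ (θ : Θ) (y : Y), 0 ≤ φ θ y)
    (hφ_int : ∀ y, ∫ θ, φ θ y ∂lΘ = 1)
    (hf_meas : Measurable (Function.uncurry f))
    (M i : ℕ) (h : i < M) (y : Y) :
    Qfun lΘ prior obs φ f M i y
      = ∫ x in Set.Ioc (0:ℝ) 1, SBCAux.wb M i x * qfun lΘ prior obs φ f x y := by
  set ν := volume.restrict (Set.Ioc (0:ℝ) 1) with hν
  haveI : IsProbabilityMeasure ν := by
    constructor
    rw [hν, Measure.restrict_apply MeasurableSet.univ, Set.univ_inter, Real.volume_Ioc]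
    norm_num
  set K := ((i:ℝ)+1) * (Nat.choose M (i+1) : ℝ) with hK
  have hpi := post_integrable lΘ prior obs hmarg_pos y
  have hpm := post_measurable lΘ prior obs hprior_meas hobs_meas y
  set F : Θ × ℝ → ℝ := fun p =>
    SBCAux.wb M i p.2 * contRank lΘ φ f p.2 p.1 y * post lΘ prior obs p.1 y with hF
  have hFmeas : Measurable F := by
    apply Measurable.mul
    apply Measurable.mul
    · exact (SBCAux.wb_cont M i).measurable.comp measurable_snd
    · exact (measurable_contRank_prod lΘ φ f hφ_meas hf_meas).comp
        ((measurable_fst.prodMk measurable_const).prodMk measurable_snd)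
    · exact hpm.comp measurable_fst
  have hbound : ∀ (θt : Θ), ∀ x ∈ Set.Ioc (0:ℝ) 1,
      ‖F (θt, x)‖ ≤ K * |post lΘ prior obs θt y| := by
    intro θt x hx
    have h1 : |SBCAux.wb M i x| ≤ K := SBCAux.wb_bound M i (le_of_lt hx.1) hx.2
    have h2 : |contRank lΘ φ f x θt y| ≤ 1 := abs_le.mpr
      ⟨by linarith [(contRank_mem lΘ φ f x θt y).1], (contRank_mem lΘ φ f x θt y).2⟩
    rw [hF]
    simp only
    rw [Real.norm_eq_abs, abs_mul, abs_mul]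
    have h3 : |SBCAux.wb M i x| * |contRank lΘ φ f x θt y| ≤ K * 1 :=
      mul_le_mul h1 h2 (abs_nonneg _) (le_trans (abs_nonneg _) h1)
    nlinarith [abs_nonneg (post lΘ prior obs θt y), h3]
  have hxint : ∀ θt, Integrable (fun x => F (θt, x)) ν := by
    intro θt
    refine Integrable.mono' (integrable_const (K * |post lΘ prior obs θt y|))
      ((hFmeas.comp (measurable_const.prodMk measurable_id)).aestronglyMeasurable) ?_
    rw [hν]
    exact (ae_restrict_iff' measurableSet_Ioc).2 (ae_of_all _ (fun x hx => hbound θt x hx))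
  have hFint : Integrable F (lΘ.prod ν) := by
    refine (integrable_prod_iff hFmeas.aestronglyMeasurable).2 ⟨ae_of_all _ hxint, ?_⟩
    refine Integrable.mono' (hpi.abs.const_mul K)
      ((StronglyMeasurable.integral_prod_right' (ν := ν)
        hFmeas.norm.stronglyMeasurable)).aestronglyMeasurable
      (ae_of_all _ fun θt => ?_)
    rw [Real.norm_eq_abs, abs_of_nonneg (integral_nonneg fun x => norm_nonneg _)]
    calc ∫ x, ‖F (θt, x)‖ ∂ν ≤ ∫ _x, K * |post lΘ prior obs θt y| ∂ν := by
          refine integral_mono_ae (hxint θt).norm (integrable_const _) ?_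
          rw [hν]
          exact (ae_restrict_iff' measurableSet_Ioc).2 (ae_of_all _ (fun x hx => hbound θt x hx))
      _ = K * |post lΘ prior obs θt y| := by
          rw [integral_const, probReal_univ]
          simp
  unfold Qfun
  have e1 : ∀ θt : Θ, sampleRank lΘ φ f M i θt y * post lΘ prior obs θt y
      = ∫ x, F (θt, x) ∂ν := by
    intro θt
    rw [sampleRank_eq lΘ φ f hφ_meas hφ_nonneg hφ_int hf_meas M i h θt y,
      intervalIntegral.integral_of_le zero_le_one, ← hν, ← integral_mul_const]
  rw [integral_congr_ae (ae_of_all _ e1), integral_integral_swap hFint]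
  refine integral_congr_ae (ae_of_all _ fun x => ?_)
  rw [hF]
  simp only
  rw [show (fun θt => SBCAux.wb M i x * contRank lΘ φ f x θt y * post lΘ prior obs θt y)
      = fun θt => SBCAux.wb M i x * (contRank lΘ φ f x θt y * post lΘ prior obs θt y)
    from funext fun θt => by ring]
  rw [integral_const_mul]
  rfl


lemma int_wb_Ioc (M i : ℕ) (h : i < M) :
    ∫ x in Set.Ioc (0:ℝ) 1, SBCAux.wb M i x * x = ((i:ℝ)+1)/((M:ℝ)+1) := by
  rw [← intervalIntegral.integral_of_le zero_le_one]
  exact SBCAux.int_wb M i h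

lemma marg_measurable (lΘ : Measure Θ) [SigmaFinite lΘ] (prior : Θ → ℝ) (obs : Y → Θ → ℝ)
    (hprior_meas : Measurable prior) (hobs_meas : Measurable (Function.uncurry obs)) :
    Measurable (marg lΘ prior obs) := by
  have hsm : StronglyMeasurable (fun p : Y × Θ => obs p.1 p.2 * prior p.2) :=
    (hobs_meas.mul (hprior_meas.comp measurable_snd)).stronglyMeasurable
  exact (StronglyMeasurable.integral_prod_right' (ν := lΘ) hsm).measurable

lemma marg_integrable (lΘ : Measure Θ) (lY : Measure Y) [SigmaFinite lΘ] [SigmaFinite lY]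
    (prior : Θ → ℝ) (obs : Y → Θ → ℝ)
    (hprior_meas : Measurable prior) (hprior_nonneg : ∀ θ, 0 ≤ prior θ)
    (hprior_int : ∫ θ, prior θ ∂lΘ = 1)
    (hobs_meas : Measurable (Function.uncurry obs))
    (hobs_nonneg : ∀ y θ, 0 ≤ obs y θ)
    (hobs_int : ∀ θ, ∫ y, obs y θ ∂lY = 1)
    (hmarg_pos : ∀ y, 0 < marg lΘ prior obs y) :
    Integrable (marg lΘ prior obs) lY := by
  have hm := marg_measurable lΘ prior obs hprior_meas hobs_meas
  have key : ∫⁻ y, ENNReal.ofReal (marg lΘ prior obs y) ∂lY = 1 := by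
    have e1 : ∀ y, ENNReal.ofReal (marg lΘ prior obs y)
        = ∫⁻ θ, ENNReal.ofReal (obs y θ * prior θ) ∂lΘ := by
      intro y
      rw [marg, ofReal_integral_eq_lintegral_ofReal (obsprior_integrable lΘ prior obs hmarg_pos y)
        (Filter.Eventually.of_forall fun θ =>
          mul_nonneg (hobs_nonneg y θ) (hprior_nonneg θ))]
    simp only [e1]
    rw [lintegral_lintegral_swap]
    · have e2 : ∀ θ, ∫⁻ y, ENNReal.ofReal (obs y θ * prior θ) ∂lY
          = ENNReal.ofReal (prior θ) := by
        intro θ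
        have e3 : ∀ y, ENNReal.ofReal (obs y θ * prior θ)
            = ENNReal.ofReal (obs y θ) * ENNReal.ofReal (prior θ) := fun y =>
          ENNReal.ofReal_mul (hobs_nonneg y θ)
        simp only [e3]
        have hob : Measurable (fun y => ENNReal.ofReal (obs y θ)) :=
          (hobs_meas.comp (measurable_id.prodMk measurable_const)).ennreal_ofReal
        rw [lintegral_mul_const _ hob,
          ← ofReal_integral_eq_lintegral_ofReal (integrable_of_integral_eq_one (hobs_int θ))
            (Filter.Eventually.of_forall fun y => hobs_nonneg y θ), hobs_int θ]
        simp
      simp only [e2]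
      rw [← ofReal_integral_eq_lintegral_ofReal (integrable_of_integral_eq_one hprior_int)
        (Filter.Eventually.of_forall hprior_nonneg), hprior_int]
      simp
    · exact (hobs_meas.mul (hprior_meas.comp measurable_snd)).ennreal_ofReal.aemeasurable
  refine ⟨hm.aestronglyMeasurable, ?_⟩
  rw [hasFiniteIntegral_iff_ofReal (Filter.Eventually.of_forall fun y => le_of_lt (hmarg_pos y))]
  rw [key]
  norm_num

end MeasAux

theorem continuous_SBC_implies_sample_SBC
    (lΘ : Measure Θ) (lY : Measure Y) [SigmaFinite lΘ] [SigmaFinite lY]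
    (prior : Θ → ℝ) (obs : Y → Θ → ℝ) (φ f : Θ → Y → ℝ)
    (hprior_meas : Measurable prior) (hprior_nonneg : ∀ θ, 0 ≤ prior θ)
    (hprior_int : ∫ θ, prior θ ∂lΘ = 1)
    (hobs_meas : Measurable (Function.uncurry obs))
    (hobs_nonneg : ∀ (y : Y) (θ : Θ), 0 ≤ obs y θ)
    (hobs_int : ∀ θ, ∫ y, obs y θ ∂lY = 1)
    (hmarg_pos : ∀ y, 0 < marg lΘ prior obs y)
    (hφ_meas : Measurable (Function.uncurry φ))
    (hφ_nonneg : ∀ (θ : Θ) (y : Y), 0 ≤ φ θ y)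
    (hφ_int : ∀ y, ∫ θ, φ θ y ∂lΘ = 1)
    (hf_meas : Measurable (Function.uncurry f))
    (M : ℕ) :
    (∀ y : Y, (∀ x ∈ Set.Icc (0 : ℝ) 1, qfun lΘ prior obs φ f x y = x) →
      ∀ i < M, Qfun lΘ prior obs φ f M i y = ((i : ℝ) + 1) / ((M : ℝ) + 1))
    ∧ (PassesContSBC lΘ lY prior obs φ f → PassesSampleSBC lΘ lY prior obs φ f M) := by
  constructor
  · -- part 1: pointwise in y
    intro y hq i hiM
    rw [Qfun_eq lΘ prior obs φ f hprior_meas hobs_meas hmarg_pos hφ_meas hφ_nonneg hφ_int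
      hf_meas M i hiM y,
      setIntegral_congr_fun measurableSet_Ioc
        (fun x hx => by
          show SBCAux.wb M i x * qfun lΘ prior obs φ f x y = SBCAux.wb M i x * x
          rw [hq x (Set.Ioc_subset_Icc_self hx)] :
          Set.EqOn (fun x => SBCAux.wb M i x * qfun lΘ prior obs φ f x y)
            (fun x => SBCAux.wb M i x * x) (Set.Ioc 0 1))]
    exact int_wb_Ioc M i hiM
  · -- part 2
    intro hpass i hiM
    set ν := volume.restrict (Set.Ioc (0:ℝ) 1) with hν
    haveI : IsProbabilityMeasure ν := by
      constructor
      rw [hν, Measure.restrict_apply MeasurableSet.univ, Set.univ_inter, Real.volume_Ioc]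
      norm_num
    set K := ((i:ℝ)+1) * (Nat.choose M (i+1) : ℝ) with hK
    have hmargm := marg_measurable lΘ prior obs hprior_meas hobs_meas
    have hmargint := marg_integrable lΘ lY prior obs hprior_meas hprior_nonneg hprior_int
      hobs_meas hobs_nonneg hobs_int hmarg_pos
    set G : Y × ℝ → ℝ := fun p =>
      SBCAux.wb M i p.2 * qfun lΘ prior obs φ f p.2 p.1 * marg lΘ prior obs p.1 with hG
    have hqm : Measurable (fun p : Y × ℝ => qfun lΘ prior obs φ f p.2 p.1) := by
      have hsm : StronglyMeasurable (fun q : (Y × ℝ) × Θ =>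
          contRank lΘ φ f q.1.2 q.2 q.1.1 * post lΘ prior obs q.2 q.1.1) := by
        refine Measurable.stronglyMeasurable (Measurable.mul ?_ ?_)
        · exact (measurable_contRank_prod lΘ φ f hφ_meas hf_meas).comp
            ((measurable_snd.prodMk (measurable_fst.comp measurable_fst)).prodMk
              (measurable_snd.comp measurable_fst))
        · unfold post
          refine Measurable.div (Measurable.mul ?_ ?_) ?_
          · exact hobs_meas.comp ((measurable_fst.comp measurable_fst).prodMk measurable_snd)
          · exact hprior_meas.comp measurable_snd
          · exact hmargm.comp (measurable_fst.comp measurable_fst)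
      exact (StronglyMeasurable.integral_prod_right' (ν := lΘ) hsm).measurable
    have hGmeas : Measurable G :=
      (((SBCAux.wb_cont M i).measurable.comp measurable_snd).mul hqm).mul
        (hmargm.comp measurable_fst)
    have hbound : ∀ (y : Y), ∀ x ∈ Set.Ioc (0:ℝ) 1,
        ‖G (y, x)‖ ≤ K * |marg lΘ prior obs y| := by
      intro y x hx
      have h1 : |SBCAux.wb M i x| ≤ K := SBCAux.wb_bound M i (le_of_lt hx.1) hx.2
      have hqmem := qfun_mem lΘ prior obs φ f hprior_nonneg hobs_nonneg hmarg_pos x y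
      have h2 : |qfun lΘ prior obs φ f x y| ≤ 1 := abs_le.mpr
        ⟨by linarith [hqmem.1], hqmem.2⟩
      rw [hG]
      simp only
      rw [Real.norm_eq_abs, abs_mul, abs_mul]
      have h3 : |SBCAux.wb M i x| * |qfun lΘ prior obs φ f x y| ≤ K * 1 :=
        mul_le_mul h1 h2 (abs_nonneg _) (le_trans (abs_nonneg _) h1)
      nlinarith [abs_nonneg (marg lΘ prior obs y), h3]
    have hxint : ∀ y, Integrable (fun x => G (y, x)) ν := by
      intro y
      refine Integrable.mono' (integrable_const (K * |marg lΘ prior obs y|))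
        ((hGmeas.comp (measurable_const.prodMk measurable_id)).aestronglyMeasurable) ?_
      rw [hν]
      exact (ae_restrict_iff' measurableSet_Ioc).2 (ae_of_all _ (fun x hx => hbound y x hx))
    have hGint : Integrable G (lY.prod ν) := by
      refine (integrable_prod_iff hGmeas.aestronglyMeasurable).2 ⟨ae_of_all _ hxint, ?_⟩
      refine Integrable.mono' (hmargint.abs.const_mul K)
        ((StronglyMeasurable.integral_prod_right' (ν := ν)
          hGmeas.norm.stronglyMeasurable)).aestronglyMeasurable
        (ae_of_all _ fun y => ?_)
      rw [Real.norm_eq_abs, abs_of_nonneg (integral_nonneg fun x => norm_nonneg _)]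
      calc ∫ x, ‖G (y, x)‖ ∂ν ≤ ∫ _x, K * |marg lΘ prior obs y| ∂ν := by
            refine integral_mono_ae (hxint y).norm (integrable_const _) ?_
            rw [hν]
            exact (ae_restrict_iff' measurableSet_Ioc).2
              (ae_of_all _ (fun x hx => hbound y x hx))
        _ = K * |marg lΘ prior obs y| := by
            rw [integral_const, probReal_univ]
            simp
    unfold PassesSampleSBC at *
    have e1 : ∀ y, Qfun lΘ prior obs φ f M i y * marg lΘ prior obs y
        = ∫ x, G (y, x) ∂ν := by
      intro y
      rw [Qfun_eq lΘ prior obs φ f hprior_meas hobs_meas hmarg_pos hφ_meas hφ_nonneg hφ_int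
        hf_meas M i hiM y, ← integral_mul_const]
    rw [integral_congr_ae (ae_of_all _ e1), integral_integral_swap hGint]
    have e2 : Set.EqOn (fun x : ℝ => ∫ y', G (y', x) ∂lY)
        (fun x => SBCAux.wb M i x * x) (Set.Ioc 0 1) := by
      intro x hx
      simp only [hG]
      rw [show (fun y' => SBCAux.wb M i x * qfun lΘ prior obs φ f x y' * marg lΘ prior obs y')
          = fun y' => SBCAux.wb M i x * (qfun lΘ prior obs φ f x y' * marg lΘ prior obs y')
        from funext fun y' => by ring]
      rw [integral_const_mul, hpass x (Set.Ioc_subset_Icc_self hx)]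
    rw [hν, setIntegral_congr_fun measurableSet_Ioc e2]
    exact int_wb_Ioc M i hiM


end SBC
end
end

section
/- (Corollary to Theorems 3 and 4: the correct posterior passes sample SBC, ties allowed.) Let μ be any probability measure on ℝ (possibly with atoms) and M ∈ ℕ. Draw θ̃, θ_1, …, θ_M i.i.d. from μ, set N_less := #{m : θ_m < θ̃} and N_eq := #{m : θ_m = θ̃}, draw K uniformly on {0,…,N_eq} (conditionally on the sample), and set N_total := N_less + K. Then N_total is uniformly distributed on {0,…,M}: Pr(N_total = r) = 1/(M+1) for every r ∈ {0,…,M}. In particular, taking μ to be the law of f(θ,y) under π_post(·|y) for each y shows that the correct posterior family φ = π_post passes M-sample SBC with respect to any test quantity f and any M. -/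
open MeasureTheory Filter Topology

noncomputable section

namespace SBC

section SBCAux
open Finset

set_option linter.unusedSectionVars false

variable {α : Type*} [MeasurableSpace α]


lemma sum_rank_indicator {M : ℕ} (r : ℕ) (hr : r ≤ M) (w : Fin (M+1) → ℝ) :
    ∑ j : Fin (M+1),
      (if (((univ.erase j).filter fun i => w i < w j).card ≤ r ∧
          r ≤ ((univ.erase j).filter fun i => w i < w j).card
            + ((univ.erase j).filter fun i => w i = w j).card) then
        (1 : ℝ) / ((((univ.erase j).filter fun i => w i = w j).card : ℝ) + 1)
      else 0) = 1 := by
  classical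
  have hlt : ∀ j : Fin (M+1), ((univ.erase j).filter fun i => w i < w j)
      = univ.filter (fun i => w i < w j) := by
    intro j
    rw [Finset.filter_erase, Finset.erase_eq_of_notMem (by simp)]
  have hq1 : ∀ j : Fin (M+1), 1 ≤ (univ.filter fun i => w i = w j).card := by
    intro j; exact Finset.card_pos.2 ⟨j, by simp⟩
  have heq : ∀ j : Fin (M+1), ((univ.erase j).filter fun i => w i = w j).card
      = (univ.filter fun i => w i = w j).card - 1 := by
    intro j
    rw [Finset.filter_erase, Finset.card_erase_of_mem (by simp)]
  have hdq : ∀ j : Fin (M+1), (univ.filter fun i => w i ≤ w j).card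
      = (univ.filter fun i => w i < w j).card + (univ.filter fun i => w i = w j).card := by
    intro j
    have h1 : (univ.filter fun i => w i ≤ w j)
        = (univ.filter fun i => w i < w j) ∪ (univ.filter fun i => w i = w j) := by
      rw [← Finset.filter_or]
      exact Finset.filter_congr fun i _ => by rw [le_iff_lt_or_eq]
    have h2 : Disjoint (univ.filter fun i => w i < w j) (univ.filter fun i => w i = w j) := by
      rw [Finset.disjoint_left]
      intro a ha hb
      simp only [mem_filter] at ha hb
      exact absurd (hb.2 ▸ ha.2) (lt_irrefl _)
    rw [h1, Finset.card_union_of_disjoint h2]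
  have hsummand : ∀ j : Fin (M+1),
      (if (((univ.erase j).filter fun i => w i < w j).card ≤ r ∧
          r ≤ ((univ.erase j).filter fun i => w i < w j).card
            + ((univ.erase j).filter fun i => w i = w j).card) then
        (1 : ℝ) / ((((univ.erase j).filter fun i => w i = w j).card : ℝ) + 1)
      else 0)
      = (if ((univ.filter fun i => w i < w j).card ≤ r ∧
            r < (univ.filter fun i => w i ≤ w j).card) then
          (1 : ℝ) / ((univ.filter fun i => w i = w j).card : ℝ) else 0) := by
    intro j
    rw [hlt, heq]
    have hcond : ((univ.filter fun i => w i < w j).card ≤ r ∧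
        r ≤ (univ.filter fun i => w i < w j).card
          + ((univ.filter fun i => w i = w j).card - 1))
        ↔ ((univ.filter fun i => w i < w j).card ≤ r ∧
            r < (univ.filter fun i => w i ≤ w j).card) := by
      have := hq1 j; have := hdq j; omega
    have hcast : ((((univ.filter fun i => w i = w j).card - 1 : ℕ) : ℝ) + 1)
        = ((univ.filter fun i => w i = w j).card : ℝ) := by
      have := hq1 j
      push_cast [this]; ring
    rw [hcast]
    exact if_congr hcond rfl rfl
  rw [Fintype.sum_congr _ _ hsummand, ← Finset.sum_filter]
  set S : Finset (Fin (M+1)) := univ.filter (fun j =>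
    (univ.filter fun i => w i < w j).card ≤ r ∧
      r < (univ.filter fun i => w i ≤ w j).card) with hS
  -- existence
  have hex : S.Nonempty := by
    have mono := Tuple.monotone_sort w
    set σ := Tuple.sort w with hσ
    set ρ : Fin (M+1) := ⟨r, Nat.lt_succ_of_le hr⟩ with hρ
    refine ⟨σ ρ, ?_⟩
    simp only [hS, mem_filter, mem_univ, true_and]
    constructor
    · have h5 : (univ.filter fun i => w i < w (σ ρ)).card ≤ (Finset.Iio ρ).card := by
        apply Finset.card_le_card_of_injOn (fun i => σ.symm i)
        · intro i hi
          simp only [Finset.mem_coe, mem_filter, mem_univ, true_and] at hi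
          simp only [Finset.mem_coe, Finset.mem_Iio]
          by_contra hle
          have h6 := mono (not_lt.1 hle)
          simp only [Function.comp_apply, Equiv.apply_symm_apply] at h6
          exact absurd hi (not_lt.2 h6)
        · exact fun a _ b _ h => σ.symm.injective h
      simpa using h5
    · have h5 : (Finset.Iic ρ).card ≤ (univ.filter fun i => w i ≤ w (σ ρ)).card := by
        apply Finset.card_le_card_of_injOn (fun k => σ k)
        · intro k hk
          simp only [Finset.mem_coe, Finset.mem_Iic] at hk
          simp only [Finset.mem_coe, mem_filter, mem_univ, true_and]
          exact mono hk
        · exact fun a _ b _ h => σ.injective h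
      have h6 : (Finset.Iic ρ).card = r + 1 := by simp; rfl
      omega
  -- all members of S share the same value
  have hkey : ∀ j ∈ S, ∀ k ∈ S, w j = w k := by
    have haux : ∀ j ∈ S, ∀ k ∈ S, ¬ (w j < w k) := by
      intro j hj k hk hlt'
      simp only [hS, mem_filter, mem_univ, true_and] at hj hk
      have hsub : (univ.filter fun i => w i ≤ w j) ⊆ (univ.filter fun i => w i < w k) := by
        intro a ha
        simp only [mem_filter, mem_univ, true_and] at ha ⊢
        exact lt_of_le_of_lt ha hlt'
      have := Finset.card_le_card hsub
      omega
    intro j hj k hk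
    rcases lt_trichotomy (w j) (w k) with h | h | h
    · exact absurd h (haux j hj k hk)
    · exact h
    · exact absurd h (haux k hk j hj)
  -- each tie class equals S
  have hSq : ∀ j ∈ S, (univ.filter fun i => w i = w j).card = S.card := by
    intro j hj
    congr 1
    ext i
    simp only [hS, mem_filter, mem_univ, true_and]
    constructor
    · intro hij
      simp only [hS, mem_filter, mem_univ, true_and] at hj
      constructor
      · calc (univ.filter fun a => w a < w i).card
            = (univ.filter fun a => w a < w j).card := by rw [hij]
          _ ≤ r := hj.1
      · calc r < (univ.filter fun a => w a ≤ w j).card := hj.2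
          _ = (univ.filter fun a => w a ≤ w i).card := by rw [hij]
    · intro hi
      exact hkey i (by simp [hS, hi]) j hj
  have hScard : S.card ≠ 0 := by
    simpa [Finset.card_eq_zero, ← Finset.not_nonempty_iff_eq_empty] using hex
  calc (∑ j ∈ S, (1 : ℝ) / ((univ.filter fun i => w i = w j).card : ℝ))
      = ∑ j ∈ S, (1 : ℝ) / (S.card : ℝ) := by
        refine Finset.sum_congr rfl fun j hj => by rw [hSq j hj]
    _ = S.card • ((1:ℝ) / (S.card : ℝ)) := by rw [Finset.sum_const]
    _ = 1 := by
        rw [nsmul_eq_mul]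
        rw [mul_one_div, div_self (Nat.cast_ne_zero.mpr hScard)]

lemma card_filter_swap_succ {M : ℕ} (j : Fin (M+1)) (p : Fin (M+1) → Prop) [DecidablePred p] :
    ((univ : Finset (Fin M)).filter fun m => p (Equiv.swap 0 j m.succ)).card
      = ((univ.erase j).filter fun i => p i).card := by
  apply Finset.card_bij (fun m _ => Equiv.swap 0 j m.succ)
  · intro m hm
    rw [Finset.mem_filter] at hm
    replace hm := hm.2
    rw [Finset.mem_filter, Finset.mem_erase]
    refine ⟨⟨?_, Finset.mem_univ _⟩, hm⟩
    intro hj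
    have h0 : (m.succ : Fin (M+1)) = 0 := by
      have := congrArg (Equiv.swap 0 j) hj
      rwa [Equiv.swap_apply_self, Equiv.swap_apply_right] at this
    exact Fin.succ_ne_zero m h0
  · exact fun a _ b _ h => Fin.succ_injective _ ((Equiv.swap 0 j).injective h)
  · intro i hi
    rw [Finset.mem_filter, Finset.mem_erase] at hi
    have h0 : Equiv.swap 0 j i ≠ 0 := by
      intro h
      have := congrArg (Equiv.swap 0 j) h
      rw [Equiv.swap_apply_self, Equiv.swap_apply_left] at this
      exact hi.1.1 this
    refine ⟨(Equiv.swap 0 j i).pred h0, ?_, ?_⟩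
    · rw [Finset.mem_filter]
      refine ⟨Finset.mem_univ _, ?_⟩
      rw [Fin.succ_pred, Equiv.swap_apply_self]
      exact hi.2
    · rw [Fin.succ_pred, Equiv.swap_apply_self]

variable {α : Type*} [MeasurableSpace α]

noncomputable def rankG (g : α → ℝ) (M r : ℕ) (v : Fin (M+1) → α) : ℝ :=
  if ((univ.filter fun m : Fin M => g (v m.succ) < g (v 0)).card ≤ r ∧
      r ≤ (univ.filter fun m : Fin M => g (v m.succ) < g (v 0)).card +
        (univ.filter fun m : Fin M => g (v m.succ) = g (v 0)).card) then
    1 / (((univ.filter fun m : Fin M => g (v m.succ) = g (v 0)).card : ℝ) + 1)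
  else 0

lemma measurable_filter_card {n : ℕ} {β : Type*} [MeasurableSpace β]
    (p : Fin n → β → Prop) [∀ m b, Decidable (p m b)]
    (hp : ∀ m, MeasurableSet {b | p m b}) :
    Measurable fun b => ((univ : Finset (Fin n)).filter fun m => p m b).card := by
  have h : (fun b => ((univ : Finset (Fin n)).filter fun m => p m b).card)
      = fun b => ∑ m : Fin n, if p m b then 1 else 0 := by
    funext b; rw [Finset.card_filter]
  rw [h]
  exact Finset.measurable_sum _ fun m _ => Measurable.ite (hp m) measurable_const measurable_const

lemma measurable_rankG (g : α → ℝ) (hg : Measurable g) (M r : ℕ) :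
    Measurable (rankG g M r) := by
  have hNl : Measurable fun v : Fin (M+1) → α =>
      ((univ : Finset (Fin M)).filter fun m => g (v m.succ) < g (v 0)).card :=
    measurable_filter_card _ fun m => measurableSet_lt
      (hg.comp (measurable_pi_apply m.succ)) (hg.comp (measurable_pi_apply 0))
  have hNe : Measurable fun v : Fin (M+1) → α =>
      ((univ : Finset (Fin M)).filter fun m => g (v m.succ) = g (v 0)).card :=
    measurable_filter_card _ fun m => measurableSet_eq_fun
      (hg.comp (measurable_pi_apply m.succ)) (hg.comp (measurable_pi_apply 0))
  unfold rankG
  apply Measurable.ite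
  · exact (hNl.prodMk hNe) ((Set.to_countable
      {q : ℕ × ℕ | q.1 ≤ r ∧ r ≤ q.1 + q.2}).measurableSet)
  · exact (measurable_from_top (f := fun k : ℕ => 1 / ((k:ℝ)+1))).comp hNe
  · exact measurable_const

lemma rankG_nonneg (g : α → ℝ) (M r : ℕ) (v : Fin (M+1) → α) : 0 ≤ rankG g M r v := by
  unfold rankG
  split
  · positivity
  · exact le_refl 0

lemma rankG_le_one (g : α → ℝ) (M r : ℕ) (v : Fin (M+1) → α) : rankG g M r v ≤ 1 := by
  unfold rankG
  split
  · rw [div_le_one (by positivity)]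
    have : (0:ℝ) ≤ ((univ.filter fun m : Fin M => g (v m.succ) = g (v 0)).card : ℝ) :=
      Nat.cast_nonneg _
    linarith
  · exact zero_le_one

lemma integrable_rankG (g : α → ℝ) (hg : Measurable g) (M r : ℕ)
    (π : Measure (Fin (M+1) → α)) [IsFiniteMeasure π] :
    Integrable (rankG g M r) π := by
  refine Integrable.mono' (integrable_const (1:ℝ))
    (measurable_rankG g hg M r).aestronglyMeasurable (ae_of_all _ fun v => ?_)
  rw [Real.norm_eq_abs, abs_of_nonneg (rankG_nonneg g M r v)]
  exact rankG_le_one g M r v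

lemma rankG_comp_swap (g : α → ℝ) (M r : ℕ) (j : Fin (M+1)) (v : Fin (M+1) → α) :
    rankG g M r (fun i => v (Equiv.swap 0 j i))
      = (if (((univ.erase j).filter fun i => g (v i) < g (v j)).card ≤ r ∧
          r ≤ ((univ.erase j).filter fun i => g (v i) < g (v j)).card
            + ((univ.erase j).filter fun i => g (v i) = g (v j)).card) then
        (1 : ℝ) / ((((univ.erase j).filter fun i => g (v i) = g (v j)).card : ℝ) + 1)
      else 0) := by
  unfold rankG
  simp only [Equiv.swap_apply_left]
  rw [card_filter_swap_succ j (fun i => g (v i) < g (v j)),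
    card_filter_swap_succ j (fun i => g (v i) = g (v j))]

lemma sum_rankG_swap (g : α → ℝ) (M : ℕ) (r : ℕ) (hr : r ≤ M) (v : Fin (M+1) → α) :
    ∑ j : Fin (M+1), rankG g M r (fun i => v (Equiv.swap 0 j i)) = 1 := by
  rw [Fintype.sum_congr _ _ (fun j => rankG_comp_swap g M r j v)]
  exact sum_rank_indicator r hr (fun i => g (v i))

lemma rank_integral (ν : Measure α) [IsProbabilityMeasure ν]
    (g : α → ℝ) (hg : Measurable g) {M : ℕ} (r : ℕ) (hr : r ≤ M) :
    ∫ v : Fin (M+1) → α, rankG g M r v ∂(Measure.pi fun _ : Fin (M+1) => ν)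
      = 1 / ((M : ℝ) + 1) := by
  set π := Measure.pi (fun _ : Fin (M+1) => ν) with hπ
  haveI : IsProbabilityMeasure π := by
    constructor
    rw [hπ, Measure.pi_univ]
    simp
  have hmp : ∀ j : Fin (M+1),
      MeasurePreserving (fun v : Fin (M+1) → α => fun i => v (Equiv.swap 0 j i)) π π := by
    intro j
    have h := (MeasureTheory.measurePreserving_piCongrLeft
      (fun _ : Fin (M+1) => ν) (Equiv.swap 0 j)).symm
    have he : ⇑(MeasurableEquiv.piCongrLeft (fun _ : Fin (M+1) => α) (Equiv.swap 0 j)).symm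
        = fun v : Fin (M+1) → α => fun i => v (Equiv.swap 0 j i) := by
      funext v; ext i; simp [MeasurableEquiv.piCongrLeft]
    rw [he] at h
    exact h
  have hcomp : ∀ j : Fin (M+1),
      ∫ v, rankG g M r (fun i => v (Equiv.swap 0 j i)) ∂π = ∫ v, rankG g M r v ∂π := by
    intro j
    have he : ⇑(MeasurableEquiv.piCongrLeft (fun _ : Fin (M+1) => α) (Equiv.swap 0 j)).symm
        = fun v : Fin (M+1) → α => fun i => v (Equiv.swap 0 j i) := by
      funext v; ext i; simp [MeasurableEquiv.piCongrLeft]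
    have h := MeasurePreserving.integral_comp (hmp j)
      (he ▸ (MeasurableEquiv.piCongrLeft (fun _ : Fin (M+1) => α)
        (Equiv.swap 0 j)).symm.measurableEmbedding) (rankG g M r)
    exact h
  have hint : ∀ j : Fin (M+1),
      Integrable (fun v => rankG g M r (fun i => v (Equiv.swap 0 j i))) π := by
    intro j
    have he : ⇑(MeasurableEquiv.piCongrLeft (fun _ : Fin (M+1) => α) (Equiv.swap 0 j)).symm
        = fun v : Fin (M+1) → α => fun i => v (Equiv.swap 0 j i) := by
      funext v; ext i; simp [MeasurableEquiv.piCongrLeft]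
    have := ((hmp j).integrable_comp_emb
      (he ▸ (MeasurableEquiv.piCongrLeft (fun _ : Fin (M+1) => α)
        (Equiv.swap 0 j)).symm.measurableEmbedding)).2 (integrable_rankG g hg M r π)
    exact this
  have hsum : ∑ j : Fin (M+1), ∫ v, rankG g M r (fun i => v (Equiv.swap 0 j i)) ∂π = 1 := by
    rw [← integral_finset_sum _ (fun j _ => hint j)]
    have : ∀ v : Fin (M+1) → α,
        ∑ j : Fin (M+1), rankG g M r (fun i => v (Equiv.swap 0 j i)) = 1 :=
      sum_rankG_swap g M r hr
    rw [integral_congr_ae (ae_of_all _ this)]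
    simp
  rw [Finset.sum_congr rfl (fun j _ => hcomp j)] at hsum
  rw [Finset.sum_const, Finset.card_univ, Fintype.card_fin, nsmul_eq_mul] at hsum
  have hM : ((M:ℝ)+1) ≠ 0 := by positivity
  rw [eq_div_iff hM]
  push_cast at hsum
  linarith [hsum]

lemma minmax_eq_sum (i L E : ℕ) :
    min 1 (max 0 (((i:ℝ) + 1 - (L:ℝ)) / ((E:ℝ) + 1)))
      = ∑ r ∈ Finset.range (i+1), (if (L ≤ r ∧ r ≤ L + E) then (1:ℝ)/((E:ℝ)+1) else 0) := by
  have hE : (0:ℝ) < (E:ℝ)+1 := by positivity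
  rw [← Finset.sum_filter]
  have hfilter : (Finset.range (i+1)).filter (fun r => L ≤ r ∧ r ≤ L + E)
      = Finset.Icc L (min i (L+E)) := by
    ext a
    simp only [Finset.mem_filter, Finset.mem_range, Finset.mem_Icc, le_min_iff, min_le_iff]
    omega
  rw [hfilter, Finset.sum_const, Nat.card_Icc, nsmul_eq_mul]
  rcases lt_or_ge i L with hLi | hLi
  · have h1 : min i (L+E) + 1 - L = 0 := by omega
    rw [h1]
    have hx : ((i:ℝ) + 1 - L) / ((E:ℝ)+1) ≤ 0 := by
      apply div_nonpos_of_nonpos_of_nonneg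
      · have : (i:ℝ) + 1 ≤ L := by exact_mod_cast hLi
        linarith
      · linarith
    rw [max_eq_left hx, min_eq_right zero_le_one]
    simp
  · rcases le_or_gt (L+E) i with hLE | hLE
    · have h1 : min i (L+E) + 1 - L = E + 1 := by omega
      rw [h1]
      have hx : (1:ℝ) ≤ ((i:ℝ) + 1 - L) / ((E:ℝ)+1) := by
        rw [le_div_iff₀ hE]
        have : (L:ℝ) + E ≤ i := by exact_mod_cast hLE
        linarith
      rw [max_eq_right (le_trans zero_le_one hx), min_eq_left hx]
      push_cast
      field_simp
    · have h1 : min i (L+E) + 1 - L = i + 1 - L := by omega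
      rw [h1]
      have hnum : (0:ℝ) ≤ (i:ℝ) + 1 - L := by
        have : (L:ℝ) ≤ i := by exact_mod_cast hLi
        linarith
      have hx0 : (0:ℝ) ≤ ((i:ℝ) + 1 - L) / ((E:ℝ)+1) := div_nonneg hnum (le_of_lt hE)
      have hx1 : ((i:ℝ) + 1 - L) / ((E:ℝ)+1) ≤ 1 := by
        rw [div_le_one hE]
        have : (i:ℝ) < (L:ℝ) + E := by exact_mod_cast hLE
        linarith
      rw [max_eq_right hx0, min_eq_right hx1]
      have hc : ((i + 1 - L : ℕ) : ℝ) = (i:ℝ) + 1 - L := by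
        have h2 : L ≤ i + 1 := by omega
        push_cast [h2]
        ring
      rw [hc]
      ring

end SBCAux

variable {Θ Y : Type*} [MeasurableSpace Θ] [MeasurableSpace Y]

theorem randomized_rank_uniform_and_correct_posterior_passes_sample_SBC
    (lΘ : Measure Θ) (lY : Measure Y) [SigmaFinite lΘ] [SigmaFinite lY]
    (prior : Θ → ℝ) (obs : Y → Θ → ℝ) (φ f : Θ → Y → ℝ)
    (hprior_meas : Measurable prior) (hprior_nonneg : ∀ θ, 0 ≤ prior θ)
    (hprior_int : ∫ θ, prior θ ∂lΘ = 1)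
    (hobs_meas : Measurable (Function.uncurry obs))
    (hobs_nonneg : ∀ (y : Y) (θ : Θ), 0 ≤ obs y θ)
    (hobs_int : ∀ θ, ∫ y, obs y θ ∂lY = 1)
    (hmarg_pos : ∀ y, 0 < marg lΘ prior obs y)
    (hφ_meas : Measurable (Function.uncurry φ))
    (hφ_nonneg : ∀ (θ : Θ) (y : Y), 0 ≤ φ θ y)
    (hφ_int : ∀ y, ∫ θ, φ θ y ∂lΘ = 1)
    (hf_meas : Measurable (Function.uncurry f))
    (μ : Measure ℝ) [IsProbabilityMeasure μ] (M : ℕ) :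
    (∀ r ≤ M,
      ∫ v : Fin (M + 1) → ℝ,
        (if (Finset.univ.filter fun m : Fin M => v m.succ < v 0).card ≤ r ∧
            r ≤ (Finset.univ.filter fun m : Fin M => v m.succ < v 0).card +
              (Finset.univ.filter fun m : Fin M => v m.succ = v 0).card then
          1 / (((Finset.univ.filter fun m : Fin M => v m.succ = v 0).card : ℝ) + 1)
        else 0)
        ∂(Measure.pi fun _ : Fin (M + 1) => μ) = 1 / ((M : ℝ) + 1))
    ∧ PassesSampleSBC lΘ lY prior obs (post lΘ prior obs) f M := by
  classical
  constructor
  · intro r hr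
    exact rank_integral μ (fun x => x) measurable_id r hr
  · intro i hi
    have hop_int : ∀ y, Integrable (fun θ => obs y θ * prior θ) lΘ := by
      intro y
      by_contra h
      have hp := hmarg_pos y
      rw [marg, integral_undef h] at hp
      exact lt_irrefl _ hp
    have hpost_nonneg : ∀ (θ : Θ) (y : Y), 0 ≤ post lΘ prior obs θ y := fun θ y =>
      div_nonneg (mul_nonneg (hobs_nonneg y θ) (hprior_nonneg θ)) (le_of_lt (hmarg_pos y))
    have hpost_meas : ∀ y, Measurable fun θ => post lΘ prior obs θ y := by
      intro y
      unfold post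
      exact ((hobs_meas.comp measurable_prodMk_left).mul hprior_meas).div_const _
    have hpost_int : ∀ y, Integrable (fun θ => post lΘ prior obs θ y) lΘ := fun y =>
      (hop_int y).div_const _
    have hpost_one : ∀ y, ∫ θ, post lΘ prior obs θ y ∂lΘ = 1 := by
      intro y
      unfold post
      rw [integral_div]
      exact div_self (ne_of_gt (hmarg_pos y))
    have hprob : ∀ y, IsProbabilityMeasure (postFamMeas lΘ (post lΘ prior obs) y) := by
      intro y
      constructor
      unfold postFamMeas
      rw [withDensity_apply _ MeasurableSet.univ, setLIntegral_univ,
        ← ofReal_integral_eq_lintegral_ofReal (hpost_int y)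
          (ae_of_all _ (fun θ => hpost_nonneg θ y)),
        hpost_one y]
      exact ENNReal.ofReal_one
    have hQ : ∀ y, Qfun lΘ prior obs (post lΘ prior obs) f M i y = ((i:ℝ)+1)/((M:ℝ)+1) := by
      intro y
      haveI := hprob y
      set ν := postFamMeas lΘ (post lΘ prior obs) y with hν
      set g : Θ → ℝ := fun θ => f θ y with hgdef
      have hg : Measurable g :=
        hf_meas.comp (measurable_id.prodMk measurable_const)
      set F : Θ → (Fin M → Θ) → ℝ := fun θt θs =>
        min 1 (max 0 (((i : ℝ) + 1 - (Nless f θs θt y : ℝ)) / ((Neq f θs θt y : ℝ) + 1)))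
        with hF
      have hNl : Measurable fun z : Θ × (Fin M → Θ) => Nless f z.2 z.1 y := by
        apply measurable_filter_card (fun m (z : Θ × (Fin M → Θ)) => f (z.2 m) y < f z.1 y)
        intro m
        have hm1 : Measurable fun z : Θ × (Fin M → Θ) => f (z.2 m) y := by
          have he : (fun z : Θ × (Fin M → Θ) => f (z.2 m) y)
              = Function.uncurry f ∘ (fun z : Θ × (Fin M → Θ) => (z.2 m, y)) := rfl
          rw [he]
          exact hf_meas.comp (((measurable_pi_apply m).comp measurable_snd).prodMk
            measurable_const)
        have hm2 : Measurable fun z : Θ × (Fin M → Θ) => f z.1 y := by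
          exact hf_meas.comp (measurable_fst.prodMk measurable_const)
        exact measurableSet_lt hm1 hm2
      have hNe : Measurable fun z : Θ × (Fin M → Θ) => Neq f z.2 z.1 y := by
        apply measurable_filter_card (fun m (z : Θ × (Fin M → Θ)) => f (z.2 m) y = f z.1 y)
        intro m
        have hm1 : Measurable fun z : Θ × (Fin M → Θ) => f (z.2 m) y := by
          have he : (fun z : Θ × (Fin M → Θ) => f (z.2 m) y)
              = Function.uncurry f ∘ (fun z : Θ × (Fin M → Θ) => (z.2 m, y)) := rfl
          rw [he]
          exact hf_meas.comp (((measurable_pi_apply m).comp measurable_snd).prodMk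
            measurable_const)
        have hm2 : Measurable fun z : Θ × (Fin M → Θ) => f z.1 y := by
          exact hf_meas.comp (measurable_fst.prodMk measurable_const)
        exact measurableSet_eq_fun hm1 hm2
      have hFmeas : Measurable (Function.uncurry F) := by
        have : Function.uncurry F = (fun q : ℕ × ℕ =>
            min 1 (max 0 (((i : ℝ) + 1 - (q.1 : ℝ)) / ((q.2 : ℝ) + 1)))) ∘
            (fun z : Θ × (Fin M → Θ) => (Nless f z.2 z.1 y, Neq f z.2 z.1 y)) := rfl
        rw [this]
        exact (measurable_of_countable _).comp (hNl.prodMk hNe)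
      have hFbound : ∀ θt θs, 0 ≤ F θt θs ∧ F θt θs ≤ 1 := by
        intro θt θs
        constructor
        · exact le_min zero_le_one (le_max_left _ _)
        · exact min_le_left _ _
      have hFint : Integrable (Function.uncurry F)
          (ν.prod (Measure.pi fun _ : Fin M => ν)) := by
        refine Integrable.mono' (integrable_const (1:ℝ)) hFmeas.aestronglyMeasurable
          (ae_of_all _ fun z => ?_)
        have hz : Function.uncurry F z = F z.1 z.2 := rfl
        rw [Real.norm_eq_abs, hz, abs_of_nonneg (hFbound z.1 z.2).1]
        exact (hFbound z.1 z.2).2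
      have step1 : Qfun lΘ prior obs (post lΘ prior obs) f M i y
          = ∫ θt, sampleRank lΘ (post lΘ prior obs) f M i θt y ∂ν := by
        unfold Qfun
        rw [hν]
        unfold postFamMeas
        have hmeq : (fun θ => ENNReal.ofReal (post lΘ prior obs θ y))
            = fun θ => ((post lΘ prior obs θ y).toNNReal : ENNReal) := rfl
        rw [hmeq, integral_withDensity_eq_integral_smul ((hpost_meas y).real_toNNReal)]
        congr 1
        funext θt
        rw [NNReal.smul_def, Real.coe_toNNReal _ (hpost_nonneg θt y), smul_eq_mul]
        ring
      have step2 : ∫ θt, sampleRank lΘ (post lΘ prior obs) f M i θt y ∂ν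
          = ∫ z : Θ × (Fin M → Θ), F z.1 z.2
              ∂(ν.prod (Measure.pi fun _ : Fin M => ν)) := by
        unfold sampleRank
        exact integral_integral hFint
      have hmp := measurePreserving_piFinSuccAbove (fun _ : Fin (M+1) => ν) 0
      have step3 : ∫ z : Θ × (Fin M → Θ), F z.1 z.2
            ∂(ν.prod (Measure.pi fun _ : Fin M => ν))
          = ∫ v : Fin (M+1) → Θ, F (v 0) (fun m => v m.succ)
              ∂(Measure.pi fun _ : Fin (M+1) => ν) := by
        rw [← hmp.integral_comp (MeasurableEquiv.measurableEmbedding _)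
          (fun z => F z.1 z.2)]
        refine integral_congr_ae (ae_of_all _ fun v => ?_)
        have h1 : (MeasurableEquiv.piFinSuccAbove (fun _ : Fin (M+1) => Θ) 0) v
            = (v 0, fun m => v m.succ) := by
          ext
          · rfl
          · simp [MeasurableEquiv.piFinSuccAbove, Fin.zero_succAbove, Fin.tail]
        simpa using congrArg (fun z : Θ × (Fin M → Θ) => F z.1 z.2) h1
      have step4 : ∀ v : Fin (M+1) → Θ, F (v 0) (fun m => v m.succ)
          = ∑ r ∈ Finset.range (i+1), rankG g M r v := by
        intro v
        have h2 : F (v 0) (fun m => v m.succ)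
            = min 1 (max 0 (((i : ℝ) + 1 - (Nless f (fun m => v m.succ) (v 0) y : ℝ))
              / ((Neq f (fun m => v m.succ) (v 0) y : ℝ) + 1))) := rfl
        rw [h2, minmax_eq_sum i (Nless f (fun m => v m.succ) (v 0) y)
          (Neq f (fun m => v m.succ) (v 0) y)]
        refine Finset.sum_congr rfl fun r _ => ?_
        rfl
      have step5 : ∫ v : Fin (M+1) → Θ, (∑ r ∈ Finset.range (i+1), rankG g M r v)
            ∂(Measure.pi fun _ : Fin (M+1) => ν)
          = ∑ r ∈ Finset.range (i+1), ((1:ℝ) / ((M:ℝ)+1)) := by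
        rw [integral_finset_sum _ (fun r _ => integrable_rankG g hg M r _)]
        refine Finset.sum_congr rfl fun r hr => ?_
        refine rank_integral ν g hg r ?_
        rw [Finset.mem_range] at hr
        omega
      rw [step1, step2, step3, integral_congr_ae (ae_of_all _ step4), step5,
        Finset.sum_const, Finset.card_range, nsmul_eq_mul]
      push_cast
      ring
    -- total mass of marg over lY is 1
    have hobs_integrable : ∀ θ, Integrable (fun y => obs y θ) lY := by
      intro θ
      by_contra h
      have h1 := hobs_int θ
      rw [integral_undef h] at h1
      exact one_ne_zero h1.symm
    have hprior_integrable : Integrable prior lΘ := by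
      by_contra h
      rw [integral_undef h] at hprior_int
      exact one_ne_zero hprior_int.symm
    have hmeasop : Measurable (Function.uncurry fun y θ => obs y θ * prior θ) :=
      hobs_meas.mul (hprior_meas.comp measurable_snd)
    have hFopmeas : Measurable (Function.uncurry fun (y : Y) (θ : Θ) =>
        ENNReal.ofReal (obs y θ * prior θ)) := hmeasop.ennreal_ofReal
    have hinner : ∀ y, ∫⁻ θ, ENNReal.ofReal (obs y θ * prior θ) ∂lΘ
        = ENNReal.ofReal (marg lΘ prior obs y) := by
      intro y
      rw [marg, ofReal_integral_eq_lintegral_ofReal (hop_int y)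
        (ae_of_all _ fun θ => mul_nonneg (hobs_nonneg y θ) (hprior_nonneg θ))]
    have hinner2 : ∀ θ, ∫⁻ y, ENNReal.ofReal (obs y θ * prior θ) ∂lY
        = ENNReal.ofReal (prior θ) := by
      intro θ
      have h1 : ∀ y, ENNReal.ofReal (obs y θ * prior θ)
          = ENNReal.ofReal (obs y θ) * ENNReal.ofReal (prior θ) := fun y =>
        ENNReal.ofReal_mul (hobs_nonneg y θ)
      simp_rw [h1]
      have hm : Measurable fun y' : Y => ENNReal.ofReal (obs y' θ) := by
        have he : (fun y' : Y => obs y' θ)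
            = Function.uncurry obs ∘ (fun y' : Y => (y', θ)) := rfl
        exact (he ▸ (hobs_meas.comp measurable_prodMk_right)).ennreal_ofReal
      rw [lintegral_mul_const _ hm,
        ← ofReal_integral_eq_lintegral_ofReal (hobs_integrable θ)
          (ae_of_all _ fun y => hobs_nonneg y θ),
        hobs_int θ]
      simp
    have htot : ∫⁻ y, ENNReal.ofReal (marg lΘ prior obs y) ∂lY = 1 := by
      have hswap := lintegral_lintegral_swap (μ := lY) (ν := lΘ)
        (f := fun (y : Y) (θ : Θ) => ENNReal.ofReal (obs y θ * prior θ))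
        hFopmeas.aemeasurable
      calc ∫⁻ y, ENNReal.ofReal (marg lΘ prior obs y) ∂lY
          = ∫⁻ y, ∫⁻ θ, ENNReal.ofReal (obs y θ * prior θ) ∂lΘ ∂lY := by
            refine lintegral_congr fun y => (hinner y).symm
        _ = ∫⁻ θ, ∫⁻ y, ENNReal.ofReal (obs y θ * prior θ) ∂lY ∂lΘ := hswap
        _ = ∫⁻ θ, ENNReal.ofReal (prior θ) ∂lΘ := by
            exact lintegral_congr fun θ => hinner2 θ
        _ = ENNReal.ofReal (∫ θ, prior θ ∂lΘ) :=
            (ofReal_integral_eq_lintegral_ofReal hprior_integrable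
              (ae_of_all _ hprior_nonneg)).symm
        _ = 1 := by rw [hprior_int]; exact ENNReal.ofReal_one
    have hmargmeas : AEStronglyMeasurable (fun y => marg lΘ prior obs y) lY := by
      have := (hmeasop.stronglyMeasurable).integral_prod_right'
        (ν := lΘ)
      exact this.aestronglyMeasurable
    have hmargint : ∫ y, marg lΘ prior obs y ∂lY = 1 := by
      rw [integral_eq_lintegral_of_nonneg_ae
        (ae_of_all _ fun y => le_of_lt (hmarg_pos y)) hmargmeas, htot]
      simp
    calc ∫ y, Qfun lΘ prior obs (post lΘ prior obs) f M i y * marg lΘ prior obs y ∂lY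
        = ∫ y, (((i:ℝ)+1)/((M:ℝ)+1)) * marg lΘ prior obs y ∂lY := by
          refine integral_congr_ae (ae_of_all _ fun y => ?_)
          show Qfun lΘ prior obs (post lΘ prior obs) f M i y * marg lΘ prior obs y
            = (((i:ℝ)+1)/((M:ℝ)+1)) * marg lΘ prior obs y
          rw [hQ y]
      _ = (((i:ℝ)+1)/((M:ℝ)+1)) * ∫ y, marg lΘ prior obs y ∂lY :=
          integral_const_mul _ _
      _ = ((i:ℝ)+1)/((M:ℝ)+1) := by rw [hmargint, mul_one]

end SBC
end
end

section
/- (Theorem 5, characterization of SBC failures.) Let φ be a posterior family and f a test quantity. For every fixed y ∈ Y, the following are equivalent: (i) C_{φ,f}(s|y) = C_f(s|y) for all s ∈ ℝ; (ii) q_{φ,f}(x|y) = x for all x ∈ [0,1]. -/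
open MeasureTheory Filter Topology

noncomputable section

section SBCAuxSec
open Set
namespace SBCAux

/-! ### CDF-type functions of a measure on ℝ -/

def FF (P : Measure ℝ) (s : ℝ) : ℝ := (P (Iic s)).toReal
def FL (P : Measure ℝ) (s : ℝ) : ℝ := (P (Iio s)).toReal
def DD (P : Measure ℝ) (s : ℝ) : ℝ := (P {s}).toReal

/-- The continuous-rank function built from the CDF data of `P`. -/
def Hfun (P : Measure ℝ) (x s : ℝ) : ℝ :=
  if DD P s = 0 then (if FF P s ≤ x then 1 else 0)
  else min 1 (max 0 ((x - FF P s + DD P s) / DD P s))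

variable (P : Measure ℝ) [IsFiniteMeasure P]

lemma FF_mono : Monotone (FF P) := fun a b h =>
  ENNReal.toReal_mono (measure_ne_top _ _) (measure_mono (Iic_subset_Iic.2 h))

lemma FF_nonneg (s : ℝ) : 0 ≤ FF P s := ENNReal.toReal_nonneg
lemma FL_nonneg (s : ℝ) : 0 ≤ FL P s := ENNReal.toReal_nonneg
lemma DD_nonneg (s : ℝ) : 0 ≤ DD P s := ENNReal.toReal_nonneg

lemma FF_eq (s : ℝ) : FF P s = FL P s + DD P s := by
  have hdisj : Disjoint (Iio s) ({s} : Set ℝ) := by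
    simp [Set.disjoint_singleton_right]
  have hu : Iio s ∪ {s} = Iic s := by
    ext t; simp [le_iff_lt_or_eq]
  rw [FF, ← hu, measure_union hdisj (measurableSet_singleton s),
    ENNReal.toReal_add (measure_ne_top _ _) (measure_ne_top _ _)]
  rfl

lemma FL_mono : Monotone (FL P) := fun a b h =>
  ENNReal.toReal_mono (measure_ne_top _ _) (measure_mono (Iio_subset_Iio h))

lemma FL_le_FF (s : ℝ) : FL P s ≤ FF P s := by
  rw [FF_eq]; linarith [DD_nonneg P s]

lemma FF_le_FL_of_lt {s t : ℝ} (h : s < t) : FF P s ≤ FL P t :=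
  ENNReal.toReal_mono (measure_ne_top _ _)
    (measure_mono (fun a (ha : a ≤ s) => lt_of_le_of_lt ha h))

lemma measurable_FF : Measurable (FF P) := (FF_mono P).measurable
lemma measurable_FL : Measurable (FL P) := (FL_mono P).measurable
lemma measurable_DD : Measurable (DD P) := by
  have : DD P = fun s => FF P s - FL P s := by
    funext s; rw [FF_eq]; ring
  rw [this]; exact (measurable_FF P).sub (measurable_FL P)

lemma measurable_Hfun (x : ℝ) : Measurable (Hfun P x) := by
  unfold Hfun
  refine Measurable.ite ((measurable_DD P) (measurableSet_singleton 0)) ?_ ?_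
  · exact Measurable.ite ((measurable_FF P) measurableSet_Iic) measurable_const measurable_const
  · exact measurable_const.min (measurable_const.max
      (((measurable_const.sub (measurable_FF P)).add (measurable_DD P)).div (measurable_DD P)))

lemma Hfun_nonneg (x s : ℝ) : 0 ≤ Hfun P x s := by
  unfold Hfun
  split_ifs <;> simp [le_min_iff, le_max_iff]

lemma Hfun_le_one (x s : ℝ) : Hfun P x s ≤ 1 := by
  unfold Hfun
  split_ifs <;> simp

lemma Hfun_eq_one {x s : ℝ} (h : FF P s ≤ x) : Hfun P x s = 1 := by
  by_cases h1 : DD P s = 0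
  · simp [Hfun, h1, h]
  · have hD : 0 < DD P s := lt_of_le_of_ne (DD_nonneg P s) (Ne.symm h1)
    have h1le : (1 : ℝ) ≤ (x - FF P s + DD P s) / DD P s := by
      rw [le_div_iff₀ hD]; linarith
    have hm : (1:ℝ) ≤ max 0 ((x - FF P s + DD P s) / DD P s) :=
      le_trans h1le (le_max_right _ _)
    simp [Hfun, h1, min_eq_left hm]

lemma Hfun_eq_zero_of_FL {x s : ℝ} (hFL : x < FL P s) : Hfun P x s = 0 := by
  have hFLFF := FL_le_FF P s
  by_cases h1 : DD P s = 0
  · have hne : ¬ FF P s ≤ x := by linarith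
    simp [Hfun, h1, hne]
  · have hD : 0 < DD P s := lt_of_le_of_ne (DD_nonneg P s) (Ne.symm h1)
    have hFFeq := FF_eq P s
    have hnum : x - FF P s + DD P s < 0 := by linarith
    have hdiv : (x - FF P s + DD P s) / DD P s < 0 := div_neg_of_neg_of_pos hnum hD
    simp [Hfun, h1, max_eq_left hdiv.le]

lemma Hfun_mono (s : ℝ) {x x' : ℝ} (h : x' ≤ x) : Hfun P x' s ≤ Hfun P x s := by
  by_cases h1 : DD P s = 0
  · simp only [Hfun, if_pos h1]
    split_ifs with h2 h3
    · exact le_refl 1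
    · linarith
    · exact zero_le_one
    · exact le_refl 0
  · simp only [Hfun, if_neg h1]
    have hD : 0 ≤ DD P s := DD_nonneg P s
    have hnum : x' - FF P s + DD P s ≤ x - FF P s + DD P s := by linarith
    have hdiv : (x' - FF P s + DD P s) / DD P s ≤ (x - FF P s + DD P s) / DD P s := by
      gcongr
    exact min_le_min (le_refl 1) (max_le_max (le_refl 0) hdiv)

lemma integrable_Hfun (Q : Measure ℝ) [IsFiniteMeasure Q] (x : ℝ) :
    Integrable (Hfun P x) Q := by
  refine Integrable.mono' (integrable_const 1) (measurable_Hfun P x).aestronglyMeasurable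
    (Eventually.of_forall fun s => ?_)
  rw [Real.norm_eq_abs, abs_of_nonneg (Hfun_nonneg P x s)]
  exact Hfun_le_one P x s

/-! ### limit lemmas -/

lemma le_FF_of_forall_gt {a x : ℝ} (h : ∀ t, a < t → x < FF P t) : x ≤ FF P a := by
  have hanti : Antitone (fun n : ℕ => Iic (a + 1/(n+1))) := by
    intro n m hnm
    apply Iic_subset_Iic.2
    have h1 : (0:ℝ) < n + 1 := by positivity
    have h2 : (n:ℝ) + 1 ≤ (m:ℝ) + 1 := by exact_mod_cast by omega
    have := one_div_le_one_div_of_le h1 h2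
    linarith
  have hInter : (⋂ n : ℕ, Iic (a + 1/((n:ℝ)+1))) = Iic a := by
    ext t
    simp only [mem_iInter, mem_Iic]
    constructor
    · intro ht
      by_contra hta
      push_neg at hta
      obtain ⟨n, hn⟩ := exists_nat_one_div_lt (sub_pos.2 hta)
      have := ht n
      linarith
    · intro ht n
      have : (0:ℝ) < 1/((n:ℝ)+1) := by positivity
      linarith
  have htend : Tendsto (fun n : ℕ => P (Iic (a + 1/((n:ℝ)+1)))) atTop (𝓝 (P (Iic a))) := by
    have := tendsto_measure_iInter_atTop (μ := P)
      (fun n => measurableSet_Iic.nullMeasurableSet) hanti ⟨0, measure_ne_top _ _⟩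
    rwa [hInter] at this
  have htend2 : Tendsto (fun n : ℕ => FF P (a + 1/((n:ℝ)+1))) atTop (𝓝 (FF P a)) :=
    (ENNReal.tendsto_toReal (measure_ne_top _ _)).comp htend
  refine ge_of_tendsto htend2 (Eventually.of_forall fun n => ?_)
  refine (h _ ?_).le
  have : (0:ℝ) < 1/((n:ℝ)+1) := by positivity
  linarith

lemma FL_le_of_forall_lt {a x : ℝ} (h : ∀ t, t < a → FF P t ≤ x) : FL P a ≤ x := by
  have hmono : Monotone (fun n : ℕ => Iic (a - 1/(n+1))) := by
    intro n m hnm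
    apply Iic_subset_Iic.2
    have h1 : (0:ℝ) < n + 1 := by positivity
    have h2 : (n:ℝ) + 1 ≤ (m:ℝ) + 1 := by exact_mod_cast by omega
    have := one_div_le_one_div_of_le h1 h2
    linarith
  have hUnion : (⋃ n : ℕ, Iic (a - 1/((n:ℝ)+1))) = Iio a := by
    ext t
    simp only [mem_iUnion, mem_Iic, mem_Iio]
    constructor
    · rintro ⟨n, hn⟩
      have : (0:ℝ) < 1/((n:ℝ)+1) := by positivity
      linarith
    · intro ht
      obtain ⟨n, hn⟩ := exists_nat_one_div_lt (sub_pos.2 ht)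
      exact ⟨n, by linarith⟩
  have htend : Tendsto (fun n : ℕ => P (Iic (a - 1/((n:ℝ)+1)))) atTop (𝓝 (P (Iio a))) := by
    have := tendsto_measure_iUnion_atTop (μ := P) hmono
    rwa [hUnion] at this
  have htend2 : Tendsto (fun n : ℕ => FF P (a - 1/((n:ℝ)+1))) atTop (𝓝 (FL P a)) :=
    (ENNReal.tendsto_toReal (measure_ne_top _ _)).comp htend
  refine le_of_tendsto htend2 (Eventually.of_forall fun n => ?_)
  refine h _ ?_
  have : (0:ℝ) < 1/((n:ℝ)+1) := by positivity
  linarith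

lemma nonpos_of_forall_lt_FF {x : ℝ} (h : ∀ s, x < FF P s) : x ≤ 0 := by
  have hanti : Antitone (fun n : ℕ => Iic (-(n:ℝ))) := by
    intro n m hnm
    apply Iic_subset_Iic.2
    simp only [neg_le_neg_iff]
    exact_mod_cast hnm
  have hInter : (⋂ n : ℕ, Iic (-(n:ℝ))) = (∅ : Set ℝ) := by
    ext t
    simp only [mem_iInter, mem_Iic, mem_empty_iff_false, iff_false, not_forall, not_le]
    obtain ⟨n, hn⟩ := exists_nat_gt (-t)
    exact ⟨n, by linarith⟩
  have htend : Tendsto (fun n : ℕ => P (Iic (-(n:ℝ)))) atTop (𝓝 0) := by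
    have := tendsto_measure_iInter_atTop (μ := P)
      (fun n => measurableSet_Iic.nullMeasurableSet) hanti ⟨0, measure_ne_top _ _⟩
    rw [hInter] at this
    simpa [Function.comp_def] using this
  have htend2 : Tendsto (fun n : ℕ => FF P (-(n:ℝ))) atTop (𝓝 0) := by
    have := (ENNReal.tendsto_toReal (by simp : (0:ENNReal) ≠ ⊤)).comp htend
    simpa [Function.comp_def, FF] using this
  exact ge_of_tendsto htend2 (Eventually.of_forall fun n => (h _).le)

lemma one_le_of_forall_FF_le [IsProbabilityMeasure P] {x : ℝ} (h : ∀ s, FF P s ≤ x) :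
    1 ≤ x := by
  have hmono : Monotone (fun n : ℕ => Iic ((n:ℝ))) := by
    intro n m hnm
    exact Iic_subset_Iic.2 (by exact_mod_cast hnm)
  have hUnion : (⋃ n : ℕ, Iic ((n:ℝ))) = (univ : Set ℝ) := by
    ext t
    simp only [mem_iUnion, mem_Iic, mem_univ, iff_true]
    obtain ⟨n, hn⟩ := exists_nat_gt t
    exact ⟨n, hn.le⟩
  have htend : Tendsto (fun n : ℕ => P (Iic ((n:ℝ)))) atTop (𝓝 1) := by
    have := tendsto_measure_iUnion_atTop (μ := P) hmono
    rw [hUnion] at this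
    simpa [Function.comp_def] using this
  have htend2 : Tendsto (fun n : ℕ => FF P ((n:ℝ))) atTop (𝓝 1) := by
    have := (ENNReal.tendsto_toReal (by simp : (1:ENNReal) ≠ ⊤)).comp htend
    simpa [Function.comp_def, FF] using this
  exact le_of_tendsto htend2 (Eventually.of_forall fun n => h _)

/-! ### the null "flat part" lemma -/

lemma measure_flat_null (a : ℝ) :
    P {s | a < s ∧ P (Iic s) ≤ P (Iic a)} = 0 := by
  set S := {s | a < s ∧ P (Iic s) ≤ P (Iic a)} with hSdef
  have hIoc : ∀ s ∈ S, P (Ioc a s) = 0 := by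
    intro s hs
    have h1 : Iic a ⊆ Iic s := Iic_subset_Iic.2 hs.1.le
    have h2 : P (Ioc a s) = P (Iic s) - P (Iic a) := by
      rw [← Iic_sdiff_Iic]
      exact measure_diff h1 measurableSet_Iic.nullMeasurableSet (measure_ne_top _ _)
    rw [h2]
    exact tsub_eq_zero_of_le hs.2
  have hdown : ∀ s ∈ S, ∀ t, a < t → t ≤ s → t ∈ S := by
    intro s hs t hat hts
    exact ⟨hat, le_trans (measure_mono (Iic_subset_Iic.2 hts)) hs.2⟩
  by_cases hne : S.Nonempty
  · by_cases hbdd : BddAbove S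
    · set b := sSup S with hbdef
      have hmem : ∀ t, a < t → t < b → t ∈ S := by
        intro t h1 h2
        obtain ⟨z, hz, htz⟩ := exists_lt_of_lt_csSup hne h2
        exact hdown z hz t h1 htz.le
      have hIoo : P (Ioo a b) = 0 := by
        have hsub : Ioo a b ⊆ ⋃ n : ℕ, Ioc a (b - 1/((n:ℝ)+1)) := by
          intro t ht
          obtain ⟨n, hn⟩ := exists_nat_one_div_lt (sub_pos.2 ht.2)
          exact mem_iUnion.2 ⟨n, ht.1, by linarith⟩
        refine measure_mono_null hsub (measure_iUnion_null fun n => ?_)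
        rcases le_or_gt (b - 1/((n:ℝ)+1)) a with h | h
        · rw [Ioc_eq_empty (not_lt.2 h)]
          exact measure_empty
        · refine hIoc _ (hmem _ h ?_)
          have : (0:ℝ) < 1/((n:ℝ)+1) := by positivity
          linarith
      by_cases hbS : b ∈ S
      · have hPS : P S ≤ P (Ioc a b) := by
          refine measure_mono fun s hs => ⟨hs.1, le_csSup hbdd hs⟩
        rw [hIoc b hbS] at hPS
        exact le_antisymm hPS zero_le
      · have hsub2 : S ⊆ Ioo a b := by
          intro s hs
          exact ⟨hs.1, lt_of_le_of_ne (le_csSup hbdd hs) (fun h => hbS (h ▸ hs))⟩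
        exact measure_mono_null hsub2 hIoo
    · have hall : ∀ t, a < t → t ∈ S := by
        intro t ht
        obtain ⟨s, hs, hts⟩ := not_bddAbove_iff.1 hbdd t
        exact hdown s hs t ht hts.le
      have hsub : S ⊆ ⋃ n : ℕ, Ioc a (a + (n:ℝ) + 1) := by
        intro s hs
        obtain ⟨n, hn⟩ := exists_nat_ge (s - a)
        exact mem_iUnion.2 ⟨n, hs.1, by linarith⟩
      refine measure_mono_null hsub (measure_iUnion_null fun n => ?_)
      refine hIoc _ (hall _ ?_)
      have : (0:ℝ) ≤ (n:ℝ) := Nat.cast_nonneg n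
      linarith
  · rw [not_nonempty_iff_eq_empty] at hne
    rw [hne]
    exact measure_empty

lemma Hfun_eq_zero_of_ties {x s : ℝ} (hFL : x ≤ FL P s) (hD : DD P s ≠ 0) :
    Hfun P x s = 0 := by
  have hFFeq := FF_eq P s
  have hDpos : 0 < DD P s := lt_of_le_of_ne (DD_nonneg P s) (Ne.symm hD)
  have hnum : x - FF P s + DD P s ≤ 0 := by linarith
  have hdiv : (x - FF P s + DD P s) / DD P s ≤ 0 := div_nonpos_of_nonpos_of_nonneg hnum hDpos.le
  simp [Hfun, hD, max_eq_left hdiv]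

lemma FF_le_one [IsProbabilityMeasure P] (s : ℝ) : FF P s ≤ 1 := by
  have h := prob_le_one (μ := P) (s := Iic s)
  have := ENNReal.toReal_mono (by simp) h
  simpa [FF] using this

/-! ### The PIT lemma: integrating `Hfun P x` against `P` itself gives `x`. -/

lemma pit [IsProbabilityMeasure P] {x : ℝ} (hx0 : 0 ≤ x) (hx1 : x ≤ 1) :
    ∫ s, Hfun P x s ∂P = x := by
  by_cases hA : ∃ a, DD P a ≠ 0 ∧ FL P a ≤ x ∧ x ≤ FF P a
  · obtain ⟨a, hDa, hFLa, hFFa⟩ := hA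
    have hD : 0 < DD P a := lt_of_le_of_ne (DD_nonneg P a) (Ne.symm hDa)
    set r : ℝ := (x - FL P a) / DD P a with hr
    have hpt : ∀ s, Hfun P x s =
        (Iio a).indicator (fun _ => (1:ℝ)) s + ({a} : Set ℝ).indicator (fun _ => r) s
          + (Ioi a).indicator (Hfun P x) s := by
      intro s
      rcases lt_trichotomy s a with h | h | h
      · have h1 : FF P s ≤ x := le_trans (FF_le_FL_of_lt P h) hFLa
        rw [Hfun_eq_one P h1, indicator_of_mem (by exact h : s ∈ Iio a),
          indicator_of_notMem (by simpa using ne_of_lt h),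
          indicator_of_notMem (by simpa using not_lt.2 h.le)]
        norm_num
      · subst h
        have hval : Hfun P x s = r := by
          have hnum : x - FF P s + DD P s = x - FL P s := by rw [FF_eq]; ring
          have h0 : 0 ≤ (x - FL P s)/DD P s := div_nonneg (by linarith) hD.le
          have h1 : (x - FL P s)/DD P s ≤ 1 := by
            rw [div_le_one hD]
            have := FF_eq P s
            linarith
          rw [Hfun, if_neg hDa, hnum, max_eq_right h0, min_eq_right h1, hr]
        rw [hval, indicator_of_notMem (by simp : ¬ s ∈ Iio s),
          indicator_of_mem (by simp : s ∈ ({s} : Set ℝ)),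
          indicator_of_notMem (by simp : ¬ s ∈ Ioi s)]
        ring
      · rw [indicator_of_notMem (by simpa using not_lt.2 h.le),
          indicator_of_notMem (by simpa using (ne_of_gt h)),
          indicator_of_mem (by exact h : s ∈ Ioi a)]
        ring
    have hint1 : Integrable ((Iio a).indicator (fun _ => (1:ℝ))) P :=
      (integrable_const 1).indicator measurableSet_Iio
    have hint2 : Integrable (({a}:Set ℝ).indicator (fun _ => r)) P :=
      (integrable_const r).indicator (measurableSet_singleton a)
    have hint3 : Integrable ((Ioi a).indicator (Hfun P x)) P :=
      (integrable_Hfun P P x).indicator measurableSet_Ioi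
    have hint12 : Integrable (fun s => (Iio a).indicator (fun _ => (1:ℝ)) s
        + ({a} : Set ℝ).indicator (fun _ => r) s) P := hint1.add hint2
    have h3 : ∫ s, (Ioi a).indicator (Hfun P x) s ∂P = 0 := by
      rw [integral_indicator measurableSet_Ioi]
      have hnull := measure_flat_null P a
      have hae : ∀ᵐ s ∂(P.restrict (Ioi a)), Hfun P x s = 0 := by
        rw [ae_restrict_iff' measurableSet_Ioi, ae_iff]
        refine measure_mono_null ?_ hnull
        intro s hs
        simp only [mem_setOf_eq, not_forall] at hs
        obtain ⟨h1, h2⟩ := hs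
        refine ⟨h1, ?_⟩
        have hFLs : x ≤ FL P s := le_trans hFFa (FF_le_FL_of_lt P h1)
        by_cases hDs : DD P s = 0
        · have hFFs : FF P s ≤ x := by
            by_contra hgt
            exact h2 (by simp [Hfun, hDs, hgt])
          have : FF P s ≤ FF P a := le_trans hFFs hFFa
          exact (ENNReal.toReal_le_toReal (measure_ne_top _ _) (measure_ne_top _ _)).1 this
        · exact absurd (Hfun_eq_zero_of_ties P hFLs hDs) h2
      calc ∫ s in Ioi a, Hfun P x s ∂P = ∫ s in Ioi a, (0:ℝ) ∂P :=
            integral_congr_ae (hae.mono fun s hs => hs)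
        _ = 0 := by simp
    calc ∫ s, Hfun P x s ∂P
        = ∫ s, ((Iio a).indicator (fun _ => (1:ℝ)) s + ({a} : Set ℝ).indicator (fun _ => r) s
            + (Ioi a).indicator (Hfun P x) s) ∂P := by
          exact integral_congr_ae (Eventually.of_forall hpt)
      _ = (P (Iio a)).toReal * 1 + (P {a}).toReal * r + 0 := by
          rw [integral_add hint12 hint3, integral_add hint1 hint2,
            integral_indicator_const (1:ℝ) measurableSet_Iio,
            integral_indicator_const r (measurableSet_singleton a), h3]
          simp [smul_eq_mul]; rfl
      _ = x := by
          have hDD : DD P a * r = x - FL P a := by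
            rw [hr, mul_comm, div_mul_cancel₀ _ (ne_of_gt hD)]
          have h1 : (P (Iio a)).toReal = FL P a := rfl
          have h2 : (P {a}).toReal = DD P a := rfl
          rw [h1, h2]
          linarith
  · push_neg at hA
    have hpt : ∀ s, Hfun P x s = ({t | FF P t ≤ x}).indicator (fun _ => (1:ℝ)) s := by
      intro s
      by_cases hs : FF P s ≤ x
      · rw [Hfun_eq_one P hs, indicator_of_mem (show s ∈ {t | FF P t ≤ x} from hs)]
      · rw [indicator_of_notMem (show s ∉ {t | FF P t ≤ x} from hs)]
        by_cases hD : DD P s = 0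
        · simp [Hfun, hD, hs]
        · have hFL : x < FL P s := by
            by_contra hle
            push_neg at hle
            exact hs (hA s hD hle).le
          exact Hfun_eq_zero_of_FL P hFL
    have hAmeas : MeasurableSet {t | FF P t ≤ x} := (measurable_FF P) measurableSet_Iic
    have hcalc : ∫ s, Hfun P x s ∂P = (P {t | FF P t ≤ x}).toReal := by
      calc ∫ s, Hfun P x s ∂P
          = ∫ s, ({t | FF P t ≤ x}).indicator (fun _ => (1:ℝ)) s ∂P :=
            integral_congr_ae (Eventually.of_forall hpt)
        _ = (P {t | FF P t ≤ x}).toReal := by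
            rw [integral_indicator_const (1:ℝ) hAmeas]; simp; rfl
    rw [hcalc]
    by_cases hne : ({t | FF P t ≤ x}).Nonempty
    · by_cases hbdd : BddAbove {t | FF P t ≤ x}
      · set a := sSup {t | FF P t ≤ x} with hadef
        have hFLa : FL P a ≤ x := by
          refine FL_le_of_forall_lt P (fun t ht => ?_)
          obtain ⟨z, hz, htz⟩ := exists_lt_of_lt_csSup hne ht
          exact le_trans (FF_mono P htz.le) hz
        have hxFa : x ≤ FF P a := by
          refine le_FF_of_forall_gt P (fun t ht => ?_)
          by_contra hle
          push_neg at hle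
          exact absurd (le_csSup hbdd (hle : t ∈ {t | FF P t ≤ x})) (not_le.2 ht)
        have hFax : FF P a ≤ x := by
          by_contra hgt
          push_neg at hgt
          have hD : DD P a ≠ 0 := by
            intro h0
            have := FF_eq P a
            rw [h0, add_zero] at this
            linarith
          linarith [hA a hD hFLa]
        have hFax' : FF P a = x := le_antisymm hFax hxFa
        have hAeq : {t | FF P t ≤ x} = Iic a := by
          ext t
          constructor
          · exact fun ht => le_csSup hbdd ht
          · intro ht
            exact le_trans (FF_mono P ht) hFax
        rw [hAeq]
        exact hFax'
      · have hall : ∀ s, FF P s ≤ x := by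
          intro s
          obtain ⟨t, ht, hst⟩ := not_bddAbove_iff.1 hbdd s
          exact le_trans (FF_mono P hst.le) ht
        have hx1' : 1 ≤ x := one_le_of_forall_FF_le P hall
        have hAuniv : {t | FF P t ≤ x} = univ := eq_univ_of_forall hall
        rw [hAuniv]
        simp [measure_univ]
        linarith
    · have hall : ∀ s, x < FF P s := by
        intro s
        by_contra hc
        push_neg at hc
        exact hne ⟨s, hc⟩
      have hx0' : x ≤ 0 := nonpos_of_forall_lt_FF P hall
      have hxz : x = 0 := le_antisymm hx0' hx0
      rw [not_nonempty_iff_eq_empty.1 hne]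
      simp [hxz]

/-! ### Backward direction -/

lemma FF_eq_of_q (Q : Measure ℝ) [IsProbabilityMeasure P] [IsProbabilityMeasure Q]
    (hq : ∀ x, 0 ≤ x → x ≤ 1 → ∫ s, Hfun P x s ∂Q = x) (s₀ : ℝ) :
    FF Q s₀ = FF P s₀ := by
  have hE : ∀ x, 0 ≤ x → x ≤ 1 → Q {s | FF P s = x ∧ DD P s = 0} = 0 := by
    intro x hx0 hx1
    set E := {s | FF P s = x ∧ DD P s = 0} with hEdef
    have hEmeas : MeasurableSet E := by
      have : E = (FF P) ⁻¹' {x} ∩ (DD P) ⁻¹' {0} := rfl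
      rw [this]
      exact ((measurable_FF P) (measurableSet_singleton x)).inter
        ((measurable_DD P) (measurableSet_singleton 0))
    have hind : ∀ x', 0 ≤ x' → x' < x → (Q E).toReal ≤ x - x' := by
      intro x' h0 hlt
      have hple : ∀ s, E.indicator (fun _ => (1:ℝ)) s + Hfun P x' s ≤ Hfun P x s := by
        intro s
        by_cases hs : s ∈ E
        · rw [indicator_of_mem hs]
          have h1 : Hfun P x s = 1 := Hfun_eq_one P (le_of_eq hs.1)
          have h2 : Hfun P x' s = 0 := by
            have hne : ¬ FF P s ≤ x' := by rw [hs.1]; linarith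
            simp [Hfun, hs.2, hne]
          rw [h1, h2]
          norm_num
        · rw [indicator_of_notMem hs, zero_add]
          exact Hfun_mono P s hlt.le
      have hi1 : Integrable (E.indicator (fun _ => (1:ℝ))) Q :=
        (integrable_const 1).indicator hEmeas
      have hi2 := integrable_Hfun P Q x'
      have hi12 : Integrable (fun s => E.indicator (fun _ => (1:ℝ)) s + Hfun P x' s) Q :=
        hi1.add hi2
      have hmono := integral_mono hi12 (integrable_Hfun P Q x) (fun s => hple s)
      rw [integral_add hi1 hi2, integral_indicator_const (1:ℝ) hEmeas,
        hq x' h0 (by linarith), hq x hx0 hx1] at hmono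
      simp only [smul_eq_mul, mul_one, measureReal_def] at hmono
      linarith
    have hQE0 : (Q E).toReal ≤ 0 := by
      rcases eq_or_lt_of_le hx0 with hxz | hxpos
      · have hple : ∀ s, E.indicator (fun _ => (1:ℝ)) s ≤ Hfun P x s := by
          intro s
          by_cases hs : s ∈ E
          · rw [indicator_of_mem hs, Hfun_eq_one P (le_of_eq hs.1)]
          · rw [indicator_of_notMem hs]
            exact Hfun_nonneg P x s
        have hmono := integral_mono ((integrable_const 1).indicator hEmeas)
          (integrable_Hfun P Q x) hple
        rw [integral_indicator_const (1:ℝ) hEmeas, hq x hx0 hx1] at hmono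
        simp only [smul_eq_mul, mul_one, measureReal_def] at hmono
        rw [← hxz] at hmono
        linarith
      · by_contra hpos
        push_neg at hpos
        have hlt : max 0 (x - (Q E).toReal/2) < x := max_lt hxpos (by linarith)
        have h1 := hind _ (le_max_left _ _) hlt
        have h2 : x - (Q E).toReal/2 ≤ max 0 (x - (Q E).toReal/2) := le_max_right _ _
        linarith
    have h1 : (Q E).toReal = 0 := le_antisymm hQE0 ENNReal.toReal_nonneg
    exact ((ENNReal.toReal_eq_zero_iff _).1 h1).resolve_right (measure_ne_top _ _)
  have hx0 : 0 ≤ FF P s₀ := FF_nonneg P s₀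
  have hx1 : FF P s₀ ≤ 1 := FF_le_one P s₀
  set x := FF P s₀ with hxdef
  set E' := {s | s₀ < s ∧ (FF P s = x ∧ DD P s = 0)} with hE'def
  have hE'meas : MeasurableSet E' := by
    have : E' = Ioi s₀ ∩ ((FF P) ⁻¹' {x} ∩ (DD P) ⁻¹' {0}) := rfl
    rw [this]
    exact measurableSet_Ioi.inter (((measurable_FF P) (measurableSet_singleton x)).inter
      ((measurable_DD P) (measurableSet_singleton 0)))
  have hpt : ∀ s, Hfun P x s =
      (Iic s₀).indicator (fun _ => (1:ℝ)) s + E'.indicator (fun _ => (1:ℝ)) s := by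
    intro s
    rcases le_or_gt s s₀ with h | h
    · rw [Hfun_eq_one P (FF_mono P h), indicator_of_mem (show s ∈ Iic s₀ from h),
        indicator_of_notMem (show s ∉ E' from fun hc => absurd hc.1 (not_lt.2 h))]
      norm_num
    · rw [indicator_of_notMem (show s ∉ Iic s₀ from not_le.2 h), zero_add]
      have hFL : x ≤ FL P s := FF_le_FL_of_lt P h
      by_cases hD : DD P s = 0
      · by_cases hFFx : FF P s = x
        · rw [Hfun_eq_one P hFFx.le, indicator_of_mem (show s ∈ E' from ⟨h, hFFx, hD⟩)]
        · have hgt : ¬ FF P s ≤ x := by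
            have := FL_le_FF P s
            intro hle
            exact hFFx (le_antisymm hle (le_trans hFL this))
          rw [indicator_of_notMem (show s ∉ E' from fun hc => hFFx hc.2.1)]
          simp [Hfun, hD, hgt]
      · rw [Hfun_eq_zero_of_ties P hFL hD,
          indicator_of_notMem (show s ∉ E' from fun hc => hD hc.2.2)]
  have hq' := hq x hx0 hx1
  have hi1 : Integrable ((Iic s₀).indicator (fun _ => (1:ℝ))) Q :=
    (integrable_const 1).indicator measurableSet_Iic
  have hi2 : Integrable (E'.indicator (fun _ => (1:ℝ))) Q :=
    (integrable_const 1).indicator hE'meas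
  have hcalc : ∫ s, Hfun P x s ∂Q = (Q (Iic s₀)).toReal + (Q E').toReal := by
    calc ∫ s, Hfun P x s ∂Q
        = ∫ s, ((Iic s₀).indicator (fun _ => (1:ℝ)) s + E'.indicator (fun _ => (1:ℝ)) s) ∂Q :=
          integral_congr_ae (Eventually.of_forall hpt)
      _ = (Q (Iic s₀)).toReal + (Q E').toReal := by
          rw [integral_add hi1 hi2, integral_indicator_const (1:ℝ) measurableSet_Iic,
            integral_indicator_const (1:ℝ) hE'meas]
          simp; rfl
  have hQE' : Q E' = 0 :=
    measure_mono_null (fun s hs => hs.2) (hE x hx0 hx1)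
  rw [hcalc, hQE'] at hq'
  simp only [ENNReal.toReal_zero, add_zero] at hq'
  exact hq' 

/-! ### Forward direction -/

lemma q_eq_of_FF_eq (Q : Measure ℝ) [IsProbabilityMeasure P] [IsProbabilityMeasure Q]
    (h : ∀ s, FF P s = FF Q s) {x : ℝ} (hx0 : 0 ≤ x) (hx1 : x ≤ 1) :
    ∫ s, Hfun P x s ∂Q = x := by
  have hIic : ∀ s, P (Iic s) = Q (Iic s) := fun s =>
    (ENNReal.toReal_eq_toReal_iff' (measure_ne_top _ _) (measure_ne_top _ _)).1 (h s)
  have hmono : ∀ a : ℝ, Monotone (fun n : ℕ => Iic (a - 1/((n:ℝ)+1))) := by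
    intro a n m hnm
    apply Iic_subset_Iic.2
    have h1 : (0:ℝ) < n + 1 := by positivity
    have h2 : (n:ℝ) + 1 ≤ (m:ℝ) + 1 := by exact_mod_cast by omega
    have := one_div_le_one_div_of_le h1 h2
    linarith
  have hU : ∀ a : ℝ, (⋃ n : ℕ, Iic (a - 1/((n:ℝ)+1))) = Iio a := by
    intro a
    ext t
    simp only [mem_iUnion, mem_Iic, mem_Iio]
    constructor
    · rintro ⟨n, hn⟩
      have : (0:ℝ) < 1/((n:ℝ)+1) := by positivity
      linarith
    · intro ht
      obtain ⟨n, hn⟩ := exists_nat_one_div_lt (sub_pos.2 ht)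
      exact ⟨n, by linarith⟩
  have hIio : ∀ s, P (Iio s) = Q (Iio s) := by
    intro s
    rw [← hU s, ((hmono s).directed_le).measure_iUnion,
      ((hmono s).directed_le).measure_iUnion]
    exact iSup_congr fun n => hIic _
  have hsing : ∀ s, P {s} = Q {s} := by
    intro s
    have hd : ({s} : Set ℝ) = Iic s \ Iio s := by rw [Iic_sdiff_Iio_same]
    rw [hd, measure_diff Iio_subset_Iic_self measurableSet_Iio.nullMeasurableSet
        (measure_ne_top _ _),
      measure_diff Iio_subset_Iic_self measurableSet_Iio.nullMeasurableSet
        (measure_ne_top _ _), hIic, hIio]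
  have hH : Hfun P = Hfun Q := by
    funext x' s
    unfold Hfun FF DD
    rw [hIic, hsing]
  rw [hH]
  exact pit Q hx0 hx1

/-! ### Bridging lemma: indicator integrals as measures of the pushforward -/

lemma integral_ite_eq_map {Θ : Type*} [MeasurableSpace Θ] (lΘ : Measure Θ)
    (g : Θ → ℝ) (hg : Measurable g) (w : Θ → ℝ) (hw : Measurable w)
    (hw0 : ∀ θ, 0 ≤ w θ) {S : Set ℝ} (hS : MeasurableSet S) :
    ∫ θ, (g ⁻¹' S).indicator w θ ∂lΘ
      = (((lΘ.withDensity fun θ => ENNReal.ofReal (w θ)).map g) S).toReal := by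
  rw [Measure.map_apply hg hS]
  rw [integral_indicator (hg hS), withDensity_apply _ (hg hS),
    integral_eq_lintegral_of_nonneg_ae (Eventually.of_forall hw0) hw.aestronglyMeasurable]

end SBCAux

end SBCAuxSec

namespace SBC

variable {Θ Y : Type*} [MeasurableSpace Θ] [MeasurableSpace Y]

theorem characterization_of_SBC_failures
    (lΘ : Measure Θ) (lY : Measure Y) [SigmaFinite lΘ] [SigmaFinite lY]
    (prior : Θ → ℝ) (obs : Y → Θ → ℝ) (φ f : Θ → Y → ℝ)
    (hprior_meas : Measurable prior) (hprior_nonneg : ∀ θ, 0 ≤ prior θ)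
    (hprior_int : ∫ θ, prior θ ∂lΘ = 1)
    (hobs_meas : Measurable (Function.uncurry obs))
    (hobs_nonneg : ∀ (y : Y) (θ : Θ), 0 ≤ obs y θ)
    (hobs_int : ∀ θ, ∫ y, obs y θ ∂lY = 1)
    (hmarg_pos : ∀ y, 0 < marg lΘ prior obs y)
    (hφ_meas : Measurable (Function.uncurry φ))
    (hφ_nonneg : ∀ (θ : Θ) (y : Y), 0 ≤ φ θ y)
    (hφ_int : ∀ y, ∫ θ, φ θ y ∂lΘ = 1)
    (hf_meas : Measurable (Function.uncurry f))
    (y : Y) :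
    (∀ s : ℝ, Cdf lΘ φ f s y = Cdf lΘ (post lΘ prior obs) f s y)
      ↔ (∀ x ∈ Set.Icc (0 : ℝ) 1, qfun lΘ prior obs φ f x y = x) := by
  classical
  have hg_meas : Measurable fun θ => f θ y :=
    hf_meas.comp (measurable_id.prodMk measurable_const)
  have hw_meas : Measurable fun θ => φ θ y :=
    hφ_meas.comp (measurable_id.prodMk measurable_const)
  have hw_nonneg : ∀ θ, 0 ≤ φ θ y := fun θ => hφ_nonneg θ y
  have hw_int : Integrable (fun θ => φ θ y) lΘ := by
    by_contra h
    have h0 : ∫ θ, φ θ y ∂lΘ = 0 := integral_undef h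
    rw [hφ_int y] at h0
    exact one_ne_zero h0
  have hc : 0 < marg lΘ prior obs y := hmarg_pos y
  have hobs_y_meas : Measurable fun θ => obs y θ :=
    hobs_meas.comp (measurable_const.prodMk measurable_id)
  have hp_meas : Measurable fun θ => post lΘ prior obs θ y := by
    unfold post
    exact (hobs_y_meas.mul hprior_meas).div_const _
  have hp_nonneg : ∀ θ, 0 ≤ post lΘ prior obs θ y := fun θ =>
    div_nonneg (mul_nonneg (hobs_nonneg y θ) (hprior_nonneg θ)) hc.le
  have hop_int : Integrable (fun θ => obs y θ * prior θ) lΘ := by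
    by_contra h
    have h0 : marg lΘ prior obs y = 0 := integral_undef h
    exact absurd h0 (ne_of_gt hc)
  have hp_int : Integrable (fun θ => post lΘ prior obs θ y) lΘ := by
    unfold post
    exact hop_int.div_const _
  have hp_one : ∫ θ, post lΘ prior obs θ y ∂lΘ = 1 := by
    unfold post
    rw [integral_div]
    exact div_self (ne_of_gt hc)
  -- the two probability measures on Θ
  haveI hν_prob : IsProbabilityMeasure
      (lΘ.withDensity fun θ => ENNReal.ofReal (φ θ y)) := by
    constructor
    rw [withDensity_apply _ MeasurableSet.univ, setLIntegral_univ,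
      ← ofReal_integral_eq_lintegral_ofReal hw_int (Eventually.of_forall hw_nonneg),
      hφ_int y, ENNReal.ofReal_one]
  haveI hμ_prob : IsProbabilityMeasure
      (lΘ.withDensity fun θ => ENNReal.ofReal (post lΘ prior obs θ y)) := by
    constructor
    rw [withDensity_apply _ MeasurableSet.univ, setLIntegral_univ,
      ← ofReal_integral_eq_lintegral_ofReal hp_int (Eventually.of_forall hp_nonneg),
      hp_one, ENNReal.ofReal_one]
  -- pushforward measures on ℝ
  set P : Measure ℝ :=
    (lΘ.withDensity fun θ => ENNReal.ofReal (φ θ y)).map (fun θ => f θ y) with hPdef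
  set Q : Measure ℝ :=
    (lΘ.withDensity fun θ => ENNReal.ofReal (post lΘ prior obs θ y)).map
      (fun θ => f θ y) with hQdef
  haveI hP_prob : IsProbabilityMeasure P := Measure.isProbabilityMeasure_map hg_meas.aemeasurable
  haveI hQ_prob : IsProbabilityMeasure Q := Measure.isProbabilityMeasure_map hg_meas.aemeasurable
  -- translation of Cdf/Dtie into CDF data of P and Q
  have hCdfP : ∀ s, Cdf lΘ φ f s y = SBCAux.FF P s := by
    intro s
    have h1 : Cdf lΘ φ f s y
        = ∫ θ, ((fun θ => f θ y) ⁻¹' Set.Iic s).indicator (fun θ => φ θ y) θ ∂lΘ := by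
      unfold Cdf
      refine integral_congr_ae (Eventually.of_forall fun θ => ?_)
      by_cases h : f θ y ≤ s
      · simp [Set.indicator_apply, h]
      · simp [Set.indicator_apply, h]
    rw [h1, SBCAux.integral_ite_eq_map lΘ _ hg_meas _ hw_meas hw_nonneg measurableSet_Iic]
    rfl
  have hDtieP : ∀ s, Dtie lΘ φ f s y = SBCAux.DD P s := by
    intro s
    have h1 : Dtie lΘ φ f s y
        = ∫ θ, ((fun θ => f θ y) ⁻¹' {s}).indicator (fun θ => φ θ y) θ ∂lΘ := by
      unfold Dtie
      refine integral_congr_ae (Eventually.of_forall fun θ => ?_)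
      by_cases h : f θ y = s
      · simp [Set.indicator_apply, h]
      · simp [Set.indicator_apply, h]
    rw [h1, SBCAux.integral_ite_eq_map lΘ _ hg_meas _ hw_meas hw_nonneg
      (measurableSet_singleton s)]
    rfl
  have hCdfQ : ∀ s, Cdf lΘ (post lΘ prior obs) f s y = SBCAux.FF Q s := by
    intro s
    have h1 : Cdf lΘ (post lΘ prior obs) f s y
        = ∫ θ, ((fun θ => f θ y) ⁻¹' Set.Iic s).indicator
            (fun θ => post lΘ prior obs θ y) θ ∂lΘ := by
      unfold Cdf
      refine integral_congr_ae (Eventually.of_forall fun θ => ?_)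
      by_cases h : f θ y ≤ s
      · simp [Set.indicator_apply, h]
      · simp [Set.indicator_apply, h]
    rw [h1, SBCAux.integral_ite_eq_map lΘ _ hg_meas _ hp_meas hp_nonneg measurableSet_Iic]
    rfl
  -- contRank is Hfun of P
  have hrank : ∀ (x : ℝ) (θt : Θ),
      contRank lΘ φ f x θt y = SBCAux.Hfun P x (f θt y) := by
    intro x θt
    unfold contRank SBCAux.Hfun
    rw [hCdfP (f θt y), hDtieP (f θt y)]
  -- qfun is the integral of Hfun P against Q
  have hqfun : ∀ x : ℝ, qfun lΘ prior obs φ f x y = ∫ s, SBCAux.Hfun P x s ∂Q := by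
    intro x
    have h1 : qfun lΘ prior obs φ f x y
        = ∫ θ, SBCAux.Hfun P x (f θ y) * post lΘ prior obs θ y ∂lΘ := by
      unfold qfun
      refine integral_congr_ae (Eventually.of_forall fun θ => ?_)
      show contRank lΘ φ f x θ y * post lΘ prior obs θ y
        = SBCAux.Hfun P x (f θ y) * post lΘ prior obs θ y
      rw [hrank]
    rw [h1, hQdef, integral_map hg_meas.aemeasurable
      (SBCAux.measurable_Hfun P x).aestronglyMeasurable]
    have hdens : (fun θ => ENNReal.ofReal (post lΘ prior obs θ y))
        = fun θ => ((Real.toNNReal (post lΘ prior obs θ y) : NNReal) : ENNReal) := rfl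
    rw [hdens, integral_withDensity_eq_integral_smul
      (hp_meas.real_toNNReal) (fun s => SBCAux.Hfun P x (f s y))]
    refine integral_congr_ae (Eventually.of_forall fun θ => ?_)
    show SBCAux.Hfun P x (f θ y) * post lΘ prior obs θ y
      = Real.toNNReal (post lΘ prior obs θ y) • SBCAux.Hfun P x (f θ y)
    rw [NNReal.smul_def, Real.coe_toNNReal _ (hp_nonneg θ), smul_eq_mul]
    ring
  constructor
  · intro hC x hx
    rw [hqfun x]
    refine SBCAux.q_eq_of_FF_eq P Q ?_ hx.1 hx.2
    intro s
    rw [← hCdfP s, ← hCdfQ s]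
    exact hC s
  · intro hq s
    have h := SBCAux.FF_eq_of_q P Q
      (fun x hx0 hx1 => by rw [← hqfun x]; exact hq x ⟨hx0, hx1⟩) s
    rw [hCdfP s, hCdfQ s]
    exact h.symm


end SBC
end
end

section
/- (Key inequality in the proof of Theorem 6: stochastic dominance of the density ratio.) Fix y ∈ Y and assume φ(θ|y) > 0 for λ_Θ-a.e. θ, and set g(θ,y) := π_post(θ|y)/φ(θ|y). Then for every s ∈ ℝ one has C_{φ,g}(s|y) ≥ C_g(s|y), i.e. ∫_Θ 1[g(θ,y) ≤ s] φ(θ|y) dλ_Θ(θ) ≥ ∫_Θ 1[g(θ,y) ≤ s] π_post(θ|y) dλ_Θ(θ). Moreover, equality holds for every s ∈ ℝ if and only if φ(θ|y) = π_post(θ|y) for λ_Θ-a.e. θ. -/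
open MeasureTheory Filter Topology

noncomputable section

namespace SBC

variable {Θ Y : Type*} [MeasurableSpace Θ] [MeasurableSpace Y]

theorem density_ratio_stochastic_dominance
    (lΘ : Measure Θ) (lY : Measure Y) [SigmaFinite lΘ] [SigmaFinite lY]
    (prior : Θ → ℝ) (obs : Y → Θ → ℝ) (φ f : Θ → Y → ℝ)
    (hprior_meas : Measurable prior) (hprior_nonneg : ∀ θ, 0 ≤ prior θ)
    (hprior_int : ∫ θ, prior θ ∂lΘ = 1)
    (hobs_meas : Measurable (Function.uncurry obs))
    (hobs_nonneg : ∀ (y : Y) (θ : Θ), 0 ≤ obs y θ)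
    (hobs_int : ∀ θ, ∫ y, obs y θ ∂lY = 1)
    (hmarg_pos : ∀ y, 0 < marg lΘ prior obs y)
    (hφ_meas : Measurable (Function.uncurry φ))
    (hφ_nonneg : ∀ (θ : Θ) (y : Y), 0 ≤ φ θ y)
    (hφ_int : ∀ y, ∫ θ, φ θ y ∂lΘ = 1)
    (hf_meas : Measurable (Function.uncurry f))
    (y : Y) (hφ_pos : ∀ᵐ θ ∂lΘ, 0 < φ θ y) :
    (∀ s : ℝ,
      Cdf lΘ (post lΘ prior obs)
          (fun θ y' => post lΘ prior obs θ y' / φ θ y') s y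
        ≤ Cdf lΘ φ (fun θ y' => post lΘ prior obs θ y' / φ θ y') s y)
    ∧ ((∀ s : ℝ,
          Cdf lΘ φ (fun θ y' => post lΘ prior obs θ y' / φ θ y') s y
            = Cdf lΘ (post lΘ prior obs)
                (fun θ y' => post lΘ prior obs θ y' / φ θ y') s y)
        ↔ (∀ᵐ θ ∂lΘ, φ θ y = post lΘ prior obs θ y)) := by
  classical
  set m : ℝ := marg lΘ prior obs y with hm
  set P : Θ → ℝ := fun θ => post lΘ prior obs θ y with hP
  set F : Θ → ℝ := fun θ => φ θ y with hF
  set G : Θ → ℝ := fun θ => P θ / F θ with hG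
  have hmpos : 0 < m := hmarg_pos y
  have hobsy_meas : Measurable (fun θ => obs y θ) :=
    hobs_meas.comp (measurable_const.prodMk measurable_id)
  have hPmeas : Measurable P := ((hobsy_meas.mul hprior_meas).div_const m)
  have hFmeas : Measurable F :=
    hφ_meas.comp (measurable_id.prodMk measurable_const)
  have hGmeas : Measurable G := hPmeas.div hFmeas
  have hPnn : ∀ θ, 0 ≤ P θ := fun θ =>
    div_nonneg (mul_nonneg (hobs_nonneg y θ) (hprior_nonneg θ)) hmpos.le
  have hFnn : ∀ θ, 0 ≤ F θ := fun θ => hφ_nonneg θ y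
  have hop_int : Integrable (fun θ => obs y θ * prior θ) lΘ := by
    by_contra h
    have := hmarg_pos y
    rw [marg, integral_undef h] at this
    exact lt_irrefl 0 this
  have hPint : Integrable P lΘ := hop_int.div_const m
  have hPint1 : ∫ θ, P θ ∂lΘ = 1 := by
    simp only [hP, post, ← hm]
    rw [integral_div]
    exact div_self hmpos.ne'
  have hFint : Integrable F lΘ := by
    by_contra h
    have := hφ_int y
    rw [integral_undef h] at this
    exact zero_ne_one this
  have hFint1 : ∫ θ, F θ ∂lΘ = 1 := hφ_int y
  have hPG : ∀ᵐ θ ∂lΘ, P θ = G θ * F θ := by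
    filter_upwards [hφ_pos] with θ hθ
    exact (div_mul_cancel₀ _ (ne_of_gt hθ)).symm
  -- integrability of indicator integrands
  have hind_int : ∀ (s : ℝ) (h : Θ → ℝ), Measurable h → Integrable h lΘ →
      (∀ θ, 0 ≤ h θ) → Integrable (fun θ => if G θ ≤ s then h θ else 0) lΘ := by
    intro s h hmeas hint hnn
    refine hint.mono' ((hmeas.ite (hGmeas measurableSet_Iic) measurable_const)).aestronglyMeasurable
      (Filter.Eventually.of_forall fun θ => ?_)
    by_cases hc : G θ ≤ s <;> simp [hc, abs_of_nonneg (hnn θ), hnn θ]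
  have hindc_int : ∀ (s : ℝ) (h : Θ → ℝ), Measurable h → Integrable h lΘ →
      (∀ θ, 0 ≤ h θ) → Integrable (fun θ => if G θ ≤ s then 0 else h θ) lΘ := by
    intro s h hmeas hint hnn
    refine hint.mono' ((measurable_const.ite (hGmeas measurableSet_Iic) hmeas)).aestronglyMeasurable
      (Filter.Eventually.of_forall fun θ => ?_)
    by_cases hc : G θ ≤ s <;> simp [hc, abs_of_nonneg (hnn θ), hnn θ]
  -- the main inequality
  have key : ∀ s : ℝ, (∫ θ, (if G θ ≤ s then P θ else 0) ∂lΘ)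
      ≤ ∫ θ, (if G θ ≤ s then F θ else 0) ∂lΘ := by
    intro s
    rcases le_or_gt s 1 with hs | hs
    · refine integral_mono_ae (hind_int s P hPmeas hPint hPnn)
        (hind_int s F hFmeas hFint hFnn) ?_
      filter_upwards [hPG] with θ hθ
      by_cases hc : G θ ≤ s
      · simp only [hc, if_true]
        calc P θ = G θ * F θ := hθ
          _ ≤ s * F θ := mul_le_mul_of_nonneg_right hc (hFnn θ)
          _ ≤ F θ := mul_le_of_le_one_left (hFnn θ) hs
      · simp [hc]
    · -- s > 1 : compare on the complement
      have hsplit : ∀ (h : Θ → ℝ), Measurable h → Integrable h lΘ → (∀ θ, 0 ≤ h θ) →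
          (∫ θ, (if G θ ≤ s then h θ else 0) ∂lΘ)
            + (∫ θ, (if G θ ≤ s then 0 else h θ) ∂lΘ) = ∫ θ, h θ ∂lΘ := by
        intro h hmeas hint hnn
        rw [← integral_add (hind_int s h hmeas hint hnn) (hindc_int s h hmeas hint hnn)]
        refine integral_congr_ae (Filter.Eventually.of_forall fun θ => ?_)
        by_cases hc : G θ ≤ s <;> simp [hc]
      have hsF := hsplit F hFmeas hFint hFnn
      have hsP := hsplit P hPmeas hPint hPnn
      rw [hFint1] at hsF
      rw [hPint1] at hsP
      have hcomp : (∫ θ, (if G θ ≤ s then 0 else F θ) ∂lΘ)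
          ≤ ∫ θ, (if G θ ≤ s then 0 else P θ) ∂lΘ := by
        refine integral_mono_ae (hindc_int s F hFmeas hFint hFnn)
          (hindc_int s P hPmeas hPint hPnn) ?_
        filter_upwards [hPG] with θ hθ
        by_cases hc : G θ ≤ s
        · simp [hc]
        · simp only [hc, if_false]
          push_neg at hc
          have h1G : 1 ≤ G θ := le_of_lt (lt_trans hs hc)
          calc F θ ≤ G θ * F θ := le_mul_of_one_le_left (hFnn θ) h1G
            _ = P θ := hθ.symm
      linarith
  refine ⟨fun s => key s, ?_, ?_⟩
  · -- equality for all s implies φ = post a.e.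
    intro heq
    -- for each n, a.e. G > 1 - 1/(n+1)
    have hstep : ∀ n : ℕ, ∀ᵐ θ ∂lΘ, (1 : ℝ) - 1 / (n + 1) < G θ := by
      intro n
      set s : ℝ := 1 - 1 / (n + 1) with hs
      have hs1 : s < 1 := by
        rw [hs]; exact sub_lt_self 1 (by positivity)
      have heqs := heq s
      simp only [Cdf] at heqs
      -- the difference integral is zero
      have hzero : ∫ θ, ((if G θ ≤ s then F θ else 0) - (if G θ ≤ s then P θ else 0)) ∂lΘ = 0 := by
        rw [integral_sub (hind_int s F hFmeas hFint hFnn) (hind_int s P hPmeas hPint hPnn)]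
        rw [heqs]; ring
      set h' : Θ → ℝ := fun θ => if G θ ≤ s then (1 - s) * F θ else 0 with hh'
      have hh'_nn : ∀ θ, 0 ≤ h' θ := by
        intro θ
        by_cases hc : G θ ≤ s <;>
          simp [h', hc, mul_nonneg (by linarith : (0:ℝ) ≤ 1 - s) (hFnn θ)]
      have hh'_int : Integrable h' lΘ := by
        have := hind_int s (fun θ => (1 - s) * F θ) (hFmeas.const_mul _)
          (hFint.const_mul _) (fun θ => mul_nonneg (by linarith) (hFnn θ))
        exact this
      have hh'_le : ∀ᵐ θ ∂lΘ, h' θ ≤ (if G θ ≤ s then F θ else 0) - (if G θ ≤ s then P θ else 0) := by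
        filter_upwards [hPG] with θ hθ
        by_cases hc : G θ ≤ s
        · simp only [h', hc, if_true]
          have : P θ ≤ s * F θ := by
            rw [hθ]; exact mul_le_mul_of_nonneg_right hc (hFnn θ)
          nlinarith
        · simp [h', hc]
      have hint_diff : Integrable
          (fun θ => (if G θ ≤ s then F θ else 0) - (if G θ ≤ s then P θ else 0)) lΘ :=
        (hind_int s F hFmeas hFint hFnn).sub (hind_int s P hPmeas hPint hPnn)
      have hint_h'_le : ∫ θ, h' θ ∂lΘ ≤ 0 := by
        calc ∫ θ, h' θ ∂lΘ
            ≤ ∫ θ, ((if G θ ≤ s then F θ else 0) - (if G θ ≤ s then P θ else 0)) ∂lΘ :=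
              integral_mono_ae hh'_int hint_diff hh'_le
          _ = 0 := hzero
      have hint_h'_zero : ∫ θ, h' θ ∂lΘ = 0 :=
        le_antisymm hint_h'_le (integral_nonneg hh'_nn)
      have hae0 : h' =ᵐ[lΘ] 0 :=
        (integral_eq_zero_iff_of_nonneg hh'_nn hh'_int).mp hint_h'_zero
      filter_upwards [hae0, hφ_pos] with θ hθ0 hθpos
      by_contra hc
      push_neg at hc
      have hF0 : h' θ = (1 - s) * F θ := by simp [h', hc]
      rw [hF0] at hθ0
      have : (0:ℝ) < (1 - s) * F θ := mul_pos (by linarith) hθpos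
      simp only [Pi.zero_apply] at hθ0
      linarith
    have hG1 : ∀ᵐ θ ∂lΘ, (1 : ℝ) ≤ G θ := by
      have hall : ∀ᵐ θ ∂lΘ, ∀ n : ℕ, (1 : ℝ) - 1 / (n + 1) < G θ := ae_all_iff.mpr hstep
      filter_upwards [hall] with θ hθ
      have htend : Filter.Tendsto (fun n : ℕ => (1 : ℝ) - 1 / (n + 1)) atTop (𝓝 1) := by
        have := tendsto_one_div_add_atTop_nhds_zero_nat (𝕜 := ℝ)
        have h2 := (tendsto_const_nhds (x := (1:ℝ)) (f := atTop)).sub this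
        simpa using h2
      exact le_of_tendsto htend (Filter.Eventually.of_forall fun n => (hθ n).le)
    have hFP : ∀ᵐ θ ∂lΘ, F θ ≤ P θ := by
      filter_upwards [hG1, hPG] with θ h1 h2
      calc F θ ≤ G θ * F θ := le_mul_of_one_le_left (hFnn θ) h1
        _ = P θ := h2.symm
    have hzero : ∫ θ, (P θ - F θ) ∂lΘ = 0 := by
      rw [integral_sub hPint hFint, hPint1, hFint1]; ring
    have hae : (fun θ => P θ - F θ) =ᵐ[lΘ] 0 := by
      refine (integral_eq_zero_iff_of_nonneg_ae ?_ (hPint.sub hFint)).mp hzero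
      filter_upwards [hFP] with θ hθ
      simpa using hθ
    filter_upwards [hae] with θ hθ
    simp only [Pi.zero_apply] at hθ
    have : P θ = F θ := by linarith
    exact this.symm
  · -- φ = post a.e. implies equality for all s
    intro hae s
    simp only [Cdf]
    refine integral_congr_ae ?_
    filter_upwards [hae] with θ hθ
    by_cases hc : G θ ≤ s <;> simp only [hG, hP, hF] at hc ⊢ <;> simp [hc, hθ]

end SBC
end
end

section
/- (Corollary to Theorem 6: completeness of SBC with data-dependent test quantities.) Let φ be a posterior family with φ(θ|y) > 0 for all θ ∈ Θ, y ∈ Y. If ∫_Y ∫_Θ π_obs(y|θ) π_prior(θ) · 1[π_post(θ|y) ≠ φ(θ|y)] dλ_Θ(θ) dλ_Y(y) > 0 (φ would provide different posterior inferences than the true posterior on a set of positive joint measure), then there exists a test quantity f : Θ × Y → ℝ such that φ does not pass continuous SBC with respect to f. -/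
open MeasureTheory Filter Topology

noncomputable section

namespace SBC

variable {Θ Y : Type*} [MeasurableSpace Θ] [MeasurableSpace Y]

private lemma integrable_of_integral_ne_zero {α : Type*} [MeasurableSpace α] {μ : Measure α}
    {h : α → ℝ} (H : ∫ a, h a ∂μ ≠ 0) : Integrable h μ := by
  by_contra hc; exact H (integral_undef hc)

private lemma integrable_ite' {α : Type*} [MeasurableSpace α] {μ : Measure α} {c : α → Prop}
    (hc : MeasurableSet {a | c a}) {h : α → ℝ} [DecidablePred c] (hi : Integrable h μ) :
    Integrable (fun a => if c a then h a else 0) μ := by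
  have := hi.indicator hc
  have e : (fun a => if c a then h a else 0) = {a | c a}.indicator h := by
    funext a
    by_cases hca : c a <;> simp [Set.indicator_apply, hca]
  rw [e]; exact this

theorem SBC_completeness_with_data_dependent_test_quantities
    (lΘ : Measure Θ) (lY : Measure Y) [SigmaFinite lΘ] [SigmaFinite lY]
    (prior : Θ → ℝ) (obs : Y → Θ → ℝ) (φ f : Θ → Y → ℝ)
    (hprior_meas : Measurable prior) (hprior_nonneg : ∀ θ, 0 ≤ prior θ)
    (hprior_int : ∫ θ, prior θ ∂lΘ = 1)
    (hobs_meas : Measurable (Function.uncurry obs))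
    (hobs_nonneg : ∀ (y : Y) (θ : Θ), 0 ≤ obs y θ)
    (hobs_int : ∀ θ, ∫ y, obs y θ ∂lY = 1)
    (hmarg_pos : ∀ y, 0 < marg lΘ prior obs y)
    (hφ_meas : Measurable (Function.uncurry φ))
    (hφ_nonneg : ∀ (θ : Θ) (y : Y), 0 ≤ φ θ y)
    (hφ_int : ∀ y, ∫ θ, φ θ y ∂lΘ = 1)
    (hf_meas : Measurable (Function.uncurry f))
    (hφ_pos : ∀ (θ : Θ) (y : Y), 0 < φ θ y)
    (hdiff : 0 < ∫ y, (∫ θ,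
        (if post lΘ prior obs θ y ≠ φ θ y then obs y θ * prior θ else 0) ∂lΘ) ∂lY) :
    ∃ g : Θ → Y → ℝ, Measurable (Function.uncurry g)
      ∧ ¬ PassesContSBC lΘ lY prior obs φ g := by
  classical
  set P : Θ → Y → ℝ := post lΘ prior obs with hPdef
  set g : Θ → Y → ℝ := fun θ y => if P θ y < φ θ y then 1 else 0 with hgdef
  -- measurability of basic objects
  have hop_meas : Measurable (fun p : Θ × Y => obs p.2 p.1 * prior p.1) :=
    (hobs_meas.comp measurable_swap).mul (hprior_meas.comp measurable_fst)
  have hmarg_meas : Measurable (marg lΘ prior obs) := by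
    have h1 : StronglyMeasurable (fun p : Y × Θ => obs p.1 p.2 * prior p.2) :=
      (hobs_meas.mul (hprior_meas.comp measurable_snd)).stronglyMeasurable
    exact h1.integral_prod_right'.measurable
  have hP_meas : Measurable (Function.uncurry P) := by
    rw [hPdef]
    exact hop_meas.div (hmarg_meas.comp measurable_snd)
  have hA_meas : MeasurableSet {p : Θ × Y | P p.1 p.2 < φ p.1 p.2} :=
    measurableSet_lt hP_meas hφ_meas
  have hg_meas : Measurable (Function.uncurry g) := by
    rw [hgdef]
    exact Measurable.ite hA_meas measurable_const measurable_const
  refine ⟨g, hg_meas, fun hpass => ?_⟩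
  -- slice measurability and integrability
  have hφm : ∀ y, Measurable (fun θ => φ θ y) :=
    fun y => hφ_meas.comp (measurable_prodMk_right)
  have hPm : ∀ y, Measurable (fun θ => P θ y) :=
    fun y => hP_meas.comp (measurable_prodMk_right)
  have hφint : ∀ y, Integrable (fun θ => φ θ y) lΘ :=
    fun y => integrable_of_integral_ne_zero (by rw [hφ_int y]; norm_num)
  have hop_int : ∀ y, Integrable (fun θ => obs y θ * prior θ) lΘ :=
    fun y => integrable_of_integral_ne_zero (by
      show marg lΘ prior obs y ≠ 0
      exact (hmarg_pos y).ne')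
  have hopm : ∀ y, Measurable (fun θ => obs y θ * prior θ) :=
    fun y => hop_meas.comp (measurable_prodMk_right)
  have hPint : ∀ y, Integrable (fun θ => P θ y) lΘ := by
    intro y
    have : (fun θ => P θ y) = fun θ => (obs y θ * prior θ) / marg lΘ prior obs y := rfl
    rw [this]
    exact (hop_int y).div_const _
  have hPint_one : ∀ y, ∫ θ, P θ y ∂lΘ = 1 := by
    intro y
    have : (fun θ => P θ y) = fun θ => (obs y θ * prior θ) / marg lΘ prior obs y := rfl
    rw [this, integral_div]
    exact div_self (hmarg_pos y).ne'
  have hP_nonneg : ∀ θ y, 0 ≤ P θ y := fun θ y =>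
    div_nonneg (mul_nonneg (hobs_nonneg y θ) (hprior_nonneg θ)) (hmarg_pos y).le
  -- the sets A_y and the quantities α, β
  have hAym : ∀ y, MeasurableSet {θ | P θ y < φ θ y} :=
    fun y => measurableSet_lt (hPm y) (hφm y)
  set A : Y → ℝ := fun y => ∫ θ, (if P θ y < φ θ y then φ θ y else 0) ∂lΘ with hAdef
  set B : Y → ℝ := fun y => ∫ θ, (if P θ y < φ θ y then P θ y else 0) ∂lΘ with hBdef
  have hiteφ_int : ∀ y, Integrable (fun θ => if P θ y < φ θ y then φ θ y else 0) lΘ :=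
    fun y => integrable_ite' (hAym y) (hφint y)
  have hiteP_int : ∀ y, Integrable (fun θ => if P θ y < φ θ y then P θ y else 0) lΘ :=
    fun y => integrable_ite' (hAym y) (hPint y)
  have hA_nonneg : ∀ y, 0 ≤ A y := fun y => integral_nonneg (fun θ => by
    dsimp only; split_ifs; exacts [hφ_nonneg θ y, le_refl 0])
  have hA_le_one : ∀ y, A y ≤ 1 := by
    intro y
    rw [hAdef, ← hφ_int y]
    refine integral_mono (hiteφ_int y) (hφint y) (fun θ => ?_)
    dsimp only; split_ifs; exacts [le_refl _, hφ_nonneg θ y]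
  have hB_nonneg : ∀ y, 0 ≤ B y := fun y => integral_nonneg (fun θ => by
    dsimp only; split_ifs; exacts [hP_nonneg θ y, le_refl 0])
  have hB_le_A : ∀ y, B y ≤ A y := by
    intro y
    refine integral_mono (hiteP_int y) (hiteφ_int y) (fun θ => ?_)
    dsimp only; split_ifs with h; exacts [h.le, le_refl 0]
  -- Cdf and Dtie computations
  have hD1 : ∀ y, Dtie lΘ φ g 1 y = A y := by
    intro y
    unfold Dtie
    congr 1; funext θ
    by_cases h : P θ y < φ θ y <;> simp [hgdef, h]
  have hC1 : ∀ y, Cdf lΘ φ g 1 y = 1 := by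
    intro y
    unfold Cdf
    have key : (fun θ => if g θ y ≤ 1 then φ θ y else 0) = fun θ => φ θ y := by
      funext θ
      by_cases h : P θ y < φ θ y <;> simp [hgdef, h]
    rw [key, hφ_int y]
  have hD0 : ∀ y, Dtie lΘ φ g 0 y = 1 - A y := by
    intro y
    unfold Dtie
    have key : (fun θ => if g θ y = 0 then φ θ y else 0)
        = fun θ => φ θ y - (if P θ y < φ θ y then φ θ y else 0) := by
      funext θ
      by_cases h : P θ y < φ θ y <;> simp [hgdef, h]
    rw [key, integral_sub (hφint y) (hiteφ_int y), hφ_int y]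
  have hC0 : ∀ y, Cdf lΘ φ g 0 y = 1 - A y := by
    intro y
    unfold Cdf
    have key : (fun θ => if g θ y ≤ 0 then φ θ y else 0)
        = fun θ => φ θ y - (if P θ y < φ θ y then φ θ y else 0) := by
      funext θ
      by_cases h : P θ y < φ θ y <;> simp [hgdef, h]
    rw [key, integral_sub (hφint y) (hiteφ_int y), hφ_int y]
  -- the rank values
  set R1 : Y → ℝ := fun y => if A y = 0 then 0 else max 0 ((A y - 1/2) / A y) with hR1def
  set R0 : Y → ℝ := fun y => if A y = 1 then 1 else min 1 ((1/2) / (1 - A y)) with hR0def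
  have hrank : ∀ y θt, contRank lΘ φ g (1/2) θt y
      = if P θt y < φ θt y then R1 y else R0 y := by
    intro y θt
    unfold contRank
    by_cases hA : P θt y < φ θt y
    · have hg1 : g θt y = 1 := by rw [hgdef]; exact if_pos hA
      rw [hg1, hD1 y, hC1 y, if_pos hA]
      simp only [hR1def]
      by_cases h0 : A y = 0
      · rw [if_pos h0, if_pos h0]
        norm_num
      · have hApos : 0 < A y := lt_of_le_of_ne (hA_nonneg y) (Ne.symm h0)
        rw [if_neg h0, if_neg h0]
        have e1 : (1/2 - 1 + A y) / A y = (A y - 1/2) / A y := by ring_nf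
        rw [e1]
        refine min_eq_right (max_le zero_le_one ?_)
        rw [div_le_one hApos]
        linarith
    · have hg0 : g θt y = 0 := by rw [hgdef]; exact if_neg hA
      rw [hg0, hD0 y, hC0 y, if_neg hA]
      simp only [hR0def]
      by_cases h1 : A y = 1
      · have : (1:ℝ) - A y = 0 := by rw [h1]; ring
        rw [if_pos this, if_pos h1, if_pos (by rw [this]; norm_num : (1:ℝ) - A y ≤ 1/2)]
      · have hne : (1:ℝ) - A y ≠ 0 := fun h => h1 (by linarith [sub_eq_zero.mp h])
        have hpos : 0 < 1 - A y := lt_of_le_of_ne (by linarith [hA_le_one y]) (Ne.symm hne)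
        rw [if_neg hne, if_neg h1]
        have e1 : (1/2 - (1 - A y) + (1 - A y)) / (1 - A y) = (1/2) / (1 - A y) := by
          ring_nf
        rw [e1]
        congr 1
        exact max_eq_right (le_of_lt (div_pos (by norm_num) hpos))
  have hrank1 : ∀ y θt, contRank lΘ φ g 1 θt y = 1 := by
    intro y θt
    unfold contRank
    by_cases hA : P θt y < φ θt y
    · have hg1 : g θt y = 1 := by rw [hgdef]; exact if_pos hA
      rw [hg1, hD1 y, hC1 y]
      by_cases h0 : A y = 0
      · rw [if_pos h0, if_pos le_rfl]
      · have hApos : 0 < A y := lt_of_le_of_ne (hA_nonneg y) (Ne.symm h0)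
        rw [if_neg h0]
        have e1 : ((1:ℝ) - 1 + A y) / A y = 1 := by
          field_simp
          ring
        rw [e1]
        norm_num
    · have hg0 : g θt y = 0 := by rw [hgdef]; exact if_neg hA
      rw [hg0, hD0 y, hC0 y]
      by_cases h1 : (1:ℝ) - A y = 0
      · rw [if_pos h1, if_pos (by rw [h1]; norm_num : (1:ℝ) - A y ≤ 1)]
      · have hpos : 0 < 1 - A y := lt_of_le_of_ne (by linarith [hA_le_one y]) (Ne.symm h1)
        rw [if_neg h1]
        have e1 : ((1:ℝ) - (1 - A y) + (1 - A y)) / (1 - A y) = 1 / (1 - A y) := by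
          ring_nf
        rw [e1]
        have h2 : (1:ℝ) ≤ 1 / (1 - A y) := by
          rw [le_div_iff₀ hpos]
          linarith [hA_nonneg y]
        rw [max_eq_right (by linarith : (0:ℝ) ≤ 1 / (1 - A y)), min_eq_left h2]
  -- key algebraic facts
  have hkey : ∀ y, A y * R1 y + (1 - A y) * R0 y = 1/2 := by
    intro y
    simp only [hR1def, hR0def]
    by_cases h0 : A y = 0
    · rw [h0]; norm_num
    · have hApos : 0 < A y := lt_of_le_of_ne (hA_nonneg y) (Ne.symm h0)
      by_cases h1 : A y = 1
      · rw [if_neg h0, if_pos h1, h1]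
        rw [max_eq_right (by norm_num : (0:ℝ) ≤ (1 - 1/2)/1)]
        norm_num
      · have hlt1 : A y < 1 := lt_of_le_of_ne (hA_le_one y) h1
        have hpos : 0 < 1 - A y := by linarith
        rw [if_neg h0, if_neg h1]
        by_cases hle : A y ≤ 1/2
        · rw [max_eq_left (div_nonpos_of_nonpos_of_nonneg (by linarith) hApos.le)]
          rw [min_eq_right (by rw [div_le_one hpos]; linarith)]
          field_simp
          ring
        · push_neg at hle
          rw [max_eq_right (le_of_lt (div_pos (by linarith) hApos))]
          rw [min_eq_left (by rw [le_div_iff₀ hpos]; linarith)]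
          field_simp
          ring
  have hkey2 : ∀ y, 0 < A y → R1 y < R0 y := by
    intro y hApos
    have h0 : A y ≠ 0 := hApos.ne'
    simp only [hR1def, hR0def, if_neg h0]
    by_cases h1 : A y = 1
    · rw [if_pos h1, h1]
      rw [max_eq_right (by norm_num : (0:ℝ) ≤ (1 - 1/2)/1)]
      norm_num
    · have hlt1 : A y < 1 := lt_of_le_of_ne (hA_le_one y) h1
      have hpos : 0 < 1 - A y := by linarith
      rw [if_neg h1]
      by_cases hle : A y ≤ 1/2
      · rw [max_eq_left (div_nonpos_of_nonpos_of_nonneg (by linarith) hApos.le)]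
        exact lt_min one_pos (div_pos (by norm_num) hpos)
      · push_neg at hle
        rw [max_eq_right (le_of_lt (div_pos (by linarith) hApos))]
        rw [min_eq_left (by rw [le_div_iff₀ hpos]; linarith)]
        rw [div_lt_one hApos]
        linarith
  have hR1mem : ∀ y, 0 ≤ R1 y ∧ R1 y ≤ 1 := by
    intro y
    simp only [hR1def]
    by_cases h0 : A y = 0
    · rw [if_pos h0]; norm_num
    · have hApos : 0 < A y := lt_of_le_of_ne (hA_nonneg y) (Ne.symm h0)
      rw [if_neg h0]
      refine ⟨le_max_left 0 _, max_le zero_le_one ?_⟩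
      rw [div_le_one hApos]; linarith
  have hR0mem : ∀ y, 0 ≤ R0 y ∧ R0 y ≤ 1 := by
    intro y
    simp only [hR0def]
    by_cases h1 : A y = 1
    · rw [if_pos h1]; norm_num
    · have hpos : 0 < 1 - A y := by
        have := lt_of_le_of_ne (hA_le_one y) h1; linarith
      rw [if_neg h1]
      exact ⟨le_min zero_le_one (le_of_lt (div_pos (by norm_num) hpos)), min_le_left _ _⟩
  -- q at 1/2
  have hq : ∀ y, qfun lΘ prior obs φ g (1/2) y = R1 y * B y + R0 y * (1 - B y) := by
    intro y
    unfold qfun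
    have key : (fun θt => contRank lΘ φ g (1/2) θt y * P θt y)
        = fun θt => R1 y * (if P θt y < φ θt y then P θt y else 0)
          + R0 y * (P θt y - (if P θt y < φ θt y then P θt y else 0)) := by
      funext θt
      rw [hrank y θt]
      by_cases h : P θt y < φ θt y <;> simp [h] <;> ring
    have i1 : Integrable (fun θt => R1 y * (if P θt y < φ θt y then P θt y else 0)) lΘ :=
      (hiteP_int y).const_mul _
    have i2 : Integrable
        (fun θt => R0 y * (P θt y - (if P θt y < φ θt y then P θt y else 0))) lΘ := by
      simpa using ((hPint y).sub (hiteP_int y)).const_mul (R0 y)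
    rw [key, integral_add i1 i2, integral_const_mul, integral_const_mul,
      integral_sub (hPint y) (hiteP_int y), hPint_one y]
  have hq1 : ∀ y, qfun lΘ prior obs φ g 1 y = 1 := by
    intro y
    unfold qfun
    have : (fun θt => contRank lΘ φ g 1 θt y * P θt y) = fun θt => P θt y := by
      funext θt; rw [hrank1 y θt, one_mul]
    rw [this, hPint_one y]
  -- from passing at x = 1 : the marginal integrates to 1
  have hmarg_int_one : ∫ y, marg lΘ prior obs y ∂lY = 1 := by
    have h1 := hpass 1 ⟨zero_le_one, le_refl 1⟩
    rw [← h1]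
    congr 1; funext y
    rw [hq1 y, one_mul]
  have hmarg_int : Integrable (marg lΘ prior obs) lY :=
    integrable_of_integral_ne_zero (by rw [hmarg_int_one]; norm_num)
  -- identity and positivity for q - 1/2
  have hqid : ∀ y, qfun lΘ prior obs φ g (1/2) y - 1/2 = (A y - B y) * (R0 y - R1 y) := by
    intro y
    rw [hq y]
    linear_combination (hkey y)
  have hq_ge : ∀ y, 0 ≤ qfun lΘ prior obs φ g (1/2) y - 1/2 := by
    intro y
    rw [hqid y]
    rcases eq_or_lt_of_le (hA_nonneg y) with h0 | h0
    · have hB0 : B y = 0 := le_antisymm (by rw [h0]; exact hB_le_A y) (hB_nonneg y)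
      rw [hB0, ← h0, sub_zero, zero_mul]
    · exact mul_nonneg (sub_nonneg.2 (hB_le_A y)) (sub_nonneg.2 (hkey2 y h0).le)
  -- strict inequality where A_y has positive measure
  have hstrict : ∀ y, 0 < lΘ {θ | P θ y < φ θ y} →
      0 < qfun lΘ prior obs φ g (1/2) y - 1/2 := by
    intro y hposA
    have hsupp1 : Function.support (fun θ => if P θ y < φ θ y then φ θ y else 0)
        = {θ | P θ y < φ θ y} := by
      ext θ
      by_cases h : P θ y < φ θ y <;>
        simp [Function.mem_support, h, (hφ_pos θ y).ne']
    have hApos : 0 < A y := by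
      rw [hAdef]
      refine (integral_pos_iff_support_of_nonneg_ae (Filter.Eventually.of_forall fun θ => ?_)
        (hiteφ_int y)).2 (by rw [hsupp1]; exact hposA)
      simp only [Pi.zero_apply]; split_ifs; exacts [hφ_nonneg θ y, le_refl 0]
    have hid : (fun θ => if P θ y < φ θ y then φ θ y - P θ y else 0)
        = fun θ => (if P θ y < φ θ y then φ θ y else 0)
          - (if P θ y < φ θ y then P θ y else 0) := by
      funext θ; by_cases h : P θ y < φ θ y <;> simp [h]
    have hint2 : Integrable (fun θ => if P θ y < φ θ y then φ θ y - P θ y else 0) lΘ := by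
      rw [hid]; exact (hiteφ_int y).sub (hiteP_int y)
    have hsupp2 : Function.support (fun θ => if P θ y < φ θ y then φ θ y - P θ y else 0)
        = {θ | P θ y < φ θ y} := by
      ext θ
      by_cases h : P θ y < φ θ y
      · simp [Function.mem_support, h, sub_eq_zero, h.ne']
      · simp [Function.mem_support, h]
    have hdiffAB : 0 < A y - B y := by
      have h1 : 0 < ∫ θ, (if P θ y < φ θ y then φ θ y - P θ y else 0) ∂lΘ :=
        (integral_pos_iff_support_of_nonneg_ae (Filter.Eventually.of_forall fun θ => by
          simp only [Pi.zero_apply]; split_ifs with h; exacts [by linarith, le_refl 0]) hint2).2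
          (by rw [hsupp2]; exact hposA)
      rw [hid, integral_sub (hiteφ_int y) (hiteP_int y)] at h1
      exact h1
    rw [hqid y]
    exact mul_pos hdiffAB (sub_pos.2 (hkey2 y hApos))
  -- the y-sets of disagreement
  have hne_meas : ∀ y, MeasurableSet {θ | P θ y ≠ φ θ y} :=
    fun y => (measurableSet_eq_fun (hPm y) (hφm y)).compl
  have hgtm : ∀ y, MeasurableSet {θ | φ θ y < P θ y} :=
    fun y => measurableSet_lt (hφm y) (hPm y)
  have hdiff_pos : ∀ y, 0 < ∫ θ, (if P θ y ≠ φ θ y then obs y θ * prior θ else 0) ∂lΘ →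
      0 < lΘ {θ | P θ y < φ θ y} := by
    intro y hy
    have hk_int : Integrable (fun θ => if P θ y ≠ φ θ y then obs y θ * prior θ else 0) lΘ :=
      integrable_ite' (hne_meas y) (hop_int y)
    have hk_pos : 0 < lΘ (Function.support
        (fun θ => if P θ y ≠ φ θ y then obs y θ * prior θ else 0)) :=
      (integral_pos_iff_support_of_nonneg_ae (Filter.Eventually.of_forall fun θ => by
        simp only [Pi.zero_apply]; split_ifs
        exacts [mul_nonneg (hobs_nonneg y θ) (hprior_nonneg θ), le_refl 0]) hk_int).1 hy
    have hsub : Function.support (fun θ => if P θ y ≠ φ θ y then obs y θ * prior θ else 0)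
        ⊆ {θ | P θ y < φ θ y} ∪ {θ | φ θ y < P θ y} := by
      intro θ hθ
      rw [Function.mem_support] at hθ
      by_cases h : P θ y ≠ φ θ y
      · exact lt_or_gt_of_ne h
      · exact absurd (if_neg h) hθ
    by_cases hgt : lΘ {θ | φ θ y < P θ y} = 0
    · have h1 : 0 < lΘ ({θ | P θ y < φ θ y} ∪ {θ | φ θ y < P θ y}) :=
        lt_of_lt_of_le hk_pos (measure_mono hsub)
      have h2 := measure_union_le (μ := lΘ) {θ | P θ y < φ θ y} {θ | φ θ y < P θ y}
      rw [hgt, add_zero] at h2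
      exact lt_of_lt_of_le h1 h2
    · -- the set {P > φ} has positive measure; transfer positivity to {P < φ}
      have hgt_pos : 0 < lΘ {θ | φ θ y < P θ y} := pos_iff_ne_zero.2 hgt
      have hsuppt : Function.support (fun θ => if φ θ y < P θ y then P θ y - φ θ y else 0)
          = {θ | φ θ y < P θ y} := by
        ext θ
        by_cases h : φ θ y < P θ y
        · simp [Function.mem_support, h, sub_eq_zero, h.ne']
        · simp [Function.mem_support, h]
      have hidt : (fun θ => if φ θ y < P θ y then P θ y - φ θ y else 0)
          = fun θ => (if φ θ y < P θ y then P θ y else 0)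
            - (if φ θ y < P θ y then φ θ y else 0) := by
        funext θ; by_cases h : φ θ y < P θ y <;> simp [h]
      have hintt : Integrable (fun θ => if φ θ y < P θ y then P θ y - φ θ y else 0) lΘ := by
        rw [hidt]
        exact (integrable_ite' (hgtm y) (hPint y)).sub (integrable_ite' (hgtm y) (hφint y))
      have ht : 0 < ∫ θ, (if φ θ y < P θ y then P θ y - φ θ y else 0) ∂lΘ :=
        (integral_pos_iff_support_of_nonneg_ae (Filter.Eventually.of_forall fun θ => by
          simp only [Pi.zero_apply]; split_ifs with h; exacts [by linarith, le_refl 0]) hintt).2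
          (by rw [hsuppt]; exact hgt_pos)
      have hids : (fun θ => if P θ y < φ θ y then φ θ y - P θ y else 0)
          = fun θ => (if P θ y < φ θ y then φ θ y else 0)
            - (if P θ y < φ θ y then P θ y else 0) := by
        funext θ; by_cases h : P θ y < φ θ y <;> simp [h]
      have hints : Integrable (fun θ => if P θ y < φ θ y then φ θ y - P θ y else 0) lΘ := by
        rw [hids]; exact (hiteφ_int y).sub (hiteP_int y)
      have hglobal : (fun θ => φ θ y - P θ y)
          = fun θ => (if P θ y < φ θ y then φ θ y - P θ y else 0)
            - (if φ θ y < P θ y then P θ y - φ θ y else 0) := by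
        funext θ
        rcases lt_trichotomy (P θ y) (φ θ y) with h | h | h
        · simp [h, not_lt.2 h.le]
        · simp [h]
        · simp [h, not_lt.2 h.le]
      have hzero : ∫ θ, (φ θ y - P θ y) ∂lΘ = 0 := by
        rw [integral_sub (hφint y) (hPint y), hφ_int y, hPint_one y, sub_self]
      rw [hglobal, integral_sub hints hintt] at hzero
      have hs : 0 < ∫ θ, (if P θ y < φ θ y then φ θ y - P θ y else 0) ∂lΘ := by linarith
      have hsupps : Function.support (fun θ => if P θ y < φ θ y then φ θ y - P θ y else 0)
          = {θ | P θ y < φ θ y} := by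
        ext θ
        by_cases h : P θ y < φ θ y
        · simp [Function.mem_support, h, sub_eq_zero, h.ne']
        · simp [Function.mem_support, h]
      have := (integral_pos_iff_support_of_nonneg_ae (Filter.Eventually.of_forall fun θ => by
        simp only [Pi.zero_apply]; split_ifs with h; exacts [by linarith, le_refl 0]) hints).1 hs
      rwa [hsupps] at this
  -- measurability of A, B, R1, R0 as functions of y
  have hA_meas' : Measurable A := by
    have h1 : StronglyMeasurable (fun p : Y × Θ =>
        if P p.2 p.1 < φ p.2 p.1 then φ p.2 p.1 else 0) := by
      refine Measurable.stronglyMeasurable (Measurable.ite ?_ ?_ measurable_const)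
      · exact measurableSet_lt (hP_meas.comp measurable_swap) (hφ_meas.comp measurable_swap)
      · exact hφ_meas.comp measurable_swap
    exact h1.integral_prod_right'.measurable
  have hB_meas' : Measurable B := by
    have h1 : StronglyMeasurable (fun p : Y × Θ =>
        if P p.2 p.1 < φ p.2 p.1 then P p.2 p.1 else 0) := by
      refine Measurable.stronglyMeasurable (Measurable.ite ?_ ?_ measurable_const)
      · exact measurableSet_lt (hP_meas.comp measurable_swap) (hφ_meas.comp measurable_swap)
      · exact hP_meas.comp measurable_swap
    exact h1.integral_prod_right'.measurable
  have hR1_meas : Measurable R1 := by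
    rw [hR1def]
    exact Measurable.ite (hA_meas' (measurableSet_singleton 0)) measurable_const
      (measurable_const.max ((hA_meas'.sub measurable_const).div hA_meas'))
  have hR0_meas : Measurable R0 := by
    rw [hR0def]
    exact Measurable.ite (hA_meas' (measurableSet_singleton 1)) measurable_const
      (measurable_const.min (measurable_const.div (measurable_const.sub hA_meas')))
  set Q : Y → ℝ := fun y => R1 y * B y + R0 y * (1 - B y) with hQdef
  have hQ_meas : Measurable Q := by
    rw [hQdef]
    exact (hR1_meas.mul hB_meas').add (hR0_meas.mul (measurable_const.sub hB_meas'))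
  have hQ01 : ∀ y, 0 ≤ Q y ∧ Q y ≤ 1 := by
    intro y
    have h1 := hR1mem y
    have h0 := hR0mem y
    have hB0 := hB_nonneg y
    have hB1 : B y ≤ 1 := le_trans (hB_le_A y) (hA_le_one y)
    constructor
    · have := mul_nonneg h1.1 hB0
      have := mul_nonneg h0.1 (by linarith : (0:ℝ) ≤ 1 - B y)
      simp only [hQdef]; linarith
    · have t1 : R1 y * B y ≤ 1 * B y := mul_le_mul_of_nonneg_right h1.2 hB0
      have t2 : R0 y * (1 - B y) ≤ 1 * (1 - B y) :=
        mul_le_mul_of_nonneg_right h0.2 (by linarith)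
      simp only [hQdef]; linarith
  have hQM_int : Integrable (fun y => Q y * marg lΘ prior obs y) lY := by
    refine hmarg_int.mono ((hQ_meas.mul hmarg_meas).aestronglyMeasurable)
      (Filter.Eventually.of_forall fun y => ?_)
    rw [norm_mul, Real.norm_eq_abs, Real.norm_eq_abs,
      abs_of_nonneg (hQ01 y).1, abs_of_nonneg (hmarg_pos y).le]
    exact mul_le_of_le_one_left (hmarg_pos y).le (hQ01 y).2
  -- from passing at x = 1/2
  have hhalf : ∫ y, Q y * marg lΘ prior obs y ∂lY = 1/2 := by
    have h2 := hpass (1/2) ⟨by norm_num, by norm_num⟩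
    rw [← h2]
    congr 1; funext y
    rw [hq y]
  set Gf : Y → ℝ := fun y => (Q y - 1/2) * marg lΘ prior obs y with hGdef
  have hGf_int : Integrable Gf lY := by
    have : Gf = fun y => Q y * marg lΘ prior obs y - (1/2) * marg lΘ prior obs y := by
      funext y; rw [hGdef]; ring
    rw [this]
    exact hQM_int.sub (hmarg_int.const_mul _)
  have hGf_zero : ∫ y, Gf y ∂lY = 0 := by
    have : Gf = fun y => Q y * marg lΘ prior obs y - (1/2) * marg lΘ prior obs y := by
      funext y; rw [hGdef]; ring
    rw [this, integral_sub hQM_int (hmarg_int.const_mul _), hhalf,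
      integral_const_mul, hmarg_int_one]
    norm_num
  have hGf_nonneg : ∀ y, 0 ≤ Gf y := by
    intro y
    have := hq_ge y
    rw [hq y] at this
    exact mul_nonneg (by simp only [hQdef]; linarith) (hmarg_pos y).le
  have hGf_supp : lY (Function.support Gf) = 0 := by
    by_contra hc
    have : 0 < lY (Function.support Gf) := pos_iff_ne_zero.2 hc
    have := (integral_pos_iff_support_of_nonneg_ae
      (Filter.Eventually.of_forall hGf_nonneg) hGf_int).2 this
    rw [hGf_zero] at this
    exact lt_irrefl 0 this
  -- the disagreement function
  set h : Y → ℝ := fun y => ∫ θ, (if P θ y ≠ φ θ y then obs y θ * prior θ else 0) ∂lΘ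
    with hhdef
  have hh_nonneg : ∀ y, 0 ≤ h y := fun y => integral_nonneg (fun θ => by
    simp only; split_ifs
    exacts [mul_nonneg (hobs_nonneg y θ) (hprior_nonneg θ), le_refl 0])
  have hh_int : Integrable h lY := integrable_of_integral_ne_zero hdiff.ne'
  have hh_supp : 0 < lY (Function.support h) :=
    (integral_pos_iff_support_of_nonneg_ae
      (Filter.Eventually.of_forall hh_nonneg) hh_int).1 hdiff
  have hsub : Function.support h ⊆ Function.support Gf := by
    intro y hy
    rw [Function.mem_support] at hy ⊢
    have hy' : 0 < h y := lt_of_le_of_ne (hh_nonneg y) (Ne.symm hy)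
    have hq_pos := hstrict y (hdiff_pos y hy')
    rw [hq y] at hq_pos
    have : 0 < Gf y := by
      rw [hGdef]
      exact mul_pos (by simp only [hQdef]; linarith) (hmarg_pos y)
    exact this.ne'
  have : (0:ENNReal) < 0 := by
    calc (0:ENNReal) < lY (Function.support h) := hh_supp
    _ ≤ lY (Function.support Gf) := measure_mono hsub
    _ = 0 := hGf_supp
  exact lt_irrefl 0 this


end SBC
end
end
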